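/- arXiv:1305.1470 — 13 statements merged into one kernel-verified Lean document; each statement's English description precedes it below -/
import Mathlib

section
/- Let B < 0, Δ > 0 and α > 1 with α ≠ 2 and α ≠ 3. Then −∫₀^∞ (1/(B r)²) · ( e^{B r Δ}/(B r) − 1/(B r) − Δ ) · (r^{α−1} e^{−r} / Γ(α)) dr = −( (1 − B Δ)^{3−α} − 1 − Δ B (α − 3) ) / ( B³ (α − 1)(α − 2)(α − 3) ). (This is the computation of the variance integral of the integrated supOU process when π is the law of B·R with R ∼ Γ(α,1).) -/
open MeasureTheory Real Filter Set

private lemma taylor_aux (l r : ℝ) (hl : 0 ≤ l) :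
    ∫ s in Set.Ioc (0:ℝ) l, (l - s) * (r ^ 2 * Real.exp (-(s * r)))
      = Real.exp (-(l * r)) - 1 + l * r := by
  rw [← intervalIntegral.integral_of_le hl]
  have key : ∀ x ∈ Set.uIcc (0:ℝ) l,
      HasDerivAt (fun s => Real.exp (-(s * r)) - (l - s) * r * Real.exp (-(s * r)))
        ((l - x) * (r ^ 2 * Real.exp (-(x * r)))) x := by
    intro x _
    have h1 : HasDerivAt (fun s : ℝ => -(s * r)) (-r) x := by
      exact ((hasDerivAt_id x).mul_const r).neg.congr_deriv (by ring)
    have hexp : HasDerivAt (fun s : ℝ => Real.exp (-(s * r)))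
        (Real.exp (-(x * r)) * -r) x := h1.exp
    have h2 : HasDerivAt (fun s : ℝ => (l - s) * r) (-r) x := by
      simpa using ((hasDerivAt_const x l).sub (hasDerivAt_id x)).mul_const r
    have h3 := h2.mul hexp
    have h4 := hexp.sub h3
    refine h4.congr_deriv ?_
    ring
  rw [intervalIntegral.integral_eq_sub_of_hasDerivAt key (by
    apply ContinuousOn.intervalIntegrable
    fun_prop)]
  simp
  ring

private lemma cside_aux (l α : ℝ) (hl : 0 < l) (h2 : α ≠ 2) (h3 : α ≠ 3) :
    ∫ s in (0:ℝ)..l, (l - s) * (1 + s) ^ (1 - α)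
      = ((1 + l) ^ (3 - α) - 1 + l * (α - 3)) / ((α - 2) * (α - 3)) := by
  have h2' : (2:ℝ) - α ≠ 0 := by intro h; exact h2 (by linarith)
  have h3' : (3:ℝ) - α ≠ 0 := by intro h; exact h3 (by linarith)
  have key : ∀ x ∈ Set.uIcc (0:ℝ) l,
      HasDerivAt (fun s => (l - s) * (1 + s) ^ (2 - α) / (2 - α)
          + (1 + s) ^ (3 - α) / ((2 - α) * (3 - α)))
        ((l - x) * (1 + x) ^ (1 - α)) x := by
    intro x hx
    rw [Set.uIcc_of_le hl.le] at hx
    have hx0 : (0:ℝ) ≤ x := hx.1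
    have hxpos : (0:ℝ) < 1 + x := by linarith
    have hadd : HasDerivAt (fun s : ℝ => 1 + s) 1 x := by
      simpa using (hasDerivAt_id x).const_add 1
    have hp : ∀ p : ℝ, HasDerivAt (fun s : ℝ => (1 + s) ^ p)
        (p * (1 + x) ^ (p - 1)) x := by
      intro p
      have := (Real.hasDerivAt_rpow_const (x := 1 + x) (p := p) (Or.inl hxpos.ne')).comp x hadd
      exact this.congr_deriv (by ring)
    have hsub : HasDerivAt (fun s : ℝ => l - s) (-1) x := by
      exact ((hasDerivAt_const x l).sub (hasDerivAt_id x)).congr_deriv (by ring)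
    have hA := ((hsub.mul (hp (2 - α))).div_const (2 - α))
    have hB := (hp (3 - α)).div_const ((2 - α) * (3 - α))
    have h := hA.add hB
    refine h.congr_deriv ?_
    have e1 : (2:ℝ) - α - 1 = 1 - α := by ring
    have e2 : (3:ℝ) - α - 1 = 2 - α := by ring
    rw [e1, e2]
    field_simp
    ring
  rw [intervalIntegral.integral_eq_sub_of_hasDerivAt key (by
    apply ContinuousOn.intervalIntegrable
    apply ContinuousOn.mul
    · fun_prop
    · apply ContinuousOn.rpow_const (by fun_prop)
      intro x hx
      rw [Set.uIcc_of_le hl.le] at hx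
      left; intro h; linarith [hx.1])]
  have h2'' : α - 2 ≠ 0 := fun h => h2 (by linarith)
  have h3'' : α - 3 ≠ 0 := fun h => h3 (by linarith)
  rw [eq_div_iff (mul_ne_zero h2'' h3'')]
  simp only [sub_self, zero_mul, zero_div, add_zero, Real.one_rpow, zero_add]
  field_simp
  ring

/-- Variance integral of the integrated supOU process with Gamma-specified
mean reversion distribution: for `B < 0`, `Δ > 0`, `α > 1`, `α ≠ 2`, `α ≠ 3`,
`-∫₀^∞ (1/(Br)²)(e^{BrΔ}/(Br) - 1/(Br) - Δ) (r^{α-1} e^{-r}/Γ(α)) dr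
  = -((1 - BΔ)^{3-α} - 1 - ΔB(α-3)) / (B³(α-1)(α-2)(α-3))`. -/
theorem integrated_supOU_gamma_variance_integral
    (B Δ α : ℝ) (hB : B < 0) (hΔ : 0 < Δ) (hα : 1 < α) (hα2 : α ≠ 2) (hα3 : α ≠ 3) :
    -∫ r in Set.Ioi (0:ℝ),
        (1 / (B * r) ^ 2) *
          (Real.exp (B * r * Δ) / (B * r) - 1 / (B * r) - Δ) *
          (r ^ (α - 1) * Real.exp (-r) / Real.Gamma α)
      = -(((1 - B * Δ) ^ (3 - α) - 1 - Δ * B * (α - 3)) /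
          (B ^ 3 * (α - 1) * (α - 2) * (α - 3))) := by
  rw [neg_inj]
  set l : ℝ := -(B * Δ) with hl_def
  have hl : 0 < l := by simp only [hl_def]; nlinarith
  have hα1 : (0:ℝ) < α - 1 := by linarith
  have hΓ1 : Real.Gamma (α - 1) ≠ 0 := (Real.Gamma_pos_of_pos hα1).ne'
  have hΓ : Real.Gamma α ≠ 0 := (Real.Gamma_pos_of_pos (by linarith)).ne'
  have hB0 : B ≠ 0 := hB.ne
  -- the double-integral integrand
  set f : ℝ → ℝ → ℝ := fun r s => (l - s) * (r ^ (α - 2) * Real.exp (-((1 + s) * r)))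
    with hf_def
  -- integrability of uncurried f on the product
  have hGconv : IntegrableOn (fun x : ℝ => Real.exp (-x) * x ^ (α - 2)) (Set.Ioi 0) := by
    simpa [show α - 1 - 1 = α - 2 by ring] using Real.GammaIntegral_convergent hα1
  have hint : Integrable (Function.uncurry f)
      ((volume.restrict (Set.Ioi (0:ℝ))).prod (volume.restrict (Set.Ioc (0:ℝ) l))) := by
    have hg : Integrable (fun p : ℝ × ℝ => (Real.exp (-p.1) * p.1 ^ (α - 2)) * l)
        ((volume.restrict (Set.Ioi (0:ℝ))).prod (volume.restrict (Set.Ioc (0:ℝ) l))) :=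
      hGconv.mul_prod (integrable_const l)
    rw [Measure.prod_restrict] at hg ⊢
    refine hg.mono' ?_ ?_
    · apply ContinuousOn.aestronglyMeasurable ?_ (measurableSet_Ioi.prod measurableSet_Ioc)
      apply ContinuousOn.mul
      · fun_prop
      · apply ContinuousOn.mul
        · apply ContinuousOn.rpow_const (by fun_prop)
          intro p hp
          exact Or.inl (ne_of_gt hp.1)
        · fun_prop
    · filter_upwards [ae_restrict_mem (measurableSet_Ioi.prod measurableSet_Ioc)] with p hp
      obtain ⟨hp1, hp2⟩ := hp
      have hr : (0:ℝ) < p.1 := hp1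
      have hs1 : (0:ℝ) < p.2 := hp2.1
      have hs2 : p.2 ≤ l := hp2.2
      have hrp : (0:ℝ) ≤ p.1 ^ (α - 2) := Real.rpow_nonneg hr.le _
      have hexple : Real.exp (-((1 + p.2) * p.1)) ≤ Real.exp (-p.1) := by
        apply Real.exp_le_exp.mpr; nlinarith
      have h1 : |l - p.2| ≤ l := by rw [abs_of_nonneg (by linarith)]; linarith
      calc ‖(l - p.2) * (p.1 ^ (α - 2) * Real.exp (-((1 + p.2) * p.1)))‖
          = |l - p.2| * (p.1 ^ (α - 2) * Real.exp (-((1 + p.2) * p.1))) := by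
            rw [Real.norm_eq_abs, abs_mul,
              abs_of_nonneg (show (0:ℝ) ≤ p.1 ^ (α - 2) * Real.exp (-((1 + p.2) * p.1)) by positivity)]
        _ ≤ l * (p.1 ^ (α - 2) * Real.exp (-p.1)) := by
            apply mul_le_mul h1 _ (by positivity) hl.le
            exact mul_le_mul_of_nonneg_left hexple hrp
        _ = Real.exp (-p.1) * p.1 ^ (α - 2) * l := by ring
  -- pointwise identity for the inner s-integral
  have inner_eq : ∀ r ∈ Set.Ioi (0:ℝ),
      ∫ s in Set.Ioc (0:ℝ) l, f r s
        = (Real.exp (-(l * r)) - 1 + l * r) * (r ^ (α - 4) * Real.exp (-r)) := by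
    intro r hr
    have hr0 : (0:ℝ) < r := hr
    have step : ∀ s ∈ Set.Ioc (0:ℝ) l,
        f r s = (r ^ (α - 4) * Real.exp (-r)) * ((l - s) * (r ^ 2 * Real.exp (-(s * r)))) := by
      intro s _
      have h24 : r ^ (α - 2) = r ^ (α - 4) * r ^ 2 := by
        rw [← Real.rpow_natCast r 2, ← Real.rpow_add hr0]; congr 1; push_cast; ring
      have hexp : Real.exp (-((1 + s) * r)) = Real.exp (-r) * Real.exp (-(s * r)) := by
        rw [← Real.exp_add]; ring_nf
      rw [hf_def]; simp only []; rw [h24, hexp]; ring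
    rw [setIntegral_congr_fun measurableSet_Ioc step, MeasureTheory.integral_const_mul,
      taylor_aux l r hl.le]
    ring
  -- pointwise identity for the original integrand
  have orig_eq : ∀ r ∈ Set.Ioi (0:ℝ),
      (1 / (B * r) ^ 2) * (Real.exp (B * r * Δ) / (B * r) - 1 / (B * r) - Δ) *
          (r ^ (α - 1) * Real.exp (-r) / Real.Gamma α)
        = (1 / (B ^ 3 * Real.Gamma α)) *
            ((Real.exp (-(l * r)) - 1 + l * r) * (r ^ (α - 4) * Real.exp (-r))) := by
    intro r hr
    have hr0 : (0:ℝ) < r := hr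
    have hBr : B * r ≠ 0 := by
      intro h; rcases mul_eq_zero.mp h with h | h
      · exact hB0 h
      · exact hr0.ne' h
    have h14 : r ^ (α - 1) = r ^ (α - 4) * r ^ 3 := by
      rw [← Real.rpow_natCast r 3, ← Real.rpow_add hr0]; congr 1; push_cast; ring
    have hBe : B * r * Δ = -(l * r) := by rw [hl_def]; ring
    rw [h14, hBe]
    field_simp
    ring
  -- main computation
  calc ∫ r in Set.Ioi (0:ℝ),
        (1 / (B * r) ^ 2) * (Real.exp (B * r * Δ) / (B * r) - 1 / (B * r) - Δ) *
          (r ^ (α - 1) * Real.exp (-r) / Real.Gamma α)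
      = ∫ r in Set.Ioi (0:ℝ), (1 / (B ^ 3 * Real.Gamma α)) * ∫ s in Set.Ioc (0:ℝ) l, f r s := by
        refine setIntegral_congr_fun measurableSet_Ioi (fun r hr => ?_)
        rw [orig_eq r hr, inner_eq r hr]
    _ = (1 / (B ^ 3 * Real.Gamma α)) * ∫ r in Set.Ioi (0:ℝ), ∫ s in Set.Ioc (0:ℝ) l, f r s :=
        MeasureTheory.integral_const_mul _ _
    _ = (1 / (B ^ 3 * Real.Gamma α)) * ∫ s in Set.Ioc (0:ℝ) l, ∫ r in Set.Ioi (0:ℝ), f r s := by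
        rw [MeasureTheory.integral_integral_swap hint]
    _ = (1 / (B ^ 3 * Real.Gamma α)) *
          ∫ s in Set.Ioc (0:ℝ) l, Real.Gamma (α - 1) * ((l - s) * (1 + s) ^ (1 - α)) := by
        congr 1
        refine setIntegral_congr_fun measurableSet_Ioc (fun s hs => ?_)
        have hs0 : (0:ℝ) < s := hs.1
        have h1s : (0:ℝ) < 1 + s := by linarith
        have hinner : ∫ r in Set.Ioi (0:ℝ), f r s
            = (l - s) * ((1 / (1 + s)) ^ (α - 1) * Real.Gamma (α - 1)) := by
          rw [hf_def]
          simp only []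
          rw [MeasureTheory.integral_const_mul]
          congr 1
          have := Real.integral_rpow_mul_exp_neg_mul_Ioi hα1 h1s
          simpa [show α - 1 - 1 = α - 2 by ring] using this
        rw [hinner]
        have hpow : (1 / (1 + s)) ^ (α - 1) = (1 + s) ^ (1 - α) := by
          rw [one_div, ← Real.rpow_neg_one (1 + s), ← Real.rpow_mul h1s.le]
          congr 1; ring
        rw [hpow]; ring
    _ = (1 / (B ^ 3 * Real.Gamma α)) * (Real.Gamma (α - 1) *
          (((1 + l) ^ (3 - α) - 1 + l * (α - 3)) / ((α - 2) * (α - 3)))) := by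
        rw [MeasureTheory.integral_const_mul, ← intervalIntegral.integral_of_le hl.le,
          cside_aux l α hl hα2 hα3]
    _ = ((1 - B * Δ) ^ (3 - α) - 1 - Δ * B * (α - 3)) /
          (B ^ 3 * (α - 1) * (α - 2) * (α - 3)) := by
        have hbase : (1:ℝ) + l = 1 - B * Δ := by rw [hl_def]; ring
        have hΓrec : Real.Gamma α = (α - 1) * Real.Gamma (α - 1) := by
          have h := Real.Gamma_add_one (s := α - 1) (by linarith)
          rw [show α - 1 + 1 = α by ring] at h
          exact h
        have h2' : α - 2 ≠ 0 := fun h => hα2 (by linarith)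
        have h3' : α - 3 ≠ 0 := fun h => hα3 (by linarith)
        have h1' : α - 1 ≠ 0 := by positivity
        rw [hbase, hΓrec, hl_def]
        field_simp
        ring
end

section
/- Let B < 0, Δ > 0, α > 1 with α ≠ 2 and α ≠ 3, and let h ≥ 1 be a real number. Define F(x) = (1 − B Δ x)^{3−α} for x ≥ 0. Then −∫₀^∞ ( e^{B r Δ (h+1)} − 2 e^{B r Δ h} + e^{B r Δ (h−1)} ) / (2 (B r)³) · (r^{α−1} e^{−r} / Γ(α)) dr = −( F(h+1) − 2 F(h) + F(h−1) ) / ( 2 B³ (α − 1)(α − 2)(α − 3) ). (This is the computation of the lag-h autocovariance integral of the integrated supOU process when π is the law of B·R with R ∼ Γ(α,1).) -/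
open MeasureTheory Real Filter Set

lemma integral_exp_linear (k a b : ℝ) (hk : k ≠ 0) :
    ∫ x in a..b, Real.exp (k * x) = (Real.exp (k * b) - Real.exp (k * a)) / k := by
  have hd : ∀ x ∈ Set.uIcc a b,
      HasDerivAt (fun y => Real.exp (k * y) / k) (Real.exp (k * x)) x := by
    intro x _
    have h1 : HasDerivAt (fun y : ℝ => k * y) k x := by
      simpa using (hasDerivAt_id x).const_mul k
    have h2 := (h1.exp).div_const k
    simpa [mul_div_assoc, mul_div_cancel_right₀ _ hk] using h2
  rw [intervalIntegral.integral_eq_sub_of_hasDerivAt hd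
    ((Real.continuous_exp.comp (continuous_const.mul continuous_id)).intervalIntegrable a b)]
  ring

lemma integral_rpow_linear (m d q a b : ℝ) (hm : m < 0) (hd : 0 < d) (hq : q + 1 ≠ 0)
    (ha : 0 ≤ a) (hb : 0 ≤ b) :
    ∫ x in a..b, (d - m * x) ^ q =
      ((d - m * a) ^ (q + 1) - (d - m * b) ^ (q + 1)) / (m * (q + 1)) := by
  have hm0 : m ≠ 0 := hm.ne
  have hpos : ∀ x ∈ Set.uIcc a b, 0 < d - m * x := by
    intro x hx
    have hx0 : 0 ≤ x := (le_min ha hb).trans hx.1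
    nlinarith
  have hder : ∀ x ∈ Set.uIcc a b,
      HasDerivAt (fun y => -((d - m * y) ^ (q + 1)) / (m * (q + 1))) ((d - m * x) ^ q) x := by
    intro x hx
    have h1 : HasDerivAt (fun y : ℝ => d - m * y) (-m) x := by
      simpa using ((hasDerivAt_id x).const_mul m).const_sub d
    have h2 := ((Real.hasDerivAt_rpow_const (x := d - m * x) (p := q + 1)
      (Or.inl (hpos x hx).ne')).comp x h1)
    have h3 := (h2.neg).div_const (m * (q + 1))
    convert h3 using 1
    case e'_4 => rfl
    case e'_5 => rfl
    case e'_8 => rfl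
    have he : q + 1 - 1 = q := by ring
    rw [he]
    field_simp
  rw [intervalIntegral.integral_eq_sub_of_hasDerivAt hder
    (((continuous_const.sub (continuous_const.mul continuous_id)).continuousOn.rpow_const
      (fun x hx => Or.inl (hpos x hx).ne')).intervalIntegrable)]
  ring

lemma intervalIntegrable_rpow_linear (m d q a b : ℝ) (hm : m < 0) (hd : 0 < d)
    (ha : 0 ≤ a) (hb : 0 ≤ b) :
    IntervalIntegrable (fun x => (d - m * x) ^ q) volume a b := by
  have hpos : ∀ x ∈ Set.uIcc a b, 0 < d - m * x := by
    intro x hx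
    have hx0 : 0 ≤ x := (le_min ha hb).trans hx.1
    nlinarith
  exact ((continuous_const.sub (continuous_const.mul continuous_id)).continuousOn.rpow_const
      (fun x hx => Or.inl (hpos x hx).ne')).intervalIntegrable

lemma integrable_rpow_exp {s : ℝ} (hs : 0 < s) :
    IntegrableOn (fun r : ℝ => r ^ (s - 1) * Real.exp (-r)) (Set.Ioi 0) := by
  simpa [mul_comm] using Real.GammaIntegral_convergent hs

lemma gamma_shift {c : ℝ} (hc : c < 0) {s : ℝ} (hs : 0 < s) {y : ℝ} (hy : 0 ≤ y) :
    ∫ r in Set.Ioi (0:ℝ), Real.exp (c * r * y) * (r ^ (s - 1) * Real.exp (-r)) =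
      (1 - c * y) ^ (-s) * Real.Gamma s := by
  have hb : 0 < 1 - c * y := by nlinarith
  have h := Real.integral_rpow_mul_exp_neg_mul_Ioi hs hb
  have h2 : ∫ r in Set.Ioi (0:ℝ), Real.exp (c * r * y) * (r ^ (s - 1) * Real.exp (-r)) =
      ∫ t in Set.Ioi (0:ℝ), t ^ (s - 1) * Real.exp (-((1 - c * y) * t)) := by
    apply setIntegral_congr_fun measurableSet_Ioi
    intro r _
    dsimp only
    rw [show -((1 - c * y) * r) = c * r * y + (-r) by ring, Real.exp_add]
    ring
  rw [h2, h, one_div, ← Real.rpow_neg_one, ← Real.rpow_mul hb.le]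
  norm_num

/-- Inner step: integrate out the `u`-variable and the radial variable. -/
lemma supOU_step_u (B Δ α t : ℝ) (hB : B < 0) (hΔ : 0 < Δ) (hα : 1 < α) (hα2 : α ≠ 2)
    (ht : 0 ≤ t) :
    ∫ r in Set.Ioi (0:ℝ),
        (Real.exp (B*Δ*r*(t+1)) - Real.exp (B*Δ*r*t)) * (r ^ (α-3) * Real.exp (-r))
      = Real.Gamma (α-1) / (α-2) *
        ((1 - B*Δ*(t+1)) ^ (2-α) - (1 - B*Δ*t) ^ (2-α)) := by
  have hc : B*Δ < 0 := mul_neg_of_neg_of_pos hB hΔ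
  have hc0 : B*Δ ≠ 0 := hc.ne
  have hα1 : (0:ℝ) < α - 1 := by linarith
  have h2α : α - 2 ≠ 0 := sub_ne_zero.2 hα2
  -- integrability for Fubini
  have hint : Integrable (Function.uncurry fun r u =>
        Real.exp (B*Δ*r*(t+u)) * (r ^ (α-1-1) * Real.exp (-r)))
      ((volume.restrict (Set.Ioi 0)).prod (volume.restrict (Set.Ioc (0:ℝ) 1))) := by
    have hg : Integrable (fun p : ℝ×ℝ =>
          (p.1 ^ (α-1-1) * Real.exp (-p.1)) * (1:ℝ))
        ((volume.restrict (Set.Ioi 0)).prod (volume.restrict (Set.Ioc (0:ℝ) 1))) :=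
      (integrable_rpow_exp hα1).mul_prod (integrableOn_const measure_Ioc_lt_top.ne)
    refine hg.mono' ?_ ?_
    · apply Measurable.aestronglyMeasurable
      apply Measurable.mul
      · fun_prop
      · fun_prop
    · rw [Measure.prod_restrict]
      filter_upwards [self_mem_ae_restrict (measurableSet_Ioi.prod measurableSet_Ioc)] with p hp
      have hr : (0:ℝ) < p.1 := hp.1
      have hu : (0:ℝ) < p.2 := hp.2.1
      have hA : Real.exp (B*Δ*p.1*(t+p.2)) ≤ 1 := by
        rw [Real.exp_le_one_iff]
        have hpos : 0 < p.1 * (t + p.2) := mul_pos hr (by linarith)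
        nlinarith [mul_neg_of_neg_of_pos hc hpos]
      have hb0 : 0 ≤ p.1 ^ (α-1-1) * Real.exp (-p.1) := by positivity
      simp only [Function.uncurry, mul_one]
      rw [Real.norm_eq_abs, abs_mul, abs_of_pos (Real.exp_pos _), abs_of_nonneg hb0]
      exact mul_le_of_le_one_left hb0 hA
  have key : Set.EqOn
      (fun r : ℝ => (Real.exp (B*Δ*r*(t+1)) - Real.exp (B*Δ*r*t)) * (r ^ (α-3) * Real.exp (-r)))
      (fun r : ℝ => (B*Δ) * ∫ u in Set.Ioc (0:ℝ) 1,
          Real.exp (B*Δ*r*(t+u)) * (r ^ (α-1-1) * Real.exp (-r)))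
      (Set.Ioi 0) := by
    intro r hr
    have hr0 : (0:ℝ) < r := hr
    have hcr : B*Δ*r ≠ 0 := mul_ne_zero hc0 hr0.ne'
    dsimp only
    have hval : ∫ u in Set.Ioc (0:ℝ) 1, Real.exp (B*Δ*r*(t+u)) * (r ^ (α-1-1) * Real.exp (-r))
        = (Real.exp (B*Δ*r*t) * (r ^ (α-1-1) * Real.exp (-r))) *
            ((Real.exp (B*Δ*r) - 1)/(B*Δ*r)) := by
      rw [← intervalIntegral.integral_of_le (by norm_num : (0:ℝ) ≤ 1)]
      have hfu : ∀ u : ℝ, Real.exp (B*Δ*r*(t+u)) * (r ^ (α-1-1) * Real.exp (-r))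
          = (Real.exp (B*Δ*r*t) * (r ^ (α-1-1) * Real.exp (-r))) * Real.exp ((B*Δ*r)*u) := by
        intro u
        rw [show B*Δ*r*(t+u) = B*Δ*r*t + (B*Δ*r)*u by ring, Real.exp_add]
        ring
      simp only [hfu]
      rw [intervalIntegral.integral_const_mul, integral_exp_linear _ _ _ hcr]
      norm_num
    rw [hval]
    have hsplit : Real.exp (B*Δ*r*(t+1)) = Real.exp (B*Δ*r*t) * Real.exp (B*Δ*r) := by
      rw [show B*Δ*r*(t+1) = B*Δ*r*t + B*Δ*r by ring, Real.exp_add]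
    have hrp : r ^ (α-1-1) = r ^ (α-3) * r := by
      rw [show α-1-1 = (α-3)+1 by ring, Real.rpow_add_one hr0.ne']
    rw [hsplit, hrp]
    field_simp [hB.ne]
  rw [setIntegral_congr_fun measurableSet_Ioi key, integral_const_mul]
  have hswap : (∫ r in Set.Ioi (0:ℝ), ∫ u in Set.Ioc (0:ℝ) 1,
        Real.exp (B*Δ*r*(t+u)) * (r ^ (α-1-1) * Real.exp (-r)))
      = ∫ u in Set.Ioc (0:ℝ) 1, ∫ r in Set.Ioi (0:ℝ),
        Real.exp (B*Δ*r*(t+u)) * (r ^ (α-1-1) * Real.exp (-r)) :=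
    integral_integral_swap hint
  rw [hswap]
  have inner : Set.EqOn
      (fun u : ℝ => ∫ r in Set.Ioi (0:ℝ),
          Real.exp (B*Δ*r*(t+u)) * (r ^ (α-1-1) * Real.exp (-r)))
      (fun u : ℝ => (1 - B*Δ*(t+u)) ^ (-(α-1)) * Real.Gamma (α-1))
      (Set.Ioc (0:ℝ) 1) := by
    intro u hu
    have hy : (0:ℝ) ≤ t + u := by nlinarith [hu.1]
    exact gamma_shift hc hα1 hy
  rw [setIntegral_congr_fun measurableSet_Ioc inner,
    ← intervalIntegral.integral_of_le (by norm_num : (0:ℝ) ≤ 1),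
    intervalIntegral.integral_mul_const]
  simp only [show ∀ u : ℝ, 1 - B*Δ*(t+u) = (1 - B*Δ*t) - B*Δ*u from fun u => by ring]
  rw [integral_rpow_linear (B*Δ) (1 - B*Δ*t) (-(α-1)) 0 1 hc (by nlinarith)
    (by intro hcon; apply h2α; linarith) le_rfl zero_le_one]
  rw [show (1:ℝ) - B*Δ*t - B*Δ*0 = 1 - B*Δ*t by ring,
    show (1:ℝ) - B*Δ*t - B*Δ*1 = 1 - B*Δ*(t+1) by ring,
    show -(α-1)+1 = 2-α by ring]
  have h2α' : (2:ℝ) - α ≠ 0 := fun hcon => h2α (by linarith)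
  field_simp [hc0, h2α, h2α', hB.ne]
  ring
/-- Outer step: the full radial integral of the second difference. -/
lemma supOU_step_t (B Δ α h : ℝ) (hB : B < 0) (hΔ : 0 < Δ) (hα : 1 < α) (hα2 : α ≠ 2)
    (hα3 : α ≠ 3) (hh : 1 ≤ h) :
    ∫ r in Set.Ioi (0:ℝ),
        (Real.exp (B*Δ*r*(h+1)) - 2*Real.exp (B*Δ*r*h) + Real.exp (B*Δ*r*(h-1))) *
          (r ^ (α-4) * Real.exp (-r))
      = Real.Gamma (α-1) *
        ((1 - B*Δ*(h+1)) ^ (3-α) - 2*(1 - B*Δ*h) ^ (3-α) + (1 - B*Δ*(h-1)) ^ (3-α)) /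
          ((α-2)*(α-3)) := by
  have hc : B*Δ < 0 := mul_neg_of_neg_of_pos hB hΔ
  have hc0 : B*Δ ≠ 0 := hc.ne
  have hα1 : (0:ℝ) < α - 1 := by linarith
  have h2α : α - 2 ≠ 0 := sub_ne_zero.2 hα2
  have h3α : α - 3 ≠ 0 := sub_ne_zero.2 hα3
  have hh0 : (0:ℝ) ≤ h - 1 := by linarith
  -- integrability for Fubini
  have hint : Integrable (Function.uncurry fun r t =>
        (Real.exp (B*Δ*r*(t+1)) - Real.exp (B*Δ*r*t)) * (r ^ (α-3) * Real.exp (-r)))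
      ((volume.restrict (Set.Ioi 0)).prod (volume.restrict (Set.Ioc (h-1) h))) := by
    have hg : Integrable (fun p : ℝ×ℝ =>
          ((-(B*Δ)) * (p.1 ^ (α-1-1) * Real.exp (-p.1))) * (1:ℝ))
        ((volume.restrict (Set.Ioi 0)).prod (volume.restrict (Set.Ioc (h-1) h))) :=
      ((integrable_rpow_exp hα1).const_mul _).mul_prod
        (integrableOn_const measure_Ioc_lt_top.ne)
    refine hg.mono' ?_ ?_
    · apply Measurable.aestronglyMeasurable
      apply Measurable.mul
      · fun_prop
      · fun_prop
    · rw [Measure.prod_restrict]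
      filter_upwards [self_mem_ae_restrict (measurableSet_Ioi.prod measurableSet_Ioc)] with p hp
      have hr : (0:ℝ) < p.1 := hp.1
      have htp : (0:ℝ) ≤ p.2 := le_trans hh0 hp.2.1.le
      have e1 : Real.exp (B*Δ*p.1*(p.2+1)) = Real.exp (B*Δ*p.1*p.2) * Real.exp (B*Δ*p.1) := by
        rw [show B*Δ*p.1*(p.2+1) = B*Δ*p.1*p.2 + B*Δ*p.1 by ring, Real.exp_add]
      have f1 : Real.exp (B*Δ*p.1*p.2) ≤ 1 := by
        rw [Real.exp_le_one_iff]
        nlinarith [mul_nonneg (neg_nonneg.2 (mul_neg_of_neg_of_pos hc hr).le) htp]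
      have f2 : (0:ℝ) < Real.exp (B*Δ*p.1*p.2) := Real.exp_pos _
      have f3 : B*Δ*p.1 + 1 ≤ Real.exp (B*Δ*p.1) := Real.add_one_le_exp _
      have f4 : Real.exp (B*Δ*p.1) ≤ 1 := by
        rw [Real.exp_le_one_iff]
        nlinarith [mul_neg_of_neg_of_pos hc hr]
      have h1 : |Real.exp (B*Δ*p.1*(p.2+1)) - Real.exp (B*Δ*p.1*p.2)| ≤ -(B*Δ*p.1) := by
        rw [e1, abs_of_nonpos (by nlinarith)]
        nlinarith
      have hX : (0:ℝ) ≤ p.1 ^ (α-3) * Real.exp (-p.1) := by positivity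
      have hrp : p.1 * p.1 ^ (α-3) = p.1 ^ (α-1-1) := by
        rw [show α-1-1 = (α-3)+1 by ring, Real.rpow_add_one hr.ne']
        ring
      simp only [Function.uncurry, mul_one]
      rw [Real.norm_eq_abs, abs_mul, abs_of_nonneg hX]
      calc |Real.exp (B*Δ*p.1*(p.2+1)) - Real.exp (B*Δ*p.1*p.2)| * (p.1 ^ (α-3) * Real.exp (-p.1))
          ≤ (-(B*Δ*p.1)) * (p.1 ^ (α-3) * Real.exp (-p.1)) := mul_le_mul_of_nonneg_right h1 hX
        _ = (-(B*Δ)) * (p.1 ^ (α-1-1) * Real.exp (-p.1)) := by rw [← hrp]; ring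
  -- pointwise: second difference as an integral over t
  have key : Set.EqOn
      (fun r : ℝ =>
        (Real.exp (B*Δ*r*(h+1)) - 2*Real.exp (B*Δ*r*h) + Real.exp (B*Δ*r*(h-1))) *
          (r ^ (α-4) * Real.exp (-r)))
      (fun r : ℝ => (B*Δ) * ∫ t in Set.Ioc (h-1) h,
          (Real.exp (B*Δ*r*(t+1)) - Real.exp (B*Δ*r*t)) * (r ^ (α-3) * Real.exp (-r)))
      (Set.Ioi 0) := by
    intro r hr
    have hr0 : (0:ℝ) < r := hr
    have hcr : B*Δ*r ≠ 0 := mul_ne_zero hc0 hr0.ne'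
    dsimp only
    have hval : ∫ t in Set.Ioc (h-1) h,
          (Real.exp (B*Δ*r*(t+1)) - Real.exp (B*Δ*r*t)) * (r ^ (α-3) * Real.exp (-r))
        = ((Real.exp (B*Δ*r) - 1) * (r ^ (α-3) * Real.exp (-r))) *
            ((Real.exp (B*Δ*r*h) - Real.exp (B*Δ*r*(h-1)))/(B*Δ*r)) := by
      rw [← intervalIntegral.integral_of_le (by linarith : h - 1 ≤ h)]
      have hft : ∀ t : ℝ, (Real.exp (B*Δ*r*(t+1)) - Real.exp (B*Δ*r*t)) *
            (r ^ (α-3) * Real.exp (-r))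
          = ((Real.exp (B*Δ*r) - 1) * (r ^ (α-3) * Real.exp (-r))) * Real.exp ((B*Δ*r)*t) := by
        intro t
        rw [show B*Δ*r*(t+1) = B*Δ*r + (B*Δ*r)*t by ring, Real.exp_add,
          show B*Δ*r*t = (B*Δ*r)*t by ring]
        ring
      simp only [hft]
      rw [intervalIntegral.integral_const_mul, integral_exp_linear _ _ _ hcr]
    rw [hval]
    have e1 : Real.exp (B*Δ*r*(h+1)) = Real.exp (B*Δ*r*(h-1)) *
        (Real.exp (B*Δ*r) * Real.exp (B*Δ*r)) := by
      rw [show B*Δ*r*(h+1) = B*Δ*r*(h-1) + (B*Δ*r + B*Δ*r) by ring, Real.exp_add, Real.exp_add]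
    have e2 : Real.exp (B*Δ*r*h) = Real.exp (B*Δ*r*(h-1)) * Real.exp (B*Δ*r) := by
      rw [show B*Δ*r*h = B*Δ*r*(h-1) + B*Δ*r by ring, Real.exp_add]
    have hrp : r ^ (α-3) = r ^ (α-4) * r := by
      rw [show α-3 = (α-4)+1 by ring, Real.rpow_add_one hr0.ne']
    rw [e1, e2, hrp]
    field_simp [hB.ne]
    ring
  rw [setIntegral_congr_fun measurableSet_Ioi key, integral_const_mul]
  have hswap : (∫ r in Set.Ioi (0:ℝ), ∫ t in Set.Ioc (h-1) h,
        (Real.exp (B*Δ*r*(t+1)) - Real.exp (B*Δ*r*t)) * (r ^ (α-3) * Real.exp (-r)))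
      = ∫ t in Set.Ioc (h-1) h, ∫ r in Set.Ioi (0:ℝ),
        (Real.exp (B*Δ*r*(t+1)) - Real.exp (B*Δ*r*t)) * (r ^ (α-3) * Real.exp (-r)) :=
    integral_integral_swap hint
  rw [hswap]
  have inner : Set.EqOn
      (fun t : ℝ => ∫ r in Set.Ioi (0:ℝ),
          (Real.exp (B*Δ*r*(t+1)) - Real.exp (B*Δ*r*t)) * (r ^ (α-3) * Real.exp (-r)))
      (fun t : ℝ => Real.Gamma (α-1) / (α-2) *
          ((1 - B*Δ*(t+1)) ^ (2-α) - (1 - B*Δ*t) ^ (2-α)))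
      (Set.Ioc (h-1) h) := by
    intro t ht
    exact supOU_step_u B Δ α t hB hΔ hα hα2 (le_trans hh0 ht.1.le)
  rw [setIntegral_congr_fun measurableSet_Ioc inner,
    ← intervalIntegral.integral_of_le (by linarith : h - 1 ≤ h),
    intervalIntegral.integral_const_mul]
  have hsub : ∫ t in (h-1)..h, ((1 - B*Δ*(t+1)) ^ (2-α) - (1 - B*Δ*t) ^ (2-α))
      = (∫ t in (h-1)..h, ((1-B*Δ) - B*Δ*t) ^ (2-α))
        - ∫ t in (h-1)..h, ((1:ℝ) - B*Δ*t) ^ (2-α) := by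
    rw [← intervalIntegral.integral_sub
      (intervalIntegrable_rpow_linear (B*Δ) (1-B*Δ) (2-α) (h-1) h hc (by nlinarith) hh0
        (by linarith))
      (intervalIntegrable_rpow_linear (B*Δ) 1 (2-α) (h-1) h hc one_pos hh0 (by linarith))]
    apply intervalIntegral.integral_congr
    intro t _
    dsimp only
    rw [show (1:ℝ) - B*Δ*(t+1) = (1-B*Δ) - B*Δ*t by ring]
  rw [hsub,
    integral_rpow_linear (B*Δ) (1-B*Δ) (2-α) (h-1) h hc (by nlinarith)
      (by intro hcon; apply h3α; linarith) hh0 (by linarith),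
    integral_rpow_linear (B*Δ) 1 (2-α) (h-1) h hc one_pos
      (by intro hcon; apply h3α; linarith) hh0 (by linarith)]
  rw [show (1:ℝ)-B*Δ - B*Δ*(h-1) = 1 - B*Δ*h by ring,
    show (1:ℝ)-B*Δ - B*Δ*h = 1 - B*Δ*(h+1) by ring,
    show (1:ℝ) - B*Δ*h = 1 - B*Δ*h by ring,
    show (2:ℝ)-α+1 = 3-α by ring]
  have h2α' : (2:ℝ) - α ≠ 0 := fun hcon => h2α (by linarith)
  have h3α' : (3:ℝ) - α ≠ 0 := fun hcon => h3α (by linarith)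
  field_simp [hc0, h2α, h2α', h3α, h3α', hB.ne]
  ring

/-- Lag-h autocovariance integral of the integrated supOU process with Gamma-specified
mean reversion distribution. With `F x = (1 - BΔx)^{3-α}`,
`-∫₀^∞ (e^{BrΔ(h+1)} - 2e^{BrΔh} + e^{BrΔ(h-1)})/(2(Br)³) · (r^{α-1}e^{-r}/Γ(α)) dr
 = -(F(h+1) - 2F(h) + F(h-1)) / (2B³(α-1)(α-2)(α-3))`. -/
theorem integrated_supOU_gamma_autocovariance_integral
    (B Δ α h : ℝ) (hB : B < 0) (hΔ : 0 < Δ) (hα : 1 < α) (hα2 : α ≠ 2) (hα3 : α ≠ 3)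
    (hh : 1 ≤ h) (F : ℝ → ℝ) (hF : ∀ x ≥ (0:ℝ), F x = (1 - B * Δ * x) ^ (3 - α)) :
    -∫ r in Set.Ioi (0:ℝ),
        (Real.exp (B * r * Δ * (h + 1)) - 2 * Real.exp (B * r * Δ * h) +
            Real.exp (B * r * Δ * (h - 1))) / (2 * (B * r) ^ 3) *
          (r ^ (α - 1) * Real.exp (-r) / Real.Gamma α)
      = -((F (h + 1) - 2 * F h + F (h - 1)) /
          (2 * B ^ 3 * (α - 1) * (α - 2) * (α - 3))) := by
  have hc : B*Δ < 0 := mul_neg_of_neg_of_pos hB hΔ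
  have hB0 : B ≠ 0 := hB.ne
  have hG : (0:ℝ) < Real.Gamma α := Real.Gamma_pos_of_pos (by linarith)
  have h1 : α - 1 ≠ 0 := by intro hcon; linarith
  have h2 : α - 2 ≠ 0 := sub_ne_zero.2 hα2
  have h3 : α - 3 ≠ 0 := sub_ne_zero.2 hα3
  have key0 : Set.EqOn
      (fun r : ℝ => (Real.exp (B * r * Δ * (h + 1)) - 2 * Real.exp (B * r * Δ * h) +
            Real.exp (B * r * Δ * (h - 1))) / (2 * (B * r) ^ 3) *
          (r ^ (α - 1) * Real.exp (-r) / Real.Gamma α))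
      (fun r : ℝ => (1/(2*B^3*Real.Gamma α)) *
        ((Real.exp (B*Δ*r*(h+1)) - 2*Real.exp (B*Δ*r*h) + Real.exp (B*Δ*r*(h-1))) *
          (r ^ (α-4) * Real.exp (-r))))
      (Set.Ioi 0) := by
    intro r hr
    have hr0 : (0:ℝ) < r := hr
    dsimp only
    rw [show B*r*Δ*(h+1) = B*Δ*r*(h+1) by ring, show B*r*Δ*h = B*Δ*r*h by ring,
      show B*r*Δ*(h-1) = B*Δ*r*(h-1) by ring]
    have hr3 : r ^ (α-1) = r ^ (α-4) * r^(3:ℕ) := by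
      rw [← Real.rpow_natCast r 3, ← Real.rpow_add hr0]
      congr 1
      push_cast
      ring
    rw [hr3, mul_pow]
    field_simp
  rw [setIntegral_congr_fun measurableSet_Ioi key0, integral_const_mul,
    supOU_step_t B Δ α h hB hΔ hα hα2 hα3 hh,
    hF (h+1) (by linarith), hF h (by linarith), hF (h-1) (by linarith)]
  have hGam : Real.Gamma α = (α-1) * Real.Gamma (α-1) := by
    have hg := Real.Gamma_add_one (s := α-1) h1
    rw [show α - 1 + 1 = α by ring] at hg
    exact hg
  rw [hGam]
  have hG1 : Real.Gamma (α-1) ≠ 0 := (Real.Gamma_pos_of_pos (by linarith)).ne'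
  field_simp
end

section
/- Let α > 0 and let l : (−∞,0) → [0,∞) be measurable such that: (i) for every λ > 0, l(λ x)/l(x) → 1 as x → 0⁻ (l is slowly varying at zero from the left) and l(x) > 0 for x near 0; (ii) there are a function f : (−∞,0) → [0,∞) and H > 0 with l(x/h) ≤ f(x) · l(−1/h) for all x < 0 and all h ≥ H, and ∫_{−∞}^0 e^{z} (−z)^{α−1} f(z) dz < ∞. Then lim_{h→∞} ( h^{α} ∫_{−∞}^0 e^{A h} (−A)^{α−1} l(A) dA ) / l(−1/h) = Γ(α). -/
open MeasureTheory Real Filter Set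

lemma cov_Iio (φ : ℝ → ℝ) {h : ℝ} (hh : 0 < h) :
    ∫ z in Set.Iio (0:ℝ), φ (z / h) = h * ∫ A in Set.Iio (0:ℝ), φ A := by
  have h1 : ∫ z in Set.Iio (0:ℝ), φ (z / h) = ∫ x in Set.Ioi (0:ℝ), φ (-x / h) := by
    rw [← integral_Iic_eq_integral_Iio]
    have := integral_comp_neg_Iic (0:ℝ) (fun x => φ (-x / h))
    simp only [neg_neg, neg_zero] at this
    exact this
  have h2 : ∫ x in Set.Ioi (0:ℝ), φ (-x / h) = h * ∫ x in Set.Ioi (0:ℝ), φ (-x) := by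
    have := integral_comp_mul_left_Ioi (fun x => φ (-x)) 0 (inv_pos.mpr hh)
    simp only [mul_zero, smul_eq_mul, inv_inv] at this
    rw [← this]
    congr 1
    ext x
    congr 1
    field_simp
  have h3 : ∫ x in Set.Ioi (0:ℝ), φ (-x) = ∫ A in Set.Iio (0:ℝ), φ A := by
    rw [integral_comp_neg_Ioi, neg_zero, integral_Iic_eq_integral_Iio]
  rw [h1, h2, h3]

/-- Core limit of Proposition 2.8(b): if `l` is slowly varying at zero from the left,
positive near zero, and satisfies the domination condition `l(x/h) ≤ f(x) l(-1/h)`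
with `∫_{-∞}^0 e^z (-z)^{α-1} f(z) dz < ∞`, then
`h^α ∫_{-∞}^0 e^{Ah} (-A)^{α-1} l(A) dA / l(-1/h) → Γ(α)` as `h → ∞`. -/
theorem supOU_acf_core_limit
    (α : ℝ) (hα : 0 < α)
    (l : ℝ → ℝ) (hl_meas : Measurable l) (hl_nonneg : ∀ x < (0:ℝ), 0 ≤ l x)
    (hl_slow : ∀ lam > (0:ℝ),
      Filter.Tendsto (fun x => l (lam * x) / l x) (nhdsWithin 0 (Set.Iio 0)) (nhds 1))
    (hl_pos : ∃ δ > (0:ℝ), ∀ x ∈ Set.Ioo (-δ) (0:ℝ), 0 < l x)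
    (f : ℝ → ℝ) (H : ℝ) (hH : 0 < H) (hf_nonneg : ∀ x < (0:ℝ), 0 ≤ f x)
    (hdom : ∀ x < (0:ℝ), ∀ h ≥ H, l (x / h) ≤ f x * l (-1 / h))
    (hf_int : IntegrableOn (fun z => Real.exp z * (-z) ^ (α - 1) * f z) (Set.Iio 0)) :
    Filter.Tendsto
      (fun h : ℝ =>
        h ^ α * (∫ A in Set.Iio (0:ℝ), Real.exp (A * h) * (-A) ^ (α - 1) * l A) /
          l (-1 / h))
      Filter.atTop (nhds (Real.Gamma α)) := by
  obtain ⟨δ, hδ, hδpos⟩ := hl_pos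
  set g0 : ℝ → ℝ := fun z => Real.exp z * (-z) ^ (α - 1) with hg0
  have hg0_nonneg : ∀ z < (0:ℝ), 0 ≤ g0 z := fun z hz =>
    mul_nonneg (Real.exp_nonneg _) (Real.rpow_nonneg (by linarith) _)
  -- the Gamma integral
  have hΓ : ∫ z in Set.Iio (0:ℝ), g0 z = Real.Gamma α := by
    rw [← integral_Iic_eq_integral_Iio]
    have := integral_comp_neg_Ioi (0:ℝ) g0
    simp only [neg_zero] at this
    rw [← this, Real.Gamma_eq_integral hα]
    congr 1
    ext x
    simp [hg0]
  -- dominated convergence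
  have hmain : Tendsto (fun h : ℝ => ∫ z in Set.Iio (0:ℝ), g0 z * (l (z / h) / l (-1 / h)))
      atTop (nhds (Real.Gamma α)) := by
    rw [← hΓ]
    refine tendsto_integral_filter_of_dominated_convergence
      (fun z => Real.exp z * (-z) ^ (α - 1) * f z) ?_ ?_ hf_int ?_
    · refine Eventually.of_forall fun h => ?_
      exact (((Real.measurable_exp.mul (measurable_neg.pow_const _)).mul
        ((hl_meas.comp (measurable_id.div_const h)).div_const _)).aestronglyMeasurable)
    · filter_upwards [eventually_ge_atTop H, eventually_gt_atTop (1/δ),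
        eventually_gt_atTop 0] with h hhH h1δ hh0
      rw [ae_restrict_iff' measurableSet_Iio]
      refine Eventually.of_forall fun z hz => ?_
      have hz0 : z < 0 := hz
      have hzh : z / h < 0 := div_neg_of_neg_of_pos hz0 hh0
      have hlh : 0 < l (-1 / h) := by
        refine hδpos _ ⟨?_, div_neg_of_neg_of_pos (by norm_num) hh0⟩
        have h1 : 1 / h < δ := by
          rw [div_lt_iff₀ hh0]
          rw [div_lt_iff₀ hδ] at h1δ
          linarith
        rw [neg_div]
        linarith
      have hq : l (z / h) / l (-1 / h) ≤ f z := by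
        rw [div_le_iff₀ hlh]
        exact hdom z hz0 h hhH
      have hqn : 0 ≤ l (z / h) / l (-1 / h) := div_nonneg (hl_nonneg _ hzh) hlh.le
      rw [Real.norm_eq_abs, abs_of_nonneg (mul_nonneg (hg0_nonneg z hz0) hqn)]
      exact mul_le_mul_of_nonneg_left hq (hg0_nonneg z hz0)
    · rw [ae_restrict_iff' measurableSet_Iio]
      refine Eventually.of_forall fun z hz => ?_
      have hz0 : z < 0 := hz
      have hneg : Tendsto (fun h : ℝ => -1 / h) atTop (nhdsWithin 0 (Set.Iio 0)) := by
        apply tendsto_nhdsWithin_of_tendsto_nhds_of_eventually_within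
        · have : Tendsto (fun h : ℝ => -(h⁻¹)) atTop (nhds (-0)) := tendsto_inv_atTop_zero.neg
          simpa [neg_div] using this
        · filter_upwards [eventually_gt_atTop 0] with h hh
          exact div_neg_of_neg_of_pos (by norm_num) hh
      have hs := (hl_slow (-z) (by linarith)).comp hneg
      have hs' : Tendsto (fun h : ℝ => l (z / h) / l (-1 / h)) atTop (nhds 1) := by
        refine hs.congr fun h => ?_
        simp only [Function.comp]
        rw [show (-z) * (-1 / h) = z / h by ring]
      have := hs'.const_mul (g0 z)
      simpa using this
  -- eventual equality of the two expressions
  have heq : (fun h : ℝ => ∫ z in Set.Iio (0:ℝ), g0 z * (l (z / h) / l (-1 / h)))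
      =ᶠ[atTop] (fun h : ℝ =>
        h ^ α * (∫ A in Set.Iio (0:ℝ), Real.exp (A * h) * (-A) ^ (α - 1) * l A) /
          l (-1 / h)) := by
    filter_upwards [eventually_gt_atTop 0] with h hh
    have hcov := cov_Iio (fun A => Real.exp (A * h) * (-A) ^ (α - 1) * l A) hh
    have hLHS : ∫ z in Set.Iio (0:ℝ),
        Real.exp (z / h * h) * (-(z / h)) ^ (α - 1) * l (z / h)
        = (h ^ (α - 1))⁻¹ * ∫ z in Set.Iio (0:ℝ), g0 z * l (z / h) := by
      rw [← integral_const_mul]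
      refine setIntegral_congr_fun measurableSet_Iio fun z hz => ?_
      have hz0 : z < 0 := hz
      rw [div_mul_cancel₀ _ hh.ne', show -(z / h) = (-z) / h by ring,
        Real.div_rpow (by linarith) hh.le]
      simp only [hg0]
      field_simp
    rw [hLHS] at hcov
    have hI : ∫ A in Set.Iio (0:ℝ), Real.exp (A * h) * (-A) ^ (α - 1) * l A
        = h⁻¹ * ((h ^ (α - 1))⁻¹ * ∫ z in Set.Iio (0:ℝ), g0 z * l (z / h)) := by
      rw [hcov, inv_mul_cancel_left₀ hh.ne']
    have hJc : ∫ z in Set.Iio (0:ℝ), g0 z * (l (z / h) / l (-1 / h))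
        = (∫ z in Set.Iio (0:ℝ), g0 z * l (z / h)) / l (-1 / h) := by
      rw [← integral_div]
      exact setIntegral_congr_fun measurableSet_Iio fun z _ => (mul_div_assoc _ _ _).symm
    rw [hJc, hI]
    congr 1
    have hα0 : (h : ℝ) ^ α ≠ 0 := (Real.rpow_pos_of_pos hh α).ne'
    have hpow : h ^ (α - 1) = h ^ α / h := by rw [Real.rpow_sub hh, Real.rpow_one]
    rw [hpow]
    field_simp
  exact hmain.congr' heq
end

section
/- Let α > 0 and let l : (−∞,0) → [0,∞) be measurable such that: (i) for every λ > 0, l(λ x)/l(x) → 1 as x → 0⁻ and l(x) > 0 for x near 0; (ii) there are f : (−∞,0) → [0,∞) and H > 0 with l(x/h) ≤ f(x) · l(−1/h) for all x < 0, h ≥ H, and ∫_{−∞}^0 e^{z} (−z)^{α−1} f(z) dz < ∞; (iii) 0 < ∫_{−∞}^0 (−A)^{α−1} l(A) dA < ∞. Define C(h) = ∫_{−∞}^0 e^{A h} (−A)^{α−1} l(A) dA for h > 0. Then for every λ > 0, lim_{h→∞} C(λ h)/C(h) = λ^{−α}; i.e. the autocorrelation function h ↦ C(h)/C(0⁺)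 of the supOU process is regularly varying at infinity with index −α. In particular, for α ∈ (0,1) the supOU process has long memory. -/
open MeasureTheory Real Filter Set

/-- Proposition 2.8(b): under the slow variation, positivity, domination and
finite-variance conditions on `l`, the autocovariance integral
`C(h) = ∫_{-∞}^0 e^{Ah} (-A)^{α-1} l(A) dA` satisfies `C(λh)/C(h) → λ^{-α}` for all
`λ > 0`, i.e. the autocorrelation function of the supOU process is regularly varying
at infinity with index `-α` (long memory for `α ∈ (0,1)`). -/
theorem supOU_acf_regularly_varying
    (α : ℝ) (hα : 0 < α)
    (l : ℝ → ℝ) (hl_meas : Measurable l) (hl_nonneg : ∀ x < (0:ℝ), 0 ≤ l x)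
    (hl_slow : ∀ lam > (0:ℝ),
      Filter.Tendsto (fun x => l (lam * x) / l x) (nhdsWithin 0 (Set.Iio 0)) (nhds 1))
    (hl_pos : ∃ δ > (0:ℝ), ∀ x ∈ Set.Ioo (-δ) (0:ℝ), 0 < l x)
    (f : ℝ → ℝ) (H : ℝ) (hH : 0 < H) (hf_nonneg : ∀ x < (0:ℝ), 0 ≤ f x)
    (hdom : ∀ x < (0:ℝ), ∀ h ≥ H, l (x / h) ≤ f x * l (-1 / h))
    (hf_int : IntegrableOn (fun z => Real.exp z * (-z) ^ (α - 1) * f z) (Set.Iio 0))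
    (hvar_int : IntegrableOn (fun A => (-A) ^ (α - 1) * l A) (Set.Iio 0))
    (hvar_pos : 0 < ∫ A in Set.Iio (0:ℝ), (-A) ^ (α - 1) * l A)
    (C : ℝ → ℝ)
    (hC : ∀ h > (0:ℝ),
      C h = ∫ A in Set.Iio (0:ℝ), Real.exp (A * h) * (-A) ^ (α - 1) * l A) :
    ∀ lam > (0:ℝ),
      Filter.Tendsto (fun h : ℝ => C (lam * h) / C h) Filter.atTop
        (nhds (lam ^ (-α))) := by
  obtain ⟨δ, hδ, hposδ⟩ := hl_pos
  -- the map h ↦ -1/h tends to 0 from the left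
  have hneg : Tendsto (fun h : ℝ => -1 / h) atTop (nhdsWithin 0 (Iio 0)) := by
    rw [tendsto_nhdsWithin_iff]
    constructor
    · have h1 : Tendsto (fun h : ℝ => -1 / h) atTop (nhds (-0)) := by
        simpa [neg_div, one_div] using (tendsto_inv_atTop_zero (𝕜 := ℝ)).neg
      simpa using h1
    · filter_upwards [eventually_gt_atTop (0:ℝ)] with h hh
      exact div_neg_of_neg_of_pos (by norm_num) hh
  set H₁ : ℝ := max H (1 / δ + 1) with hH₁
  have hH₁pos : 0 < H₁ := lt_of_lt_of_le hH (le_max_left _ _)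
  have hge_pos : ∀ h : ℝ, H₁ ≤ h → 0 < h := by
    intro h hh
    have h1δ : 1 / δ + 1 ≤ h := le_trans (le_max_right _ _) hh
    have : 0 < 1 / δ := by positivity
    linarith
  have hl1pos : ∀ h : ℝ, H₁ ≤ h → 0 < l (-1 / h) := by
    intro h hh
    have hh0 : 0 < h := hge_pos h hh
    have h1δ : 1 / δ + 1 ≤ h := le_trans (le_max_right _ _) hh
    apply hposδ
    constructor
    · have e : δ * (1 / δ + 1) = 1 + δ := by field_simp
      have h2 : δ * (1 / δ + 1) ≤ δ * h := mul_le_mul_of_nonneg_left h1δ hδ.le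
      have h3 : (1 : ℝ) < δ * h := by nlinarith
      have h4 : 1 / h < δ := by
        rw [div_lt_iff₀ hh0]
        linarith [h3]
      have : -1 / h = -(1 / h) := by ring
      rw [this]
      linarith
    · exact div_neg_of_neg_of_pos (by norm_num) hh0
  -- the transformed integral
  set G : ℝ → ℝ := fun s => ∫ z in Ioi (0:ℝ), Real.exp (-z) * z ^ (α - 1) * l (-z / s)
    with hGdef
  -- change of variables
  have hCoV : ∀ h : ℝ, 0 < h →
      (∫ A in Iio (0:ℝ), Real.exp (A * h) * (-A) ^ (α - 1) * l A)
        = h ^ (-α) * G h := by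
    intro h hh
    have step1 : (∫ A in Iio (0:ℝ), Real.exp (A * h) * (-A) ^ (α - 1) * l A)
        = ∫ t in Ioi (0:ℝ), Real.exp (-(t * h)) * t ^ (α - 1) * l (-t) := by
      have e1 := integral_comp_neg_Ioi (0:ℝ)
        (fun A => Real.exp (A * h) * (-A) ^ (α - 1) * l A)
      rw [neg_zero, integral_Iic_eq_integral_Iio] at e1
      rw [← e1]
      refine setIntegral_congr_fun measurableSet_Ioi fun t _ => ?_
      simp only [neg_neg, neg_mul]
    have step2 :=
      integral_comp_mul_left_Ioi (fun z => Real.exp (-z) * z ^ (α - 1) * l (-z / h)) 0 hh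
    have step3 : (∫ t in Ioi (0:ℝ),
          (fun z => Real.exp (-z) * z ^ (α - 1) * l (-z / h)) (h * t))
        = h ^ (α - 1) * ∫ t in Ioi (0:ℝ), Real.exp (-(t * h)) * t ^ (α - 1) * l (-t) := by
      rw [← integral_const_mul]
      refine setIntegral_congr_fun measurableSet_Ioi fun t ht => ?_
      have ht0 : (0:ℝ) < t := ht
      have e2 : -(h * t) / h = -t := by field_simp
      have e3 : (h * t) ^ (α - 1) = h ^ (α - 1) * t ^ (α - 1) :=
        Real.mul_rpow hh.le ht0.le
      simp only [e2, e3]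
      rw [mul_comm h t]
      ring
    rw [step1]
    have key : h ^ (α - 1) * (∫ t in Ioi (0:ℝ),
          Real.exp (-(t * h)) * t ^ (α - 1) * l (-t)) = h⁻¹ * G h := by
      rw [← step3, step2, mul_zero, smul_eq_mul, hGdef]
    have hpow : h ^ (α - 1) ≠ 0 := (Real.rpow_pos_of_pos hh _).ne'
    have : (∫ t in Ioi (0:ℝ), Real.exp (-(t * h)) * t ^ (α - 1) * l (-t))
        = h⁻¹ * (h ^ (α - 1))⁻¹ * G h := by
      field_simp at key ⊢
      rw [← key]; congr 1; congr 1; ext t; ring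
    rw [this]
    congr 1
    rw [← Real.rpow_neg_one h, ← Real.rpow_neg hh.le, ← Real.rpow_add hh]
    ring_nf
  -- integrability of the dominating function on `Ioi 0`
  have hbound_int : IntegrableOn (fun z => Real.exp (-z) * z ^ (α - 1) * f (-z))
      (Ioi (0:ℝ)) := by
    have h1 := (MeasurePreserving.integrableOn_comp_preimage
      (Measure.measurePreserving_neg (volume : Measure ℝ))
      (Homeomorph.neg ℝ).measurableEmbedding).2 hf_int
    have hs : (Neg.neg ⁻¹' Iio (0:ℝ)) = Ioi 0 := by ext x; simp
    rw [hs] at h1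
    refine h1.congr_fun (fun x _ => ?_) measurableSet_Ioi
    simp [Function.comp, neg_neg]
  -- main dominated convergence step
  have hGkey : Tendsto (fun h => G h / l (-1 / h)) atTop (nhds (Real.Gamma α)) := by
    rw [Real.Gamma_eq_integral hα]
    have main := tendsto_integral_filter_of_dominated_convergence
      (μ := volume.restrict (Ioi (0:ℝ))) (l := (atTop : Filter ℝ))
      (F := fun h z => Real.exp (-z) * z ^ (α - 1) * l (-z / h) / l (-1 / h))
      (f := fun z => Real.exp (-z) * z ^ (α - 1))
      (fun z => Real.exp (-z) * z ^ (α - 1) * f (-z))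
      ?_ ?_ hbound_int ?_
    · refine main.congr fun h => ?_
      rw [integral_div]
    · filter_upwards with h
      exact (((Real.measurable_exp.comp measurable_neg).mul
        (measurable_id'.pow_const _)).mul
        (hl_meas.comp (measurable_neg.div_const h))).div_const _ |>.aestronglyMeasurable
    · filter_upwards [eventually_ge_atTop H₁] with h hh
      refine (ae_restrict_iff' measurableSet_Ioi).mpr (ae_of_all _ fun z hz => ?_)
      have hz0 : (0:ℝ) < z := hz
      have hh0 : 0 < h := hge_pos h hh
      have hl1 : 0 < l (-1 / h) := hl1pos h hh
      have hnz : -z / h < 0 := div_neg_of_neg_of_pos (by linarith) hh0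
      have h1 : l (-z / h) ≤ f (-z) * l (-1 / h) :=
        hdom (-z) (by linarith) h (le_trans (le_max_left _ _) hh)
      have hln : 0 ≤ l (-z / h) := hl_nonneg _ hnz
      have hφn : 0 ≤ Real.exp (-z) * z ^ (α - 1) * l (-z / h) / l (-1 / h) := by
        apply div_nonneg _ hl1.le
        have : (0:ℝ) ≤ z ^ (α - 1) := Real.rpow_nonneg hz0.le _
        positivity
      rw [Real.norm_eq_abs, abs_of_nonneg hφn, div_le_iff₀ hl1]
      calc Real.exp (-z) * z ^ (α - 1) * l (-z / h)
          ≤ Real.exp (-z) * z ^ (α - 1) * (f (-z) * l (-1 / h)) := by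
            apply mul_le_mul_of_nonneg_left h1
            have : (0:ℝ) ≤ z ^ (α - 1) := Real.rpow_nonneg hz0.le _
            positivity
        _ = Real.exp (-z) * z ^ (α - 1) * f (-z) * l (-1 / h) := by ring
    · refine (ae_restrict_iff' measurableSet_Ioi).mpr (ae_of_all _ fun z hz => ?_)
      have hz0 : (0:ℝ) < z := hz
      have hr : Tendsto (fun h => l (-z / h) / l (-1 / h)) atTop (nhds 1) := by
        have h2 := (hl_slow z hz0).comp hneg
        refine h2.congr fun h => ?_
        simp only [Function.comp]
        rw [show z * (-1 / h) = -z / h by ring]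
      have h3 : Tendsto (fun h => Real.exp (-z) * z ^ (α - 1) * (l (-z / h) / l (-1 / h)))
          atTop (nhds (Real.exp (-z) * z ^ (α - 1) * 1)) := tendsto_const_nhds.mul hr
      simpa [mul_one, ← mul_div_assoc] using h3
  -- conclusion
  intro lam hlam
  have hcomp : Tendsto (fun h : ℝ => lam * h) atTop atTop :=
    Tendsto.const_mul_atTop hlam tendsto_id
  have hGkey2 : Tendsto (fun h => G (lam * h) / l (-1 / (lam * h))) atTop
      (nhds (Real.Gamma α)) := hGkey.comp hcomp
  have hratio : Tendsto (fun h => l (-1 / (lam * h)) / l (-1 / h)) atTop (nhds 1) := by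
    have h2 := (hl_slow (1 / lam) (by positivity)).comp hneg
    refine h2.congr fun h => ?_
    simp only [Function.comp]
    rw [show (1 / lam) * (-1 / h) = -1 / (lam * h) by
      rw [div_mul_div_comm]; ring_nf]
  have hΓpos := Real.Gamma_pos_of_pos hα
  have hevG : ∀ᶠ h in atTop, 0 < G h / l (-1 / h) :=
    hGkey.eventually (eventually_gt_nhds hΓpos)
  have hevG2 : ∀ᶠ h in atTop, 0 < G (lam * h) / l (-1 / (lam * h)) :=
    hGkey2.eventually (eventually_gt_nhds hΓpos)
  have hev : ∀ᶠ h in atTop, C (lam * h) / C h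
      = lam ^ (-α) * ((G (lam * h) / l (-1 / (lam * h))) / (G h / l (-1 / h))
          * (l (-1 / (lam * h)) / l (-1 / h))) := by
    filter_upwards [hevG, hevG2, eventually_ge_atTop H₁,
      hcomp.eventually_ge_atTop H₁] with h p1 p2 p3 p4
    have hh0 : 0 < h := hge_pos h p3
    have hlh0 : 0 < lam * h := hge_pos _ p4
    have hl1 : 0 < l (-1 / h) := hl1pos h p3
    have hl2 : 0 < l (-1 / (lam * h)) := hl1pos _ p4
    have hG1 : 0 < G h := by
      rcases div_pos_iff.mp p1 with ⟨a, _⟩ | ⟨_, b⟩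
      · exact a
      · exact absurd hl1 (not_lt.mpr b.le)
    have hG2 : 0 < G (lam * h) := by
      rcases div_pos_iff.mp p2 with ⟨a, _⟩ | ⟨_, b⟩
      · exact a
      · exact absurd hl2 (not_lt.mpr b.le)
    have hC1 : C h = h ^ (-α) * G h := by rw [hC h hh0, hCoV h hh0]
    have hC2 : C (lam * h) = (lam * h) ^ (-α) * G (lam * h) := by
      rw [hC _ hlh0, hCoV _ hlh0]
    rw [hC1, hC2, Real.mul_rpow hlam.le hh0.le]
    have hp1 : h ^ (-α) ≠ 0 := (Real.rpow_pos_of_pos hh0 _).ne'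
    have hp2 : lam ^ (-α) ≠ 0 := (Real.rpow_pos_of_pos hlam _).ne'
    generalize l (-1 / (lam * h)) = a at hl2 ⊢
    generalize l (-1 / h) = b at hl1 ⊢
    have ha : a ≠ 0 := hl2.ne'
    have hb : b ≠ 0 := hl1.ne'
    field_simp
  have hlim : Tendsto (fun h => lam ^ (-α)
      * ((G (lam * h) / l (-1 / (lam * h))) / (G h / l (-1 / h))
          * (l (-1 / (lam * h)) / l (-1 / h)))) atTop (nhds (lam ^ (-α))) := by
    have h4 : Tendsto (fun h => lam ^ (-α)
        * ((G (lam * h) / l (-1 / (lam * h))) / (G h / l (-1 / h))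
            * (l (-1 / (lam * h)) / l (-1 / h)))) atTop
        (nhds (lam ^ (-α) * (Real.Gamma α / Real.Gamma α * 1))) :=
      tendsto_const_nhds.mul ((hGkey2.div hGkey hΓpos.ne').mul hratio)
    simpa [div_self hΓpos.ne'] using h4
  exact hlim.congr' (EventuallyEq.symm hev)
end

section
/- Let α > 0 and let l : (−∞,0) → [0,∞) be continuous and bounded with lim_{x→0⁻} l(x) = l₀ for some l₀ ∈ [0,∞). Then lim_{h→∞} h^{α} ∫_{−∞}^0 e^{A h} (−A)^{α−1} l(A) dA = Γ(α) · l₀. In particular, if l₀ > 0, the autocovariance integral −∫_{ℝ₋} e^{Ah}/(2A) π(dA) with π′(x) = (−x)^{α} l(x) satisfies corr(X_h, X_0) ∼ C / h^{α} as h → ∞ for some constant C > 0. -/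
open MeasureTheory Real Filter Set

/-- Remark 2.9(a): if `l : (-∞,0) → [0,∞)` is continuous and bounded with
`l(x) → l₀` as `x → 0⁻`, then `h^α ∫_{-∞}^0 e^{Ah} (-A)^{α-1} l(A) dA → Γ(α)·l₀`.
In particular, if `l₀ > 0` (and the variance integral is finite), the
autocorrelation function satisfies `corr(X_h, X_0) ∼ C/h^α` for some `C > 0`. -/
theorem supOU_acf_limit_continuous_l
    (α : ℝ) (hα : 0 < α)
    (l : ℝ → ℝ) (hl_cont : ContinuousOn l (Set.Iio 0))
    (hl_nonneg : ∀ x < (0:ℝ), 0 ≤ l x)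
    (hl_bdd : ∃ M : ℝ, ∀ x < (0:ℝ), l x ≤ M)
    (l₀ : ℝ) (hl₀ : 0 ≤ l₀)
    (hlim : Filter.Tendsto l (nhdsWithin 0 (Set.Iio 0)) (nhds l₀)) :
    Filter.Tendsto
        (fun h : ℝ =>
          h ^ α * ∫ A in Set.Iio (0:ℝ), Real.exp (A * h) * (-A) ^ (α - 1) * l A)
        Filter.atTop (nhds (Real.Gamma α * l₀)) ∧
      (0 < l₀ →
        IntegrableOn (fun A => (-A) ^ (α - 1) * l A) (Set.Iio 0) →
        ∃ C > (0:ℝ),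
          Filter.Tendsto
            (fun h : ℝ =>
              h ^ α *
                ((∫ A in Set.Iio (0:ℝ), Real.exp (A * h) * (-A) ^ (α - 1) * l A) /
                  ∫ A in Set.Iio (0:ℝ), (-A) ^ (α - 1) * l A))
            Filter.atTop (nhds C)) := by
  obtain ⟨M, hM⟩ := hl_bdd
  set M' : ℝ := max M 0 with hM'def
  have hM' : ∀ x < (0:ℝ), l x ≤ M' := fun x hx => (hM x hx).trans (le_max_left _ _)
  -- Step A: change of variables, for h > 0
  have keyA : ∀ h : ℝ, 0 < h →
      h ^ α * ∫ A in Set.Iio (0:ℝ), Real.exp (A * h) * (-A) ^ (α - 1) * l A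
        = ∫ t in Set.Ioi (0:ℝ), Real.exp (-t) * t ^ (α - 1) * l (-(t / h)) := by
    intro h hh
    have h1 : ∫ A in Set.Iio (0:ℝ), Real.exp (A * h) * (-A) ^ (α - 1) * l A
        = ∫ u in Set.Ioi (0:ℝ), Real.exp (-(u * h)) * u ^ (α - 1) * l (-u) := by
      have e1 := integral_comp_neg_Ioi (0:ℝ)
        (fun A => Real.exp (A * h) * (-A) ^ (α - 1) * l A)
      simp only [neg_zero, neg_neg, neg_mul] at e1
      rw [MeasureTheory.integral_Iic_eq_integral_Iio] at e1
      exact e1.symm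
    have h2 : ∫ u in Set.Ioi (0:ℝ), Real.exp (-(u * h)) * u ^ (α - 1) * l (-u)
        = h⁻¹ * ∫ x in Set.Ioi (0:ℝ),
            Real.exp (-(h⁻¹ * x * h)) * (h⁻¹ * x) ^ (α - 1) * l (-(h⁻¹ * x)) := by
      have hcv := integral_comp_mul_left_Ioi
        (fun u => Real.exp (-(u * h)) * u ^ (α - 1) * l (-u)) 0 (inv_pos.mpr hh)
      rw [inv_inv, mul_zero, smul_eq_mul] at hcv
      rw [hcv, ← mul_assoc, inv_mul_cancel₀ hh.ne', one_mul]
    have h3 : ∫ x in Set.Ioi (0:ℝ),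
          Real.exp (-(h⁻¹ * x * h)) * (h⁻¹ * x) ^ (α - 1) * l (-(h⁻¹ * x))
        = (h ^ (α - 1))⁻¹ *
            ∫ x in Set.Ioi (0:ℝ), Real.exp (-x) * x ^ (α - 1) * l (-(x / h)) := by
      rw [← integral_const_mul]
      refine setIntegral_congr_fun measurableSet_Ioi (fun x hx => ?_)
      have hx' : (0:ℝ) ≤ x := le_of_lt hx
      rw [Real.mul_rpow (inv_nonneg.mpr hh.le) hx', Real.inv_rpow hh.le]
      have hxx : h⁻¹ * x * h = x := by field_simp
      rw [hxx, inv_mul_eq_div]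
      ring
    rw [h1, h2, h3, ← mul_assoc, ← mul_assoc]
    have hc : h ^ α * h⁻¹ * (h ^ (α - 1))⁻¹ = 1 := by
      rw [show α = 1 + (α - 1) by ring, Real.rpow_add hh, Real.rpow_one]
      have h1' : h ^ (α - 1) ≠ 0 := ne_of_gt (Real.rpow_pos_of_pos hh _)
      field_simp
      congr 1; ring
    rw [hc, one_mul]
  -- common integrability of the Gamma-type bound
  have hGammaInt : IntegrableOn (fun x : ℝ => Real.exp (-x) * x ^ (α - 1))
      (Set.Ioi 0) := Real.GammaIntegral_convergent hα
  -- Step B: dominated convergence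
  have hGamma : ∫ t in Set.Ioi (0:ℝ), Real.exp (-t) * t ^ (α - 1) * l₀
      = Real.Gamma α * l₀ := by
    rw [integral_mul_const, ← Real.Gamma_eq_integral hα]
  have mainJ : Filter.Tendsto
      (fun h : ℝ => ∫ t in Set.Ioi (0:ℝ), Real.exp (-t) * t ^ (α - 1) * l (-(t / h)))
      Filter.atTop (nhds (Real.Gamma α * l₀)) := by
    rw [← hGamma]
    apply tendsto_integral_filter_of_dominated_convergence
      (fun t => M' * (Real.exp (-t) * t ^ (α - 1)))
    · filter_upwards [eventually_gt_atTop (0:ℝ)] with h hh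
      apply ContinuousOn.aestronglyMeasurable _ measurableSet_Ioi
      apply ContinuousOn.mul
      · apply ContinuousOn.mul
        · exact (Real.continuous_exp.comp continuous_neg).continuousOn
        · exact continuousOn_id.rpow_const (fun x hx => Or.inl (ne_of_gt hx))
      · refine hl_cont.comp ((continuous_id.div_const h).neg.continuousOn) ?_
        intro x hx
        have : 0 < x / h := div_pos hx hh
        simpa [Set.mem_Iio] using this
    · filter_upwards [eventually_gt_atTop (0:ℝ)] with h hh
      rw [ae_restrict_iff' measurableSet_Ioi]
      refine ae_of_all _ (fun t ht => ?_)
      have ht' : 0 < t := ht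
      have harg : -(t / h) < 0 := by
        have : 0 < t / h := div_pos ht' hh
        linarith
      have h0 : 0 ≤ Real.exp (-t) * t ^ (α - 1) :=
        mul_nonneg (Real.exp_pos _).le (Real.rpow_nonneg ht'.le _)
      have hl1 : 0 ≤ l (-(t / h)) := hl_nonneg _ harg
      have hl2 : l (-(t / h)) ≤ M' := hM' _ harg
      rw [Real.norm_eq_abs, abs_of_nonneg (mul_nonneg h0 hl1)]
      calc Real.exp (-t) * t ^ (α - 1) * l (-(t / h))
          ≤ Real.exp (-t) * t ^ (α - 1) * M' :=
            mul_le_mul_of_nonneg_left hl2 h0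
        _ = M' * (Real.exp (-t) * t ^ (α - 1)) := by ring
    · exact hGammaInt.const_mul M'
    · rw [ae_restrict_iff' measurableSet_Ioi]
      refine ae_of_all _ (fun t ht => ?_)
      have ht' : 0 < t := ht
      have ht0 : Filter.Tendsto (fun h : ℝ => -(t / h)) Filter.atTop
          (nhdsWithin 0 (Set.Iio 0)) := by
        apply tendsto_nhdsWithin_of_tendsto_nhds_of_eventually_within
        · have : Filter.Tendsto (fun h : ℝ => t / h) Filter.atTop (nhds 0) :=
            Filter.Tendsto.div_atTop tendsto_const_nhds tendsto_id
          simpa using this.neg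
        · filter_upwards [eventually_gt_atTop (0:ℝ)] with h hh
          have : 0 < t / h := div_pos ht' hh
          simpa [Set.mem_Iio] using this
      exact (hlim.comp ht0).const_mul _
  -- first part
  have part1 : Filter.Tendsto
      (fun h : ℝ =>
        h ^ α * ∫ A in Set.Iio (0:ℝ), Real.exp (A * h) * (-A) ^ (α - 1) * l A)
      Filter.atTop (nhds (Real.Gamma α * l₀)) := by
    refine Filter.Tendsto.congr' ?_ mainJ
    filter_upwards [eventually_gt_atTop (0:ℝ)] with h hh
    exact (keyA h hh).symm
  refine ⟨part1, fun hl₀pos hint => ?_⟩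
  -- positivity of the denominator
  have hIpos : 0 < ∫ A in Set.Iio (0:ℝ), (-A) ^ (α - 1) * l A := by
    have hae : 0 ≤ᶠ[ae (volume.restrict (Set.Iio 0))]
        (fun A : ℝ => (-A) ^ (α - 1) * l A) := by
      rw [EventuallyLE, ae_restrict_iff' measurableSet_Iio]
      refine ae_of_all _ (fun x hx => ?_)
      have hx' : x < 0 := hx
      exact mul_nonneg (Real.rpow_nonneg (by linarith) _) (hl_nonneg x hx')
    rw [setIntegral_pos_iff_support_of_nonneg_ae hae hint]
    obtain ⟨a, ha, hsub⟩ := mem_nhdsLT_iff_exists_Ioo_subset.mp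
      (hlim (Ioi_mem_nhds (half_lt_self hl₀pos)))
    have ha' : a < 0 := ha
    have hsubset : Set.Ioo a 0 ⊆
        Function.support (fun A : ℝ => (-A) ^ (α - 1) * l A) ∩ Set.Iio 0 := by
      intro x hx
      have hx1 : a < x := hx.1
      have hx2 : x < 0 := hx.2
      refine ⟨?_, hx2⟩
      have hlx : l₀ / 2 < l x := hsub hx
      have hpos : 0 < (-x) ^ (α - 1) * l x :=
        mul_pos (Real.rpow_pos_of_pos (by linarith) _) (by linarith [half_pos hl₀pos])
      exact ne_of_gt hpos
    calc (0:ENNReal) < volume (Set.Ioo a 0) := by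
          rw [Real.volume_Ioo]
          exact ENNReal.ofReal_pos.mpr (by linarith)
      _ ≤ _ := measure_mono hsubset
  refine ⟨Real.Gamma α * l₀ / ∫ A in Set.Iio (0:ℝ), (-A) ^ (α - 1) * l A,
    div_pos (mul_pos (Real.Gamma_pos_of_pos hα) hl₀pos) hIpos, ?_⟩
  have := part1.div_const (∫ A in Set.Iio (0:ℝ), (-A) ^ (α - 1) * l A)
  simpa only [mul_div_assoc] using this
end

section
/- Let α > 0. Then lim_{h→∞} ( h^{α} / ln h ) ∫_{−1}^0 e^{x h} (−x)^{α−1} ln(−1/x) dx = Γ(α). Consequently, for the supOU process with mean reversion density π′(x) = C ln(−1/x)(−x)^{α} 1_{(−1,0)}(x) (C > 0 a normalizing constant), the autocorrelation function satisfies corr(X_h, X_0) ∼ C̃ ln(h) / h^{α} as h → ∞ for some constant C̃ > 0. -/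
open MeasureTheory Real Filter Set

-- bound lemma
lemma bound_aux {α : ℝ} (hα : 0 < α) {t : ℝ} (ht0 : 0 < t) (ht1 : t ≤ 1) :
    t ^ (α-1) * |Real.log t| ≤ (2/α) * t ^ (α/2-1) := by
  have h1 := (abs_log_mul_self_rpow_lt t (α/2) ht0 ht1 (by positivity)).le
  rw [abs_mul, abs_of_pos (rpow_pos_of_pos ht0 _)] at h1
  have key : t ^ (α-1) * |Real.log t| = t ^ (α/2-1) * (|Real.log t| * t ^ (α/2)) := by
    have e : t ^ (α-1) = t ^ (α/2-1) * t ^ (α/2) := by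
      rw [← Real.rpow_add ht0]; ring_nf
    rw [e]; ring
  rw [key]
  have hpos : (0:ℝ) ≤ t ^ (α/2-1) := (rpow_pos_of_pos ht0 _).le
  calc t ^ (α/2-1) * (|Real.log t| * t ^ (α/2)) ≤ t ^ (α/2-1) * (1/(α/2)) := by
        exact mul_le_mul_of_nonneg_left h1 hpos
    _ = (2/α) * t ^ (α/2-1) := by rw [one_div, mul_comm]; congr 1; field_simp


lemma contOn_auxlog (α : ℝ) : ContinuousOn (fun t : ℝ => Real.exp (-t) * t ^ (α - 1) * Real.log t) (Ioi 0) := by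
  refine ContinuousOn.mul (ContinuousOn.mul ?_ ?_) ?_
  · exact (Real.continuous_exp.comp continuous_neg).continuousOn
  · exact fun t ht => (Real.continuousAt_rpow_const t (α-1) (Or.inl (ne_of_gt ht))).continuousWithinAt
  · exact fun t ht => (Real.continuousAt_log (ne_of_gt ht)).continuousWithinAt

lemma int_with_log {α : ℝ} (hα : 0 < α) :
    IntegrableOn (fun t => Real.exp (-t) * t ^ (α-1) * Real.log t) (Ioi 0) := by
  rw [← Ioc_union_Ioi_eq_Ioi (zero_le_one (α := ℝ))]
  apply IntegrableOn.union
  · refine Integrable.mono' (g := fun t => (2/α) * t ^ (α/2-1)) ?_ ?_ ?_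
    · exact ((intervalIntegral.intervalIntegrable_rpow' (by linarith : (-1:ℝ) < α/2-1)).1).const_mul _
    · exact ((contOn_auxlog α).mono Ioc_subset_Ioi_self).aestronglyMeasurable measurableSet_Ioc
    · rw [ae_restrict_iff' measurableSet_Ioc]
      filter_upwards with t ht
      obtain ⟨ht0, ht1⟩ := ht
      have h0 : ‖Real.exp (-t) * t ^ (α-1) * Real.log t‖ = Real.exp (-t) * (t ^ (α-1) * |Real.log t|) := by
        rw [norm_eq_abs, abs_mul, abs_mul, abs_of_pos (exp_pos _), abs_of_pos (rpow_pos_of_pos ht0 _), mul_assoc]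
      rw [h0]
      calc Real.exp (-t) * (t ^ (α-1) * |Real.log t|) ≤ 1 * ((2/α) * t ^ (α/2-1)) := by
            apply mul_le_mul (exp_le_one_iff.2 (by linarith)) (bound_aux hα ht0 ht1) (by positivity) one_pos.le
        _ = (2/α) * t ^ (α/2-1) := one_mul _
  · refine Integrable.mono' (g := fun t => Real.exp (-t) * t ^ ((α+1)-1)) ?_ ?_ ?_
    · exact (Real.GammaIntegral_convergent (by linarith : (0:ℝ) < α+1)).mono_set (Ioi_subset_Ioi zero_le_one)
    · exact ((contOn_auxlog α).mono (Ioi_subset_Ioi zero_le_one)).aestronglyMeasurable measurableSet_Ioi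
    · rw [ae_restrict_iff' measurableSet_Ioi]
      filter_upwards with t ht
      have ht1 : (1:ℝ) < t := ht
      have ht0 : (0:ℝ) < t := by linarith
      have hlog : 0 ≤ Real.log t := log_nonneg ht1.le
      have h0 : ‖Real.exp (-t) * t ^ (α-1) * Real.log t‖ = Real.exp (-t) * t ^ (α-1) * Real.log t := by
        rw [norm_eq_abs, abs_of_nonneg (by positivity)]
      rw [h0]
      have hlt : Real.log t ≤ t := by
        have := Real.log_le_sub_one_of_pos ht0; linarith
      calc Real.exp (-t) * t ^ (α-1) * Real.log t ≤ Real.exp (-t) * t ^ (α-1) * t := by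
            apply mul_le_mul_of_nonneg_left hlt (by positivity)
        _ = Real.exp (-t) * t ^ ((α+1)-1) := by
            rw [mul_assoc]; congr 1
            rw [show (α+1)-1 = (α-1)+1 by ring, Real.rpow_add_one (ne_of_gt ht0)]

lemma part1 (α : ℝ) (hα : 0 < α) :
    Filter.Tendsto
        (fun h : ℝ =>
          (h ^ α / Real.log h) *
            ∫ x in Set.Ioo (-1:ℝ) 0, Real.exp (x * h) * (-x) ^ (α - 1) * Real.log (-1 / x))
        Filter.atTop (nhds (Real.Gamma α)) := by
  have hL0 : IntegrableOn (fun t => Real.exp (-t) * t ^ (α-1)) (Ioi 0) :=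
    Real.GammaIntegral_convergent hα
  have hL1 := int_with_log hα
  have hA : Tendsto (fun h : ℝ => ∫ u in (0:ℝ)..h, Real.exp (-u) * u ^ (α-1)) atTop
      (nhds (Real.Gamma α)) := by
    have := intervalIntegral_tendsto_integral_Ioi 0 hL0 tendsto_id
    rwa [← Real.Gamma_eq_integral hα] at this
  have hB : Tendsto (fun h : ℝ =>
      (Real.log h)⁻¹ * ∫ u in (0:ℝ)..h, Real.exp (-u) * u ^ (α-1) * Real.log u) atTop
      (nhds 0) := by
    have h1 := intervalIntegral_tendsto_integral_Ioi 0 hL1 tendsto_id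
    have h2 : Tendsto (fun h : ℝ => (Real.log h)⁻¹) atTop (nhds 0) :=
      Real.tendsto_log_atTop.inv_tendsto_atTop
    simpa using h2.mul h1
  have hmain := hA.sub hB
  rw [sub_zero] at hmain
  refine Tendsto.congr' ?_ hmain
  filter_upwards [eventually_gt_atTop 1] with h hh
  have hh0 : (0:ℝ) < h := by linarith
  have hne : h ≠ 0 := ne_of_gt hh0
  have hlog : 0 < Real.log h := Real.log_pos hh
  set F : ℝ → ℝ := fun x => Real.exp (x * h) * (-x) ^ (α - 1) * Real.log (-1 / x) with hF
  set A : ℝ := ∫ u in (0:ℝ)..h, Real.exp (-u) * u ^ (α-1) with hA'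
  set B : ℝ := ∫ u in (0:ℝ)..h, Real.exp (-u) * u ^ (α-1) * Real.log u with hB'
  have e1 : ∫ x in Ioo (-1:ℝ) 0, F x = ∫ x in (-1:ℝ)..0, F x := by
    rw [intervalIntegral.integral_of_le (by norm_num : (-1:ℝ) ≤ 0), integral_Ioc_eq_integral_Ioo]
  have e2 : ∫ x in (-1:ℝ)..0, F x = ∫ x in (0:ℝ)..(1:ℝ), F (-x) := by
    rw [intervalIntegral.integral_comp_neg]; norm_num
  have e3 : ∫ x in (0:ℝ)..(1:ℝ), F (-x) = h⁻¹ * ∫ u in (0:ℝ)..h, F (-(u/h)) := by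
    have e := intervalIntegral.integral_comp_div (a := 0) (b := h) (c := h)
      (fun x => F (-x)) hne
    rw [zero_div, div_self hne] at e
    rw [e, smul_eq_mul, ← mul_assoc, inv_mul_cancel₀ hne, one_mul]
  have e4 : ∫ u in (0:ℝ)..h, F (-(u/h)) =
      (h ^ (α-1))⁻¹ * (Real.log h * A - B) := by
    have congr_step : ∫ u in Ioc (0:ℝ) h, F (-(u/h)) =
        ∫ u in Ioc (0:ℝ) h, (h ^ (α-1))⁻¹ *
          (Real.log h * (Real.exp (-u) * u ^ (α-1)) - Real.exp (-u) * u ^ (α-1) * Real.log u) := by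
      refine setIntegral_congr_fun measurableSet_Ioc (fun u hu => ?_)
      obtain ⟨hu0, huh⟩ := hu
      have hune : u ≠ 0 := ne_of_gt hu0
      simp only [hF]
      rw [show -(u/h) * h = -u by field_simp]
      rw [show -(-(u/h)) = u/h by ring]
      rw [show (-1:ℝ)/(-(u/h)) = h/u by field_simp]
      rw [Real.div_rpow hu0.le hh0.le, Real.log_div hne hune]
      have hne2 : h ^ (α-1) ≠ 0 := ne_of_gt (rpow_pos_of_pos hh0 _)
      field_simp
    rw [intervalIntegral.integral_of_le hh0.le, congr_step, MeasureTheory.integral_const_mul _ _]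
    have i1 : IntegrableOn (fun u => Real.log h * (Real.exp (-u) * u ^ (α-1))) (Ioc 0 h) :=
      (hL0.mono_set Ioc_subset_Ioi_self).const_mul _
    have i2 : IntegrableOn (fun u => Real.exp (-u) * u ^ (α-1) * Real.log u) (Ioc 0 h) :=
      hL1.mono_set Ioc_subset_Ioi_self
    rw [integral_sub i1 i2, MeasureTheory.integral_const_mul _ _]
    rw [hA', hB', intervalIntegral.integral_of_le hh0.le, intervalIntegral.integral_of_le hh0.le]
  rw [e1, e2, e3, e4]
  have hrel : h ^ (α-1) * h = h ^ α := by
    rw [Real.rpow_sub_one hne]; field_simp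
  have hne2 : h ^ (α-1) ≠ 0 := ne_of_gt (rpow_pos_of_pos hh0 _)
  have hneα : h ^ α ≠ 0 := ne_of_gt (rpow_pos_of_pos hh0 _)
  field_simp
  rw [← hrel]
  ring

lemma int_G {α : ℝ} (hα : 0 < α) :
    IntegrableOn (fun x => (-x) ^ (α-1) * Real.log (-1/x)) (Ioo (-1:ℝ) 0) := by
  refine Integrable.mono' (g := fun x => (2/α) * (-x) ^ (α/2-1)) ?_ ?_ ?_
  · have h1 : IntervalIntegrable (fun x : ℝ => x ^ (α/2-1)) volume 1 0 :=
      intervalIntegral.intervalIntegrable_rpow' (by linarith)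
    have h2 := (IntervalIntegrable.iff_comp_neg (by simp)).mp h1
    rw [neg_zero] at h2
    exact ((h2.1).mono_set Ioo_subset_Ioc_self).const_mul _
  · have cont : ContinuousOn (fun x : ℝ => (-x) ^ (α-1) * Real.log (-1/x)) (Ioo (-1) 0) := by
      refine ContinuousOn.mul ?_ ?_
      · exact fun x hx => ((Real.continuousAt_rpow_const (-x) (α-1)
          (Or.inl (by simp only [neg_ne_zero]; exact ne_of_lt hx.2))).comp
          (continuous_neg.continuousAt)).continuousWithinAt
      · refine fun x hx => ContinuousAt.continuousWithinAt ?_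
        have hx2 : x ≠ 0 := ne_of_lt hx.2
        have hdiv : ContinuousAt (fun x : ℝ => -1/x) x :=
          continuousAt_const.div continuousAt_id hx2
        have hne : (-1:ℝ)/x ≠ 0 := div_ne_zero (by norm_num) hx2
        exact (Real.continuousAt_log hne).comp hdiv
    exact cont.aestronglyMeasurable measurableSet_Ioo
  · rw [ae_restrict_iff' measurableSet_Ioo]
    filter_upwards with x hx
    obtain ⟨hx1, hx2⟩ := hx
    have ht0 : (0:ℝ) < -x := by linarith
    have ht1 : -x ≤ 1 := by linarith
    have hxne : x ≠ 0 := ne_of_lt hx2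
    have hlogeq : Real.log (-1/x) = -Real.log (-x) := by
      rw [show (-1:ℝ)/x = (-x)⁻¹ by field_simp, Real.log_inv]
    have h0 : ‖(-x) ^ (α-1) * Real.log (-1/x)‖ = (-x) ^ (α-1) * |Real.log (-x)| := by
      rw [norm_eq_abs, abs_mul, abs_of_pos (rpow_pos_of_pos ht0 _), hlogeq, abs_neg]
    rw [h0]
    exact bound_aux hα ht0 ht1

lemma D_pos {α : ℝ} (hα : 0 < α) :
    0 < ∫ x in Ioo (-1:ℝ) 0, (-x) ^ (α-1) * Real.log (-1/x) := by
  have hpos : ∀ x ∈ Ioo (-1:ℝ) 0, 0 < (-x) ^ (α-1) * Real.log (-1/x) := by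
    intro x hx
    have ht0 : (0:ℝ) < -x := by linarith [hx.2]
    have ht1 : -x < 1 := by linarith [hx.1]
    have hlog : 0 < Real.log (-1/x) := by
      apply Real.log_pos
      rw [show (-1:ℝ)/x = 1/(-x) by ring]
      exact one_lt_one_div ht0 ht1
    exact mul_pos (rpow_pos_of_pos ht0 _) hlog
  rw [setIntegral_pos_iff_support_of_nonneg_ae ?_ (int_G hα)]
  · have hsub : Ioo (-1:ℝ) 0 ⊆ Function.support fun x => (-x) ^ (α-1) * Real.log (-1/x) :=
      fun x hx => ne_of_gt (hpos x hx)
    rw [Set.inter_eq_self_of_subset_right hsub, Real.volume_Ioo]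
    norm_num
  · rw [EventuallyLE, ae_restrict_iff' measurableSet_Ioo]
    filter_upwards with x hx
    exact (hpos x hx).le

/-- Remark 2.9(b): for `α > 0`,
`(h^α / ln h) ∫_{-1}^0 e^{xh} (-x)^{α-1} ln(-1/x) dx → Γ(α)` as `h → ∞`, and
consequently for the supOU process with mean reversion density
`π'(x) = C ln(-1/x)(-x)^α 1_{(-1,0)}(x)` the autocorrelation function satisfies
`corr(X_h, X_0) ∼ C̃ ln(h)/h^α` for some constant `C̃ > 0`. -/
theorem supOU_acf_log_slowly_varying (α : ℝ) (hα : 0 < α) :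
    Filter.Tendsto
        (fun h : ℝ =>
          (h ^ α / Real.log h) *
            ∫ x in Set.Ioo (-1:ℝ) 0, Real.exp (x * h) * (-x) ^ (α - 1) * Real.log (-1 / x))
        Filter.atTop (nhds (Real.Gamma α)) ∧
      ∀ C > (0:ℝ), ∃ Ctilde > (0:ℝ),
        Filter.Tendsto
          (fun h : ℝ =>
            ((∫ x in Set.Ioo (-1:ℝ) 0,
                Real.exp (x * h) / (-2 * x) * (C * Real.log (-1 / x) * (-x) ^ α)) /
              (∫ x in Set.Ioo (-1:ℝ) 0,
                1 / (-2 * x) * (C * Real.log (-1 / x) * (-x) ^ α))) *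
              h ^ α / Real.log h)
          Filter.atTop (nhds Ctilde) := by
  constructor
  · exact part1 α hα
  · intro C hC
    set D : ℝ := ∫ x in Ioo (-1:ℝ) 0, (-x) ^ (α-1) * Real.log (-1/x) with hD'
    have hD : 0 < D := D_pos hα
    refine ⟨Real.Gamma α / D, div_pos (Real.Gamma_pos_of_pos hα) hD, ?_⟩
    have hbase := (part1 α hα).div_const D
    refine Tendsto.congr (fun h => ?_) hbase
    have hC2 : C/2 ≠ 0 := by positivity
    -- rewrite numerator
    have hnum : (∫ x in Ioo (-1:ℝ) 0,
        Real.exp (x * h) / (-2 * x) * (C * Real.log (-1 / x) * (-x) ^ α)) =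
        (C/2) * ∫ x in Ioo (-1:ℝ) 0, Real.exp (x * h) * (-x) ^ (α - 1) * Real.log (-1 / x) := by
      rw [← MeasureTheory.integral_const_mul _ _]
      refine setIntegral_congr_fun measurableSet_Ioo (fun x hx => ?_)
      have ht0 : (0:ℝ) < -x := by linarith [hx.2]
      have hxne : x ≠ 0 := ne_of_lt hx.2
      have e : (-x) ^ (α-1) = (-x) ^ α / (-x) := Real.rpow_sub_one (ne_of_gt ht0) α
      rw [e]
      field_simp
    have hden : (∫ x in Ioo (-1:ℝ) 0,
        1 / (-2 * x) * (C * Real.log (-1 / x) * (-x) ^ α)) = (C/2) * D := by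
      rw [hD', ← MeasureTheory.integral_const_mul _ _]
      refine setIntegral_congr_fun measurableSet_Ioo (fun x hx => ?_)
      have ht0 : (0:ℝ) < -x := by linarith [hx.2]
      have hxne : x ≠ 0 := ne_of_lt hx.2
      have e : (-x) ^ (α-1) = (-x) ^ α / (-x) := Real.rpow_sub_one (ne_of_gt ht0) α
      rw [e]
      field_simp
    rw [hnum, hden, mul_div_mul_left _ _ hC2]
    ring
end

section
/- Let α > 0 and let f : (−∞,0) → [0,∞) be a measurable probability density (∫_{−∞}^0 f = 1) that is regularly varying at zero from the left with index α, i.e. f(x) > 0 for x in some interval (−δ,0) and f(λ x)/f(x) → λ^{α} as x → 0⁻ for every λ > 0. Then ∫_{−1}^0 f(x)/(−x) dx < ∞, i.e. the supOU existence condition ∫_{ℝ₋} (−1/A) π(dA) < ∞ holds for the probability measure π with density f. -/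
open MeasureTheory Real Filter Set
open scoped ENNReal

/-- Change of variables `x ↦ 2x` for lintegrals on the real line. -/
lemma lintegral_half_sub (g : ℝ → ℝ≥0∞) (hg : Measurable g) (s : Set ℝ) (hs : MeasurableSet s) :
    ∫⁻ x in (fun x : ℝ => 2 * x) ⁻¹' s, g (2 * x) = ENNReal.ofReal 2⁻¹ * ∫⁻ y in s, g y := by
  rw [← setLIntegral_map hs hg (measurable_const_mul 2),
    Real.map_volume_mul_left (two_ne_zero)]
  simp [Measure.restrict_smul, lintegral_smul_measure, abs_of_pos]

/-- If the probability density `f : (-∞,0) → [0,∞)` is regularly varying at zero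
from the left with index `α > 0` (positive near `0⁻` and `f(λx)/f(x) → λ^α`), then
`∫_{-1}^0 f(x)/(-x) dx < ∞`, i.e. the supOU existence condition holds. -/
theorem supOU_existence_for_regularly_varying_density
    (α : ℝ) (hα : 0 < α)
    (f : ℝ → ℝ) (hf_meas : Measurable f) (hf_nonneg : ∀ x < (0:ℝ), 0 ≤ f x)
    (hf_prob : ∫ x in Set.Iio (0:ℝ), f x = 1)
    (hf_pos : ∃ δ > (0:ℝ), ∀ x ∈ Set.Ioo (-δ) (0:ℝ), 0 < f x)
    (hf_rv : ∀ lam > (0:ℝ),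
      Filter.Tendsto (fun x => f (lam * x) / f x) (nhdsWithin 0 (Set.Iio 0))
        (nhds (lam ^ α))) :
    IntegrableOn (fun x => f x / (-x)) (Set.Ioo (-1:ℝ) 0) := by
  -- f is integrable on (-∞,0)
  have hfi : IntegrableOn f (Set.Iio (0:ℝ)) := by
    by_contra h
    rw [MeasureTheory.integral_undef h] at hf_prob
    norm_num at hf_prob
  obtain ⟨δ, hδ, hfpos⟩ := hf_pos
  -- the limit constant
  set L : ℝ := (2:ℝ)⁻¹ ^ α with hLdef
  have hL0 : 0 < L := Real.rpow_pos_of_pos (by norm_num) α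
  have hL1 : L < 1 := Real.rpow_lt_one (by norm_num) (by norm_num) hα
  set c : ℝ := (L + 1) / 2 with hcdef
  have hc0 : 0 < c := by positivity
  have hc1 : c < 1 := by rw [hcdef]; linarith
  have hLc : L < c := by rw [hcdef]; linarith
  -- eventual ratio bound
  have hev : ∀ᶠ x in nhdsWithin 0 (Set.Iio 0), f (2⁻¹ * x) / f x < c :=
    (hf_rv 2⁻¹ (by norm_num)).eventually_lt_const hLc
  rw [eventually_iff, Metric.mem_nhdsWithin_iff] at hev
  obtain ⟨η0, hη0, hball⟩ := hev
  -- the small parameter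
  set η : ℝ := min (min δ η0) 1 / 2 with hηdef
  have hηpos : 0 < η := by
    rw [hηdef]; positivity
  have hηδ : η < δ := by
    rw [hηdef]
    have : min (min δ η0) 1 ≤ δ := le_trans (min_le_left _ _) (min_le_left _ _)
    linarith
  have hηη0 : η < η0 := by
    rw [hηdef]
    have : min (min δ η0) 1 ≤ η0 := le_trans (min_le_left _ _) (min_le_right _ _)
    linarith
  -- key pointwise bound
  have hkey : ∀ x : ℝ, -η ≤ x → x < 0 → 0 < f x ∧ f (2⁻¹ * x) ≤ c * f x := by
    intro x hx1 hx2
    have hxδ : x ∈ Set.Ioo (-δ) (0:ℝ) := ⟨by linarith, hx2⟩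
    have hfx : 0 < f x := hfpos x hxδ
    have hxball : x ∈ Metric.ball (0:ℝ) η0 ∩ Set.Iio 0 := by
      constructor
      · simp only [Metric.mem_ball, Real.dist_eq, sub_zero]
        rw [abs_of_neg hx2]; linarith
      · exact hx2
    have hratio : f (2⁻¹ * x) / f x < c := hball hxball
    exact ⟨hfx, le_of_lt ((div_lt_iff₀ hfx).mp hratio)⟩
  -- the dyadic intervals
  set J : ℕ → Set ℝ := fun n => Set.Ico (-(η * (2:ℝ)⁻¹ ^ n)) (-(η * (2:ℝ)⁻¹ ^ (n + 1)))
    with hJdef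
  have hJmeas : ∀ n, MeasurableSet (J n) := fun n => measurableSet_Ico
  have hpowpos : ∀ n : ℕ, (0:ℝ) < (2:ℝ)⁻¹ ^ n := fun n => by positivity
  have hJsub : ∀ n, J n ⊆ Set.Ico (-η) (0:ℝ) := by
    intro n x hx
    obtain ⟨hx1, hx2⟩ := hx
    constructor
    · have h1 : (2:ℝ)⁻¹ ^ n ≤ 1 := pow_le_one₀ (by norm_num) (by norm_num)
      nlinarith [hpowpos n]
    · nlinarith [hpowpos (n + 1)]
  -- the integrand
  set g : ℝ → ℝ≥0∞ := fun x => ENNReal.ofReal (f x / (-x)) with hgdef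
  have hgmeas : Measurable g := (hf_meas.div measurable_neg).ennreal_ofReal
  set T : ℕ → ℝ≥0∞ := fun n => ∫⁻ x in J n, g x with hTdef
  -- the contraction step
  have hstep : ∀ n, T (n + 1) ≤ ENNReal.ofReal c * T n := by
    intro n
    have hpre : J (n + 1) = (fun x : ℝ => 2 * x) ⁻¹' (J n) := by
      have e1 : η * (2:ℝ)⁻¹ ^ (n + 1) = η * (2:ℝ)⁻¹ ^ n / 2 := by ring
      have e2 : η * (2:ℝ)⁻¹ ^ (n + 2) = η * (2:ℝ)⁻¹ ^ n / 4 := by ring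
      ext x
      simp only [hJdef, Set.mem_Ico, Set.mem_preimage, e1, e2]
      constructor
      · rintro ⟨h1, h2⟩; exact ⟨by linarith, by linarith⟩
      · rintro ⟨h1, h2⟩; exact ⟨by linarith, by linarith⟩
    set h : ℝ → ℝ≥0∞ := fun y => ENNReal.ofReal (f (2⁻¹ * y) / (-(2⁻¹ * y))) with hhdef
    have hhmeas : Measurable h :=
      ((hf_meas.comp (measurable_const_mul 2⁻¹)).div (measurable_const_mul 2⁻¹).neg).ennreal_ofReal
    have hT1 : T (n + 1) = ENNReal.ofReal 2⁻¹ * ∫⁻ y in J n, h y := by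
      rw [hTdef]
      simp only
      rw [hpre, ← lintegral_half_sub h hhmeas (J n) (hJmeas n)]
      refine lintegral_congr fun x => ?_
      have e : (2:ℝ)⁻¹ * (2 * x) = x := by ring
      simp only [hhdef, hgdef, e]
    have hT2 : ∫⁻ y in J n, h y ≤ ENNReal.ofReal (2 * c) * T n := by
      have hmono : ∫⁻ y in J n, h y ≤ ∫⁻ y in J n, ENNReal.ofReal (2 * c) * g y := by
        refine setLIntegral_mono' (hJmeas n) fun y hy => ?_
        obtain ⟨hy1, hy2⟩ := hJsub n hy
        obtain ⟨hfy, hratio⟩ := hkey y hy1 hy2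
        have hy0 : (0:ℝ) < -y := by linarith
        simp only [hhdef, hgdef]
        rw [← ENNReal.ofReal_mul (by positivity)]
        apply ENNReal.ofReal_le_ofReal
        have e2 : -((2:ℝ)⁻¹ * y) = (-y) / 2 := by ring
        rw [e2, div_div_eq_mul_div]
        have e3 : 2 * c * (f y / -y) = (2 * c * f y) / (-y) := by ring
        rw [e3]
        exact (div_le_div_iff_of_pos_right hy0).mpr (by linarith)
      calc ∫⁻ y in J n, h y ≤ ∫⁻ y in J n, ENNReal.ofReal (2 * c) * g y := hmono
        _ = ENNReal.ofReal (2 * c) * T n := by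
            rw [hTdef]; exact lintegral_const_mul _ hgmeas
    calc T (n + 1) = ENNReal.ofReal 2⁻¹ * ∫⁻ y in J n, h y := hT1
      _ ≤ ENNReal.ofReal 2⁻¹ * (ENNReal.ofReal (2 * c) * T n) :=
          mul_le_mul_right hT2 _
      _ = ENNReal.ofReal c * T n := by
          rw [← mul_assoc, ← ENNReal.ofReal_mul (by norm_num)]
          rw [show (2:ℝ)⁻¹ * (2 * c) = c by ring]
  -- iterate: geometric decay
  have hTn : ∀ n, T n ≤ ENNReal.ofReal c ^ n * T 0 := by
    intro n
    induction n with
    | zero => simp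
    | succ n ih =>
      calc T (n + 1) ≤ ENNReal.ofReal c * T n := hstep n
        _ ≤ ENNReal.ofReal c * (ENNReal.ofReal c ^ n * T 0) := mul_le_mul_right ih _
        _ = ENNReal.ofReal c ^ (n + 1) * T 0 := by rw [← mul_assoc, ← pow_succ']
  -- T 0 is finite
  have hT0 : T 0 < ⊤ := by
    have hJ0 : J 0 ⊆ Set.Iio (0:ℝ) := fun x hx => (hJsub 0 hx).2
    have hbd : T 0 ≤ ∫⁻ x in J 0, ENNReal.ofReal (2 / η) * ENNReal.ofReal (f x) := by
      refine setLIntegral_mono' (hJmeas 0) fun x hx => ?_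
      obtain ⟨hx1, hx2⟩ := hx
      have hx2' : x < -(η / 2) := by
        have : η * (2:ℝ)⁻¹ ^ (0 + 1) = η / 2 := by ring
        rw [this] at hx2; exact hx2
      have hx0 : x < 0 := by linarith
      have hfx := hf_nonneg x hx0
      simp only [hgdef]
      rw [← ENNReal.ofReal_mul (by positivity)]
      apply ENNReal.ofReal_le_ofReal
      have e4 : 2 / η * f x = f x / (η / 2) := by field_simp
      rw [e4]
      exact div_le_div_of_nonneg_left hfx (by linarith) (by linarith)
    have hfin0 : ∫⁻ x in J 0, ENNReal.ofReal (f x) < ⊤ :=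
      (hfi.mono_set hJ0).lintegral_lt_top
    calc T 0 ≤ ∫⁻ x in J 0, ENNReal.ofReal (2 / η) * ENNReal.ofReal (f x) := hbd
      _ = ENNReal.ofReal (2 / η) * ∫⁻ x in J 0, ENNReal.ofReal (f x) :=
          lintegral_const_mul _ hf_meas.ennreal_ofReal
      _ < ⊤ := ENNReal.mul_lt_top ENNReal.ofReal_lt_top hfin0
  -- the J n are pairwise disjoint
  have hdisj : Pairwise (Function.onFun Disjoint J) := by
    have key : ∀ m n : ℕ, m < n → Disjoint (J m) (J n) := by
      intro m n hmn
      simp only [hJdef]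
      rw [Set.Ico_disjoint_Ico]
      have h1 : (2:ℝ)⁻¹ ^ n ≤ (2:ℝ)⁻¹ ^ (m + 1) :=
        pow_le_pow_of_le_one (by norm_num) (by norm_num) hmn
      calc min (-(η * (2:ℝ)⁻¹ ^ (m + 1))) (-(η * (2:ℝ)⁻¹ ^ (n + 1)))
          ≤ -(η * (2:ℝ)⁻¹ ^ (m + 1)) := min_le_left _ _
        _ ≤ -(η * (2:ℝ)⁻¹ ^ n) := by nlinarith
        _ ≤ max (-(η * (2:ℝ)⁻¹ ^ m)) (-(η * (2:ℝ)⁻¹ ^ n)) := le_max_right _ _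
    intro m n hmn
    rcases hmn.lt_or_gt with h | h
    · exact key _ _ h
    · exact (key _ _ h).symm
  -- the J n cover Ioo (-η) 0
  have hcover : Set.Ioo (-η) (0:ℝ) ⊆ ⋃ n, J n := by
    rintro x ⟨hx1, hx2⟩
    have ht : (0:ℝ) < -x := by linarith
    have h1 : 1 ≤ η / (-x) := (one_le_div ht).mpr (by linarith)
    obtain ⟨n, hn1, hn2⟩ := exists_nat_pow_near h1 one_lt_two
    have hp : (0:ℝ) < 2 ^ n := by positivity
    have hp1 : (0:ℝ) < 2 ^ (n + 1) := by positivity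
    have e1 : (2:ℝ) ^ n * (2:ℝ)⁻¹ ^ n = 1 := by
      rw [inv_pow, mul_inv_cancel₀ (ne_of_gt hp)]
    have e2 : (2:ℝ) ^ (n + 1) * (2:ℝ)⁻¹ ^ (n + 1) = 1 := by
      rw [inv_pow, mul_inv_cancel₀ (ne_of_gt hp1)]
    have h2 : 2 ^ n * (-x) ≤ η := (le_div_iff₀ ht).mp hn1
    have h3 : η < 2 ^ (n + 1) * (-x) := (div_lt_iff₀ ht).mp hn2
    refine Set.mem_iUnion.mpr ⟨n, ?_⟩
    have h4 := mul_le_mul_of_nonneg_right h2 (le_of_lt (hpowpos n))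
    have h5 : 2 ^ n * (-x) * (2:ℝ)⁻¹ ^ n = -x := by
      rw [mul_comm ((2:ℝ) ^ n) (-x), mul_assoc, e1, mul_one]
    rw [h5] at h4
    have h6 := mul_lt_mul_of_pos_right h3 (hpowpos (n + 1))
    have h7 : 2 ^ (n + 1) * (-x) * (2:ℝ)⁻¹ ^ (n + 1) = -x := by
      rw [mul_comm ((2:ℝ) ^ (n + 1)) (-x), mul_assoc, e2, mul_one]
    rw [h7] at h6
    simp only [hJdef, Set.mem_Ico]
    exact ⟨by linarith, by linarith⟩
  -- the lintegral over Ioo (-η) 0 is finite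
  have hfin2 : ∫⁻ x in Set.Ioo (-η) (0:ℝ), g x < ⊤ := by
    have hofc : ENNReal.ofReal c < 1 := ENNReal.ofReal_lt_one.mpr hc1
    calc ∫⁻ x in Set.Ioo (-η) (0:ℝ), g x
        ≤ ∫⁻ x in ⋃ n, J n, g x := lintegral_mono_set hcover
      _ = ∑' n, T n := lintegral_iUnion hJmeas hdisj g
      _ ≤ ∑' n, ENNReal.ofReal c ^ n * T 0 := ENNReal.tsum_le_tsum hTn
      _ = (∑' n : ℕ, ENNReal.ofReal c ^ n) * T 0 := ENNReal.tsum_mul_right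
      _ = (1 - ENNReal.ofReal c)⁻¹ * T 0 := by rw [ENNReal.tsum_geometric]
      _ < ⊤ := by
          refine ENNReal.mul_lt_top ?_ hT0
          rw [ENNReal.inv_lt_top, tsub_pos_iff_lt]
          exact hofc
  -- integrability on Ioo (-η) 0
  have hIoo : IntegrableOn (fun x => f x / (-x)) (Set.Ioo (-η) (0:ℝ)) := by
    refine ⟨(hf_meas.div measurable_neg).aestronglyMeasurable, ?_⟩
    rw [hasFiniteIntegral_iff_ofReal ?_]
    · exact hfin2
    · refine (ae_restrict_iff' measurableSet_Ioo).mpr (ae_of_all _ ?_)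
      rintro x ⟨hx1, hx2⟩
      exact div_nonneg (hf_nonneg x hx2) (by linarith)
  -- integrability on Ioc (-1) (-η)
  have hsub1 : Set.Ioc (-1:ℝ) (-η) ⊆ Set.Iio (0:ℝ) := fun x hx =>
    lt_of_le_of_lt hx.2 (by linarith)
  have hIoc : IntegrableOn (fun x => f x / (-x)) (Set.Ioc (-1:ℝ) (-η)) := by
    have hint : Integrable (fun x => f x * η⁻¹) (volume.restrict (Set.Ioc (-1:ℝ) (-η))) :=
      (hfi.mono_set hsub1).mul_const _
    refine hint.mono' (hf_meas.div measurable_neg).aestronglyMeasurable ?_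
    refine (ae_restrict_iff' measurableSet_Ioc).mpr (ae_of_all _ ?_)
    rintro x ⟨hx1, hx2⟩
    have hx0 : x < 0 := by linarith
    have hxη : η ≤ -x := by linarith
    have hfx := hf_nonneg x hx0
    rw [Real.norm_eq_abs, abs_of_nonneg (div_nonneg hfx (by linarith))]
    rw [div_eq_mul_inv]
    exact mul_le_mul_of_nonneg_left (inv_anti₀ hηpos hxη) hfx
  -- combine
  refine (hIoc.union hIoo).mono_set ?_
  rintro x ⟨hx1, hx2⟩
  rcases le_or_gt x (-η) with h | h
  · exact Or.inl ⟨hx1, h⟩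
  · exact Or.inr ⟨h, hx2⟩
end

section
/- Let p > 1 and q > 0. Then lim_{h→∞} h^{p−1} ∫_{−1}^0 e^{x h} (−x)^{p−2} (1 + x)^{q−1} dx = Γ(p−1). Consequently, for the supOU process whose mean reversion distribution π is the Beta distribution on [−1,0] with density π′(x) = (1/B(p,q)) (−x)^{p−1} (1+x)^{q−1} 1_{[−1,0]}(x), the autocorrelation function decays like a positive constant times h^{−(p−1)} as h → ∞. -/
open MeasureTheory Real Filter Set

lemma rpow_le_max_aux {x : ℝ} (b : ℝ) (hx : 1/2 ≤ x) (hx1 : x ≤ 1) :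
    x ^ b ≤ max 1 ((2:ℝ) ^ (-b)) := by
  rcases le_or_gt 0 b with h | h
  · exact le_max_of_le_left (Real.rpow_le_one (by linarith) hx1 h)
  · refine le_max_of_le_right ?_
    calc x ^ b ≤ (1/2:ℝ) ^ b := Real.rpow_le_rpow_of_nonpos (by norm_num) hx h.le
    _ = (2:ℝ) ^ (-b) := by
        rw [Real.rpow_neg (by norm_num), one_div, Real.inv_rpow (by norm_num)]

lemma beta_integrand_integrable {a b : ℝ} (ha : -1 < a) (hb : -1 < b) :
    IntegrableOn (fun t : ℝ => t ^ a * (1 - t) ^ b) (Ioo (0:ℝ) 1) := by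
  have hmeas : Measurable (fun t : ℝ => t ^ a * (1 - t) ^ b) := by fun_prop
  have h1 : IntegrableOn (fun t : ℝ => t ^ a * (1 - t) ^ b) (Ioc (0:ℝ) (1/2)) := by
    have hg : IntegrableOn (fun t : ℝ => t ^ a * max 1 ((2:ℝ) ^ (-b))) (Ioc (0:ℝ) (1/2)) := by
      have := intervalIntegral.intervalIntegrable_rpow' (a := 0) (b := 1/2) ha
      rw [intervalIntegrable_iff_integrableOn_Ioc_of_le (by norm_num)] at this
      exact this.mul_const _
    refine Integrable.mono hg hmeas.aestronglyMeasurable ?_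
    filter_upwards [ae_restrict_mem measurableSet_Ioc] with t ht
    have ht0 : 0 < t := ht.1
    have h1 : t ^ a * (1 - t) ^ b ≤ t ^ a * max 1 ((2:ℝ) ^ (-b)) := by
      refine mul_le_mul_of_nonneg_left ?_ (Real.rpow_nonneg ht0.le a)
      exact rpow_le_max_aux b (by linarith [ht.2]) (by linarith [ht0])
    have hnn : 0 ≤ t ^ a * (1 - t) ^ b :=
      mul_nonneg (Real.rpow_nonneg ht0.le a) (Real.rpow_nonneg (by linarith [ht.2]) b)
    rw [Real.norm_eq_abs, Real.norm_eq_abs, abs_of_nonneg hnn, abs_of_nonneg (le_trans hnn h1)]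
    exact h1
  have h2 : IntegrableOn (fun t : ℝ => t ^ a * (1 - t) ^ b) (Ioo (1/2:ℝ) 1) := by
    have hg : IntegrableOn (fun t : ℝ => max 1 ((2:ℝ) ^ (-a)) * (1 - t) ^ b) (Ioo (1/2:ℝ) 1) := by
      have h0 := intervalIntegral.intervalIntegrable_rpow' (a := 0) (b := 1/2) hb
      have h1 := (h0.comp_sub_left 1).symm
      norm_num at h1
      rw [intervalIntegrable_iff_integrableOn_Ioo_of_le (by norm_num)] at h1
      exact h1.const_mul _
    refine Integrable.mono hg hmeas.aestronglyMeasurable ?_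
    filter_upwards [ae_restrict_mem measurableSet_Ioo] with t ht
    have ht0 : (0:ℝ) < 1 - t := by linarith [ht.2]
    have h1 : t ^ a * (1 - t) ^ b ≤ max 1 ((2:ℝ) ^ (-a)) * (1 - t) ^ b := by
      refine mul_le_mul_of_nonneg_right ?_ (Real.rpow_nonneg ht0.le b)
      exact rpow_le_max_aux a (by linarith [ht.1]) (by linarith [ht.2])
    have hnn : 0 ≤ t ^ a * (1 - t) ^ b :=
      mul_nonneg (Real.rpow_nonneg (by linarith [ht.1]) a) (Real.rpow_nonneg ht0.le b)
    rw [Real.norm_eq_abs, Real.norm_eq_abs, abs_of_nonneg hnn, abs_of_nonneg (le_trans hnn h1)]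
    exact h1
  have := h1.union h2
  rwa [Ioc_union_Ioo_eq_Ioo (by norm_num) (by norm_num)] at this

lemma scaled_integrable {p q : ℝ} (hp : 1 < p) (hq : 0 < q) {h : ℝ} (hh : 0 < h) :
    IntegrableOn (fun t : ℝ => Real.exp (-t) * t ^ (p-2) * (1 - t/h) ^ (q-1)) (Ioo (0:ℝ) h) := by
  have hbeta := beta_integrand_integrable (a := p-2) (b := q-1) (by linarith) (by linarith)
  have hI : IntervalIntegrable (fun t : ℝ => t ^ (p-2) * (1 - t) ^ (q-1)) volume 0 1 := by
    rw [intervalIntegrable_iff_integrableOn_Ioo_of_le zero_le_one]; exact hbeta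
  have hIc := hI.comp_mul_right (c := 1/h)
  have e0 : (0:ℝ) / (1/h) = 0 := by simp
  have e1 : (1:ℝ) / (1/h) = h := by field_simp
  rw [e0, e1, intervalIntegrable_iff_integrableOn_Ioo_of_le hh.le] at hIc
  have hg : IntegrableOn (fun t : ℝ => h ^ (p-2) * ((t * (1/h)) ^ (p-2) * (1 - t * (1/h)) ^ (q-1)))
      (Ioo (0:ℝ) h) := hIc.const_mul _
  refine Integrable.mono hg (by fun_prop : Measurable fun t : ℝ =>
    Real.exp (-t) * t ^ (p-2) * (1 - t/h) ^ (q-1)).aestronglyMeasurable ?_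
  filter_upwards [ae_restrict_mem measurableSet_Ioo] with t ht
  have ht0 : 0 < t := ht.1
  have hth : t < h := ht.2
  have h1t : (0:ℝ) ≤ 1 - t/h := by
    rw [sub_nonneg]; exact (div_le_one hh).2 hth.le
  have key : (t * (1/h)) ^ (p-2) = t ^ (p-2) / h ^ (p-2) := by
    rw [mul_one_div, Real.div_rpow ht0.le hh.le]
  have hge : h ^ (p-2) * ((t * (1/h)) ^ (p-2) * (1 - t * (1/h)) ^ (q-1))
      = t ^ (p-2) * (1 - t/h) ^ (q-1) := by
    rw [key, mul_one_div]
    field_simp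

  rw [hge]
  have hnn : 0 ≤ Real.exp (-t) * t ^ (p-2) * (1 - t/h) ^ (q-1) :=
    mul_nonneg (mul_nonneg (Real.exp_nonneg _) (Real.rpow_nonneg ht0.le _))
      (Real.rpow_nonneg h1t _)
  have hle : Real.exp (-t) * t ^ (p-2) * (1 - t/h) ^ (q-1) ≤ t ^ (p-2) * (1 - t/h) ^ (q-1) := by
    have := Real.exp_le_one_iff.2 (neg_nonpos.2 ht0.le)
    nlinarith [Real.rpow_nonneg ht0.le (p-2), Real.rpow_nonneg h1t (q-1), Real.exp_pos (-t)]
  rw [Real.norm_eq_abs, Real.norm_eq_abs, abs_of_nonneg hnn, abs_of_nonneg (le_trans hnn hle)]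
  exact hle

lemma tendsto_A {p q : ℝ} (hp : 1 < p) (hq : 0 < q) :
    Tendsto (fun h : ℝ => ∫ t in Ioc (0:ℝ) (h/2),
        Real.exp (-t) * t ^ (p-2) * (1 - t/h) ^ (q-1))
      atTop (nhds (Real.Gamma (p-1))) := by
  have hp1 : 0 < p - 1 := by linarith
  have hGamma : Real.Gamma (p-1) = ∫ t in Ioi (0:ℝ), Real.exp (-t) * t ^ (p-2) := by
    rw [Real.Gamma_eq_integral hp1, show p-1-1 = p-2 by ring]
  rw [hGamma]
  have key : ∀ h : ℝ, (∫ t in Ioc (0:ℝ) (h/2),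
      Real.exp (-t) * t ^ (p-2) * (1 - t/h) ^ (q-1))
      = ∫ t in Ioi (0:ℝ), (Ioc (0:ℝ) (h/2)).indicator
          (fun t => Real.exp (-t) * t ^ (p-2) * (1 - t/h) ^ (q-1)) t := by
    intro h
    rw [integral_indicator measurableSet_Ioc, Measure.restrict_restrict measurableSet_Ioc,
      inter_eq_left.2 Ioc_subset_Ioi_self]
  simp only [key]
  -- dominated convergence
  have hbound : IntegrableOn
      (fun t : ℝ => max 1 ((2:ℝ) ^ (1-q)) * (Real.exp (-t) * t ^ (p-2))) (Ioi (0:ℝ)) := by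
    have := Real.GammaIntegral_convergent hp1
    have e : p - 1 - 1 = p - 2 := by ring
    rw [e] at this
    exact this.const_mul _
  refine tendsto_integral_filter_of_dominated_convergence _ ?_ ?_ hbound ?_
  · filter_upwards with h
    exact ((by fun_prop : Measurable fun t : ℝ =>
      Real.exp (-t) * t ^ (p-2) * (1 - t/h) ^ (q-1)).indicator
        measurableSet_Ioc).aestronglyMeasurable
  · filter_upwards [eventually_ge_atTop (1:ℝ)] with h hh1
    filter_upwards [ae_restrict_mem measurableSet_Ioi] with t ht
    rcases le_or_gt t (h/2) with htc | htc
    · have hmem : t ∈ Ioc (0:ℝ) (h/2) := ⟨ht, htc⟩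
      rw [indicator_of_mem hmem]
      have h0 : (0:ℝ) < h := by linarith
      have hx1 : 1 - t/h ≤ 1 := by
        have : 0 ≤ t/h := div_nonneg (le_of_lt ht) h0.le
        linarith
      have hx2 : 1/2 ≤ 1 - t/h := by
        have : t/h ≤ 1/2 := by
          rw [div_le_div_iff₀ h0 (by norm_num)]
          linarith
        linarith
      have hb : (1 - t/h) ^ (q-1) ≤ max 1 ((2:ℝ) ^ (1-q)) := by
        have := rpow_le_max_aux (q-1) hx2 hx1
        have e : -(q-1) = 1-q := by ring
        rwa [e] at this
      have hnn0 : (0:ℝ) ≤ Real.exp (-t) * t ^ (p-2) :=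
        mul_nonneg (Real.exp_nonneg _) (Real.rpow_nonneg ht.le _)
      have hnn : 0 ≤ Real.exp (-t) * t ^ (p-2) * (1 - t/h) ^ (q-1) :=
        mul_nonneg hnn0 (Real.rpow_nonneg (by linarith) _)
      rw [Real.norm_eq_abs, abs_of_nonneg hnn]
      calc Real.exp (-t) * t ^ (p-2) * (1 - t/h) ^ (q-1)
          ≤ Real.exp (-t) * t ^ (p-2) * max 1 ((2:ℝ) ^ (1-q)) :=
            mul_le_mul_of_nonneg_left hb hnn0
        _ = max 1 ((2:ℝ) ^ (1-q)) * (Real.exp (-t) * t ^ (p-2)) := by ring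
    · rw [indicator_of_notMem (by intro hmem; exact absurd hmem.2 (not_le.2 htc))]
      simp only [norm_zero]
      exact mul_nonneg (le_trans zero_le_one (le_max_left _ _))
        (mul_nonneg (Real.exp_nonneg _) (Real.rpow_nonneg ht.le _))
  · filter_upwards [ae_restrict_mem measurableSet_Ioi] with t ht
    have htendsto : Tendsto (fun h : ℝ => (1 - t/h) ^ (q-1)) atTop (nhds 1) := by
      have h0' : Tendsto (fun h : ℝ => t/h) atTop (nhds 0) :=
        Tendsto.div_atTop tendsto_const_nhds tendsto_id
      have h1 : Tendsto (fun h : ℝ => 1 - t/h) atTop (nhds 1) := by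
        simpa using (tendsto_const_nhds (x := (1:ℝ))).sub h0'
      have := h1.rpow_const (p := q-1) (Or.inl one_ne_zero)
      simpa using this
    have heq : ∀ᶠ h : ℝ in atTop,
        (Ioc (0:ℝ) (h/2)).indicator
          (fun t' => Real.exp (-t') * t' ^ (p-2) * (1 - t'/h) ^ (q-1)) t
        = Real.exp (-t) * t ^ (p-2) * (1 - t/h) ^ (q-1) := by
      filter_upwards [eventually_ge_atTop (2*t)] with h hh
      have hmem : t ∈ Ioc (0:ℝ) (h/2) := ⟨ht, by linarith⟩
      rw [indicator_of_mem hmem]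
    refine Tendsto.congr' (heq.mono fun h e => e.symm) ?_
    have := (tendsto_const_nhds (x := Real.exp (-t) * t ^ (p-2))).mul htendsto
    simpa using this

lemma J_eval {q : ℝ} (hq : 0 < q) {h : ℝ} (hh : 0 < h) :
    ∫ t in Ioo (h/2) h, (1 - t/h) ^ (q-1) = h * ((1/2:ℝ) ^ q) / q := by
  rw [← integral_Ioc_eq_integral_Ioo,
    ← intervalIntegral.integral_of_le (by linarith : h/2 ≤ h)]
  have e : ∀ t : ℝ, (1 - t/h) ^ (q-1) = (fun x : ℝ => x ^ (q-1)) ((-(1/h)) * t + 1) := by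
    intro t; congr 1; field_simp; ring
  simp_rw [e]
  rw [intervalIntegral.integral_comp_mul_add (fun x : ℝ => x ^ (q-1))
    (by simp [hh.ne'] : (-(1/h)) ≠ 0) 1]
  have e1 : -(1/h) * (h/2) + 1 = (1/2:ℝ) := by field_simp; ring
  have e2 : -(1/h) * h + 1 = (0:ℝ) := by field_simp; ring
  rw [e1, e2, intervalIntegral.integral_symm,
    integral_rpow (Or.inl (by linarith : (-1:ℝ) < q - 1))]
  have hq1 : q - 1 + 1 = q := by ring
  rw [hq1, Real.zero_rpow hq.ne', smul_eq_mul]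
  field_simp
  ring

lemma aux0 (s b : ℝ) (hb : 0 < b) :
    Tendsto (fun y : ℝ => y ^ s * y * Real.exp (-b*y)) atTop (nhds 0) := by
  refine (tendsto_rpow_mul_exp_neg_mul_atTop_nhds_zero (s+1) b hb).congr' ?_
  filter_upwards [eventually_gt_atTop (0:ℝ)] with y hy
  rw [Real.rpow_add_one hy.ne' s]

lemma rpow_integrable_tail {q : ℝ} (hq : 0 < q) {h : ℝ} (hh : 0 < h) :
    IntegrableOn (fun t : ℝ => (1 - t/h) ^ (q-1)) (Ioo (h/2) h) := by
  have h0 := intervalIntegral.intervalIntegrable_rpow' (a := 0) (b := 1/2)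
    (by linarith : (-1:ℝ) < q - 1)
  have h1 := (h0.comp_sub_left 1).comp_mul_right (c := 1/h)
  have e1 : (1 - 0) / (1/h) = h := by field_simp; ring
  have e2 : (1 - 1/2) / (1/h) = h/2 := by field_simp; ring
  rw [e1, e2] at h1
  have h2 := h1.symm
  rw [intervalIntegrable_iff_integrableOn_Ioo_of_le (by linarith : h/2 ≤ h)] at h2
  refine h2.congr_fun ?_ measurableSet_Ioo
  intro t _
  simp only [mul_one_div]
lemma tendsto_B {p q : ℝ} (hp : 1 < p) (hq : 0 < q) :
    Tendsto (fun h : ℝ => ∫ t in Ioo (h/2) h,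
        Real.exp (-t) * t ^ (p-2) * (1 - t/h) ^ (q-1))
      atTop (nhds 0) := by
  set c : ℝ := (1/2:ℝ) ^ q / q with hc
  have hcpos : 0 < c := div_pos (Real.rpow_pos_of_pos (by norm_num) q) hq
  set U : ℝ → ℝ := fun h =>
    Real.exp (-(h/2)) * ((h/2) ^ (p-2) + h ^ (p-2)) * (h * ((1/2:ℝ) ^ q) / q) with hU
  have hUtendsto : Tendsto U atTop (nhds 0) := by
    have t1 : Tendsto (fun h : ℝ => (h/2) ^ (p-2) * h * Real.exp (-(h/2))) atTop (nhds 0) := by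
      have comp : Tendsto (fun h : ℝ => h/2) atTop atTop :=
        Tendsto.atTop_div_const (by norm_num) tendsto_id
      have := ((aux0 (p-2) 1 one_pos).comp comp).const_mul (2:ℝ)
      simp only [Function.comp] at this
      rw [mul_zero] at this
      refine this.congr ?_
      intro h; ring_nf
    have t2 : Tendsto (fun h : ℝ => h ^ (p-2) * h * Real.exp (-(h/2))) atTop (nhds 0) := by
      have := aux0 (p-2) (1/2) (by norm_num)
      refine this.congr ?_
      intro h; ring_nf
    have := ((t1.add t2).const_mul c)
    rw [add_zero, mul_zero] at this
    refine this.congr ?_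
    intro h
    rw [hU, hc]
    ring
  refine tendsto_of_tendsto_of_tendsto_of_le_of_le' tendsto_const_nhds hUtendsto ?_ ?_
  · filter_upwards [eventually_ge_atTop (1:ℝ)] with h hh1
    refine setIntegral_nonneg measurableSet_Ioo ?_
    intro t ht
    have h0 : (0:ℝ) < h := by linarith
    have ht0 : 0 < t := lt_trans (by linarith) ht.1
    have h1t : (0:ℝ) ≤ 1 - t/h := by
      rw [sub_nonneg]; exact (div_le_one h0).2 ht.2.le
    exact mul_nonneg (mul_nonneg (Real.exp_nonneg _) (Real.rpow_nonneg ht0.le _))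
      (Real.rpow_nonneg h1t _)
  · filter_upwards [eventually_ge_atTop (1:ℝ)] with h hh1
    have h0 : (0:ℝ) < h := by linarith
    have hsub : Ioo (h/2) h ⊆ Ioo (0:ℝ) h := Ioo_subset_Ioo (by linarith) le_rfl
    have hfint : IntegrableOn (fun t : ℝ => Real.exp (-t) * t ^ (p-2) * (1 - t/h) ^ (q-1))
        (Ioo (h/2) h) := (scaled_integrable hp hq h0).mono_set hsub
    have hgint : IntegrableOn
        (fun t : ℝ => Real.exp (-(h/2)) * ((h/2) ^ (p-2) + h ^ (p-2)) * (1 - t/h) ^ (q-1))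
        (Ioo (h/2) h) := (rpow_integrable_tail hq h0).const_mul _
    have hmono := setIntegral_mono_on hfint hgint measurableSet_Ioo ?_
    · calc (∫ t in Ioo (h/2) h, Real.exp (-t) * t ^ (p-2) * (1 - t/h) ^ (q-1))
          ≤ ∫ t in Ioo (h/2) h,
              Real.exp (-(h/2)) * ((h/2) ^ (p-2) + h ^ (p-2)) * (1 - t/h) ^ (q-1) := hmono
        _ = Real.exp (-(h/2)) * ((h/2) ^ (p-2) + h ^ (p-2))
            * ∫ t in Ioo (h/2) h, (1 - t/h) ^ (q-1) := by
              rw [MeasureTheory.integral_const_mul]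
        _ = U h := by rw [J_eval hq h0]
    · intro t ht
      have ht1 : h/2 < t := ht.1
      have ht2 : t < h := ht.2
      have ht0 : 0 < t := lt_trans (by linarith) ht1
      have h1t : (0:ℝ) ≤ 1 - t/h := by
        rw [sub_nonneg]; exact (div_le_one h0).2 ht2.le
      have hexp : Real.exp (-t) ≤ Real.exp (-(h/2)) := Real.exp_le_exp.2 (by linarith)
      have hpow : t ^ (p-2) ≤ (h/2) ^ (p-2) + h ^ (p-2) := by
        rcases le_or_gt (p-2) 0 with hple | hpgt
        · have := Real.rpow_le_rpow_of_nonpos (by linarith : (0:ℝ) < h/2) ht1.le hple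
          have h2 : (0:ℝ) ≤ h ^ (p-2) := Real.rpow_nonneg h0.le _
          linarith
        · have := Real.rpow_le_rpow ht0.le ht2.le hpgt.le
          have h2 : (0:ℝ) ≤ (h/2) ^ (p-2) := Real.rpow_nonneg (by linarith) _
          linarith
      have hr : (0:ℝ) ≤ (1 - t/h) ^ (q-1) := Real.rpow_nonneg h1t _
      have hen : (0:ℝ) ≤ Real.exp (-t) := Real.exp_nonneg _
      have hpn : (0:ℝ) ≤ t ^ (p-2) := Real.rpow_nonneg ht0.le _
      have : Real.exp (-t) * t ^ (p-2) ≤ Real.exp (-(h/2)) * ((h/2) ^ (p-2) + h ^ (p-2)) :=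
        mul_le_mul hexp hpow hpn (Real.exp_nonneg _)
      exact mul_le_mul_of_nonneg_right this hr

lemma change_var {p q : ℝ} (hp : 1 < p) (hq : 0 < q) {h : ℝ} (hh : 0 < h) :
    h ^ (p-1) * ∫ x in Ioo (-1:ℝ) 0, Real.exp (x*h) * (-x) ^ (p-2) * (1+x) ^ (q-1)
      = ∫ t in Ioo (0:ℝ) h, Real.exp (-t) * t ^ (p-2) * (1 - t/h) ^ (q-1) := by
  set ψ : ℝ → ℝ := fun x => Real.exp (x*h) * (-x) ^ (p-2) * (1+x) ^ (q-1) with hψ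
  have step1 : ∫ t in Ioo (0:ℝ) h, Real.exp (-t) * t ^ (p-2) * (1 - t/h) ^ (q-1)
      = ∫ t in Ioo (0:ℝ) h, h ^ (p-2) * ψ (-(1/h) * t) := by
    refine setIntegral_congr_fun measurableSet_Ioo ?_
    intro t ht
    have ht0 : 0 < t := ht.1
    have hth : t < h := ht.2
    have e1 : -(1/h) * t = -(t/h) := by field_simp
    rw [hψ]
    simp only [e1]
    have e2 : -(-(t/h)) = t/h := by ring
    have e3 : (-(t/h)) * h = -t := by field_simp
    have e4 : 1 + -(t/h) = 1 - t/h := by ring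
    rw [e2, e3, e4]
    have e5 : (t/h) ^ (p-2) = t ^ (p-2) / h ^ (p-2) := Real.div_rpow ht0.le hh.le _
    rw [e5]
    have hhp : (0:ℝ) < h ^ (p-2) := Real.rpow_pos_of_pos hh _
    field_simp
  have step2 : ∫ t in Ioo (0:ℝ) h, ψ (-(1/h) * t) = h * ∫ x in Ioo (-1:ℝ) 0, ψ x := by
    rw [← integral_Ioc_eq_integral_Ioo, ← intervalIntegral.integral_of_le hh.le,
      intervalIntegral.integral_comp_mul_left ψ (by simp [hh.ne'] : -(1/h) ≠ 0)]
    have e1 : -(1/h) * 0 = (0:ℝ) := by ring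
    have e2 : -(1/h) * h = (-1:ℝ) := by field_simp
    rw [e1, e2]
    rw [intervalIntegral.integral_symm, intervalIntegral.integral_of_le (by norm_num : (-1:ℝ) ≤ 0),
      integral_Ioc_eq_integral_Ioo]
    have : (-(1/h))⁻¹ = -h := by field_simp
    rw [this, smul_eq_mul]
    ring
  rw [step1, MeasureTheory.integral_const_mul, step2]
  rw [← mul_assoc, ← Real.rpow_add_one hh.ne' (p-2)]
  have : p - 2 + 1 = p - 1 := by ring
  rw [this]

lemma part1_s12 {p q : ℝ} (hp : 1 < p) (hq : 0 < q) :
    Tendsto (fun h : ℝ => h ^ (p-1) *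
        ∫ x in Ioo (-1:ℝ) 0, Real.exp (x*h) * (-x) ^ (p-2) * (1+x) ^ (q-1))
      atTop (nhds (Real.Gamma (p-1))) := by
  have hAB := (tendsto_A hp hq).add (tendsto_B hp hq)
  rw [add_zero] at hAB
  refine Tendsto.congr' ?_ hAB
  filter_upwards [eventually_gt_atTop (0:ℝ)] with h h0
  have hsplit : (∫ t in Ioc (0:ℝ) (h/2), Real.exp (-t) * t ^ (p-2) * (1 - t/h) ^ (q-1))
      + (∫ t in Ioo (h/2) h, Real.exp (-t) * t ^ (p-2) * (1 - t/h) ^ (q-1))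
      = ∫ t in Ioo (0:ℝ) h, Real.exp (-t) * t ^ (p-2) * (1 - t/h) ^ (q-1) := by
    rw [← setIntegral_union (Ioc_disjoint_Ioi_same.mono_right Ioo_subset_Ioi_self)
      measurableSet_Ioo
      ((scaled_integrable hp hq h0).mono_set (Ioc_subset_Ioo_right (by linarith)
        |>.trans (Ioo_subset_Ioo le_rfl le_rfl)))
      ((scaled_integrable hp hq h0).mono_set (Ioo_subset_Ioo (by linarith) le_rfl)),
      Ioc_union_Ioo_eq_Ioo (by linarith) (by linarith)]
  rw [hsplit, change_var hp hq h0]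

-- D integrand integrable on Ioo (-1) 0
lemma D_integrable {p q : ℝ} (hp : 1 < p) (hq : 0 < q) :
    IntegrableOn (fun x : ℝ => (-x) ^ (p-2) * (1+x) ^ (q-1)) (Ioo (-1:ℝ) 0) := by
  have hbeta := beta_integrand_integrable (a := p-2) (b := q-1) (by linarith) (by linarith)
  have hI : IntervalIntegrable (fun t : ℝ => t ^ (p-2) * (1 - t) ^ (q-1)) volume 0 1 := by
    rw [intervalIntegrable_iff_integrableOn_Ioo_of_le zero_le_one]; exact hbeta
  have h2 := ((IntervalIntegrable.iff_comp_neg (f := fun t : ℝ => t ^ (p-2) * (1 - t) ^ (q-1)) (a := 0) (b := 1)).mp hI).symm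
  norm_num at h2
  rw [intervalIntegrable_iff_integrableOn_Ioo_of_le (by norm_num : (-1:ℝ) ≤ 0)] at h2
  exact h2

lemma D_pos_s12 {p q : ℝ} (hp : 1 < p) (hq : 0 < q) :
    0 < ∫ x in Ioo (-1:ℝ) 0, (-x) ^ (p-2) * (1+x) ^ (q-1) := by
  rw [setIntegral_pos_iff_support_of_nonneg_ae ?_ (D_integrable hp hq)]
  · have hsub : Ioo (-1:ℝ) 0 ⊆
        Function.support (fun x : ℝ => (-x) ^ (p-2) * (1+x) ^ (q-1)) ∩ Ioo (-1:ℝ) 0 := by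
      intro x hx
      refine ⟨?_, hx⟩
      have h1 : 0 < (-x) ^ (p-2) := Real.rpow_pos_of_pos (by linarith [hx.2]) _
      have h2 : 0 < (1+x) ^ (q-1) := Real.rpow_pos_of_pos (by linarith [hx.1]) _
      exact ne_of_gt (mul_pos h1 h2)
    refine lt_of_lt_of_le ?_ (measure_mono hsub)
    rw [Real.volume_Ioo]
    norm_num
  · filter_upwards [ae_restrict_mem measurableSet_Ioo] with x hx
    exact mul_nonneg (Real.rpow_nonneg (by linarith [hx.2]) _)
      (Real.rpow_nonneg (by linarith [hx.1]) _)

/-- Beta specification: for `p > 1`, `q > 0`,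
`h^{p-1} ∫_{-1}^0 e^{xh} (-x)^{p-2} (1+x)^{q-1} dx → Γ(p-1)` as `h → ∞`, and
consequently the autocorrelation function of the supOU process with Beta mean
reversion density `π'(x) = (1/B(p,q))(-x)^{p-1}(1+x)^{q-1} 1_{[-1,0]}(x)` decays
like a positive constant times `h^{-(p-1)}`. -/
theorem supOU_beta_acf_decay (p q : ℝ) (hp : 1 < p) (hq : 0 < q) :
    Filter.Tendsto
        (fun h : ℝ =>
          h ^ (p - 1) *
            ∫ x in Set.Ioo (-1:ℝ) 0,
              Real.exp (x * h) * (-x) ^ (p - 2) * (1 + x) ^ (q - 1))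
        Filter.atTop (nhds (Real.Gamma (p - 1))) ∧
      ∃ c > (0:ℝ),
        Filter.Tendsto
          (fun h : ℝ =>
            ((∫ x in Set.Ioo (-1:ℝ) 0,
                Real.exp (x * h) / (-2 * x) *
                  ((1 / (Real.Gamma p * Real.Gamma q / Real.Gamma (p + q))) *
                    ((-x) ^ (p - 1) * (1 + x) ^ (q - 1)))) /
              (∫ x in Set.Ioo (-1:ℝ) 0,
                1 / (-2 * x) *
                  ((1 / (Real.Gamma p * Real.Gamma q / Real.Gamma (p + q))) *
                    ((-x) ^ (p - 1) * (1 + x) ^ (q - 1))))) *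
              h ^ (p - 1))
          Filter.atTop (nhds c) := by
  have hpart1 := part1_s12 hp hq
  refine ⟨hpart1, ?_⟩
  set k : ℝ := 1 / (Real.Gamma p * Real.Gamma q / Real.Gamma (p + q)) with hk
  have hkpos : 0 < k := by
    rw [hk]
    have h1 := Real.Gamma_pos_of_pos (by linarith : (0:ℝ) < p)
    have h2 := Real.Gamma_pos_of_pos hq
    have h3 := Real.Gamma_pos_of_pos (by linarith : (0:ℝ) < p + q)
    positivity
  set D : ℝ := ∫ x in Ioo (-1:ℝ) 0, (-x) ^ (p-2) * (1+x) ^ (q-1) with hD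
  have hDpos : 0 < D := D_pos_s12 hp hq
  refine ⟨Real.Gamma (p-1) / D, div_pos (Real.Gamma_pos_of_pos (by linarith)) hDpos, ?_⟩
  -- pointwise rewriting of numerator and denominator
  have hnum : ∀ h : ℝ, (∫ x in Ioo (-1:ℝ) 0,
      Real.exp (x * h) / (-2 * x) * (k * ((-x) ^ (p - 1) * (1 + x) ^ (q - 1))))
      = (k/2) * ∫ x in Ioo (-1:ℝ) 0, Real.exp (x*h) * (-x) ^ (p-2) * (1+x) ^ (q-1) := by
    intro h
    rw [← MeasureTheory.integral_const_mul]
    refine setIntegral_congr_fun measurableSet_Ioo ?_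
    intro x hx
    have hx0 : (0:ℝ) < -x := by linarith [hx.2]
    have hxe : (-x) ^ (p-1) = (-x) ^ (p-2) * (-x) := by
      rw [show p - 1 = p - 2 + 1 by ring, Real.rpow_add_one hx0.ne' (p-2)]
    simp only [hxe]
    have hne : -2 * x ≠ 0 := by intro hc; nlinarith
    rw [div_mul_eq_mul_div, div_eq_iff hne]
    ring
  have hden : (∫ x in Ioo (-1:ℝ) 0,
      1 / (-2 * x) * (k * ((-x) ^ (p - 1) * (1 + x) ^ (q - 1)))) = (k/2) * D := by
    rw [hD, ← MeasureTheory.integral_const_mul]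
    refine setIntegral_congr_fun measurableSet_Ioo ?_
    intro x hx
    have hx0 : (0:ℝ) < -x := by linarith [hx.2]
    have hxe : (-x) ^ (p-1) = (-x) ^ (p-2) * (-x) := by
      rw [show p - 1 = p - 2 + 1 by ring, Real.rpow_add_one hx0.ne' (p-2)]
    simp only [hxe]
    have hne : -2 * x ≠ 0 := by intro hc; nlinarith
    rw [div_mul_eq_mul_div, div_eq_iff hne]
    ring
  have hfun : ∀ h : ℝ,
      ((∫ x in Ioo (-1:ℝ) 0,
          Real.exp (x * h) / (-2 * x) * (k * ((-x) ^ (p - 1) * (1 + x) ^ (q - 1)))) /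
        (∫ x in Ioo (-1:ℝ) 0,
          1 / (-2 * x) * (k * ((-x) ^ (p - 1) * (1 + x) ^ (q - 1))))) * h ^ (p-1)
      = (h ^ (p-1) * ∫ x in Ioo (-1:ℝ) 0,
          Real.exp (x*h) * (-x) ^ (p-2) * (1+x) ^ (q-1)) / D := by
    intro h
    rw [hnum h, hden, mul_div_mul_left _ _ (by positivity : (k:ℝ)/2 ≠ 0)]
    ring
  have := hpart1.div_const D
  refine this.congr ?_
  intro h
  rw [← hfun h]
end

section
/- Let h₁, h₂ > 0 and c > 1, and define g : (−∞,0] → ℝ by g(B) = (1 − B h₂)^{c} + B h₁ − 1. Then g is strictly convex on (−∞,0], g(0) = 0, and g has at most one zero in (−∞,0). -/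
open MeasureTheory Real Filter Set

/-- Key lemma for identifiability (Proposition 3.5): for `h₁, h₂ > 0` and `c > 1`,
the function `g(B) = (1 - Bh₂)^c + Bh₁ - 1` is strictly convex on `(-∞,0]`,
satisfies `g(0) = 0`, and has at most one zero in `(-∞,0)`. -/
theorem identifiability_convex_lemma
    (h₁ h₂ c : ℝ) (hh₁ : 0 < h₁) (hh₂ : 0 < h₂) (hc : 1 < c)
    (g : ℝ → ℝ) (hg : ∀ B ≤ (0:ℝ), g B = (1 - B * h₂) ^ c + B * h₁ - 1) :
    StrictConvexOn ℝ (Set.Iic 0) g ∧ g 0 = 0 ∧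
      {B : ℝ | B < 0 ∧ g B = 0}.Subsingleton := by
  have hsc : StrictConvexOn ℝ (Set.Iic 0) g := by
    refine ⟨convex_Iic 0, ?_⟩
    intro x hx y hy hxy a b ha hb hab
    simp only [mem_Iic] at hx hy
    have hxy2 : a * x + b * y ≤ 0 := by nlinarith
    simp only [smul_eq_mul]
    rw [hg x hx, hg y hy, hg _ hxy2]
    have h1 : (0:ℝ) ≤ 1 - x * h₂ := by nlinarith
    have h2 : (0:ℝ) ≤ 1 - y * h₂ := by nlinarith
    have hne : (1 - x * h₂) ≠ (1 - y * h₂) := by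
      intro h
      apply hxy
      have : x * h₂ = y * h₂ := by linarith
      exact mul_right_cancel₀ (ne_of_gt hh₂) this
    have key := (strictConvexOn_rpow hc).2 h1 h2 hne ha hb hab
    have harg : 1 - (a * x + b * y) * h₂ = a * (1 - x * h₂) + b * (1 - y * h₂) := by ring_nf; linarith
    rw [harg]
    simp only [smul_eq_mul] at key ⊢
    nlinarith [key]
  refine ⟨hsc, by simpa using hg 0 le_rfl, ?_⟩
  intro B₁ hB₁ B₂ hB₂
  simp only [mem_setOf_eq] at hB₁ hB₂
  by_contra hne
  have g0 : g 0 = 0 := by simpa using hg 0 le_rfl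
  -- wlog B₁ < B₂
  have key : ∀ x y : ℝ, x < 0 → y < 0 → g x = 0 → g y = 0 → x < y → False := by
    intro x y hx hy hgx hgy hlt
    -- y = a*x + b*0 with a = y/x ∈ (0,1)
    have hxne : x ≠ 0 := ne_of_lt hx
    set a := y / x with ha
    have ha0 : 0 < a := div_pos_iff.2 (Or.inr ⟨hy, hx⟩)
    have ha1 : a < 1 := by
      rw [ha, div_lt_one_of_neg hx]
      linarith
    have hb0 : 0 < 1 - a := by linarith
    have hya : a * x = y := by rw [ha]; field_simp
    have := hsc.2 (le_of_lt hx) (le_refl (0:ℝ) : (0:ℝ) ∈ Set.Iic 0) (ne_of_lt hx) ha0 hb0 (by ring)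
    simp only [smul_eq_mul, mul_zero, add_zero] at this
    rw [hya] at this
    rw [hgx, hgy, g0] at this
    simp at this
  rcases lt_trichotomy B₁ B₂ with h | h | h
  · exact key B₁ B₂ hB₁.1 hB₂.1 hB₁.2 hB₂.2 h
  · exact hne h
  · exact key B₂ B₁ hB₂.1 hB₁.1 hB₂.2 hB₁.2 h
end

section
/- Let h₁, h₂ > 0 with h₁ ≠ h₂, and let (α₁, B₁), (α₂, B₂) ∈ (1,∞) × (−∞,0). If (1 − B₁ h₁)^{1−α₁} = (1 − B₂ h₁)^{1−α₂} and (1 − B₁ h₂)^{1−α₁} = (1 − B₂ h₂)^{1−α₂}, then B₁ = B₂ and α₁ = α₂. In other words, the autocorrelation function ρ(h) = (1 − B h)^{1−α} of the Gamma-specified supOU process evaluated at any two distinct positive lags uniquely determines the parameters (α, B). -/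
open MeasureTheory Real Filter Set

private lemma supOU_pos_aux {B t : ℝ} (hB : B < 0) (ht : 0 ≤ t) : 0 < 1 - B * t := by
  nlinarith

private lemma supOU_key_aux
    (a b : ℝ) (ha : 0 < a) (hab : a < b)
    (α₁ α₂ B₁ B₂ : ℝ) (hα₁ : 1 < α₁) (hα₂ : 1 < α₂) (hB₁ : B₁ < 0) (hB₂ : B₂ < 0)
    (heq1 : (1 - B₁ * a) ^ (1 - α₁) = (1 - B₂ * a) ^ (1 - α₂))
    (heq2 : (1 - B₁ * b) ^ (1 - α₁) = (1 - B₂ * b) ^ (1 - α₂)) :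
    B₁ = B₂ ∧ α₁ = α₂ := by
  set f : ℝ → ℝ := fun t => (1 - α₁) * Real.log (1 - B₁ * t)
      - (1 - α₂) * Real.log (1 - B₂ * t) with hf
  set f' : ℝ → ℝ := fun t => (1 - α₁) * (-B₁ / (1 - B₁ * t))
      - (1 - α₂) * (-B₂ / (1 - B₂ * t)) with hf'
  have hderiv : ∀ t : ℝ, 0 ≤ t → HasDerivAt f (f' t) t := by
    intro t ht
    have p1 := supOU_pos_aux hB₁ ht
    have p2 := supOU_pos_aux hB₂ ht
    have d1 : HasDerivAt (fun s : ℝ => 1 - B₁ * s) (-B₁) t := by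
      simpa using ((hasDerivAt_id t).const_mul B₁).const_sub 1
    have d2 : HasDerivAt (fun s : ℝ => 1 - B₂ * s) (-B₂) t := by
      simpa using ((hasDerivAt_id t).const_mul B₂).const_sub 1
    exact ((d1.log p1.ne').const_mul (1 - α₁)).sub ((d2.log p2.ne').const_mul (1 - α₂))
  have hfval : ∀ t : ℝ, 0 ≤ t →
      (1 - B₁ * t) ^ (1 - α₁) = (1 - B₂ * t) ^ (1 - α₂) → f t = 0 := by
    intro t ht he
    have p1 := supOU_pos_aux hB₁ ht
    have p2 := supOU_pos_aux hB₂ ht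
    have := congrArg Real.log he
    rw [Real.log_rpow p1, Real.log_rpow p2] at this
    simp [hf, this]
  have hf0 : f 0 = 0 := by simp [hf]
  have hfa : f a = 0 := hfval a ha.le heq1
  have hfb : f b = 0 := hfval b (ha.trans hab).le heq2
  have hcont : ∀ u v : ℝ, 0 ≤ u → ContinuousOn f (Icc u v) := by
    intro u v hu
    intro x hx
    exact ((hderiv x (hu.trans hx.1)).continuousAt).continuousWithinAt
  obtain ⟨x, hx, hx0⟩ := exists_hasDerivAt_eq_zero ha (hcont 0 a le_rfl)
    (hf0.trans hfa.symm) (fun t ht => hderiv t ht.1.le)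
  obtain ⟨y, hy, hy0⟩ := exists_hasDerivAt_eq_zero hab (hcont a b ha.le)
    (hfa.trans hfb.symm) (fun t ht => hderiv t (ha.le.trans ht.1.le))
  have hx0' : 0 < x := hx.1
  have hy0' : 0 < y := ha.trans hy.1
  have hxy : x ≠ y := ne_of_lt (hx.2.trans hy.1)
  have px1 := supOU_pos_aux hB₁ hx0'.le
  have px2 := supOU_pos_aux hB₂ hx0'.le
  have py1 := supOU_pos_aux hB₁ hy0'.le
  have py2 := supOU_pos_aux hB₂ hy0'.le
  rw [hf'] at hx0 hy0
  have e1 : (1 - α₁) * (-B₁) * (1 - B₂ * x) = (1 - α₂) * (-B₂) * (1 - B₁ * x) := by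
    have h := sub_eq_zero.mp hx0
    rw [mul_div_assoc', mul_div_assoc', div_eq_div_iff px1.ne' px2.ne'] at h
    linear_combination h
  have e2 : (1 - α₁) * (-B₁) * (1 - B₂ * y) = (1 - α₂) * (-B₂) * (1 - B₁ * y) := by
    have h := sub_eq_zero.mp hy0
    rw [mul_div_assoc', mul_div_assoc', div_eq_div_iff py1.ne' py2.ne'] at h
    linear_combination h
  have hkey : ((1 - α₁) - (1 - α₂)) * (B₁ * B₂ * (x - y)) = 0 := by
    linear_combination e1 - e2
  have hfac : B₁ * B₂ * (x - y) ≠ 0 :=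
    mul_ne_zero (mul_ne_zero hB₁.ne hB₂.ne) (sub_ne_zero.mpr hxy)
  have hα : α₁ = α₂ := by
    rcases mul_eq_zero.mp hkey with h | h
    · linarith
    · exact absurd h hfac
  have hB : B₁ = B₂ := by
    have h0 : (1 - α₂) * (B₂ - B₁) = 0 := by
      rw [hα] at e1; linear_combination e1
    rcases mul_eq_zero.mp h0 with h | h
    · linarith
    · linarith
  exact ⟨hB, hα⟩

/-- Identifiability core of Proposition 3.5: the autocorrelation function
`ρ(h) = (1 - Bh)^{1-α}` of the Gamma-specified supOU process evaluated at two
distinct positive lags uniquely determines the parameters `(α, B)`. -/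
theorem supOU_gamma_acf_identifiability
    (h₁ h₂ : ℝ) (hh₁ : 0 < h₁) (hh₂ : 0 < h₂) (hne : h₁ ≠ h₂)
    (α₁ α₂ B₁ B₂ : ℝ) (hα₁ : 1 < α₁) (hα₂ : 1 < α₂) (hB₁ : B₁ < 0) (hB₂ : B₂ < 0)
    (heq1 : (1 - B₁ * h₁) ^ (1 - α₁) = (1 - B₂ * h₁) ^ (1 - α₂))
    (heq2 : (1 - B₁ * h₂) ^ (1 - α₁) = (1 - B₂ * h₂) ^ (1 - α₂)) :
    B₁ = B₂ ∧ α₁ = α₂ := by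
  rcases hne.lt_or_gt with h | h
  · exact supOU_key_aux h₁ h₂ hh₁ h α₁ α₂ B₁ B₂ hα₁ hα₂ hB₁ hB₂ heq1 heq2
  · exact supOU_key_aux h₂ h₁ hh₂ h α₁ α₂ B₁ B₂ hα₁ hα₂ hB₁ hB₂ heq2 heq1
end

section
/- Let h₁, h₂ > 0 with h₁ ≠ h₂. For i = 1,2 let μᵢ ∈ ℝ, σᵢ² > 0, αᵢ > 1, Bᵢ < 0, and suppose: (i) −μ₁/(B₁(α₁−1)) = −μ₂/(B₂(α₂−1)); (ii) −σ₁²/(2B₁(α₁−1)) = −σ₂²/(2B₂(α₂−1)); (iii) −σ₁²(1−B₁h)^{1−α₁}/(2B₁(α₁−1)) = −σ₂²(1−B₂h)^{1−α₂}/(2B₂(α₂−1)) for h = h₁ and h = h₂. Then μ₁ = μ₂, σ₁² = σ₂², α₁ = α₂ and B₁ = B₂. That is, the parameter vector β = (μ, σ², α, B) of the Gamma-specified supOU process is identified by its stationary mean, variance and autocovariances at two distinct positive lags. -/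
open MeasureTheory Real Filter Set

private lemma hasDerivAt_chi {x : ℝ} (hx : 0 < x) :
    HasDerivAt (fun x : ℝ => (1+x)*Real.log (1+x)/x)
      (((Real.log (1+x)+1)*x - (1+x)*Real.log (1+x))/x^2) x := by
  have h1x : (0:ℝ) < 1 + x := by linarith
  have hlin : HasDerivAt (fun y : ℝ => 1 + y) 1 x := (hasDerivAt_id x).const_add 1
  have hlog : HasDerivAt (fun y : ℝ => Real.log (1+y)) ((1+x)⁻¹ * 1) x :=
    (Real.hasDerivAt_log h1x.ne').comp x hlin
  have hN : HasDerivAt (fun y : ℝ => (1+y)*Real.log (1+y))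
      (1 * Real.log (1+x) + (1+x) * ((1+x)⁻¹ * 1)) x := hlin.mul hlog
  have := hN.div (hasDerivAt_id x) hx.ne'
  refine this.congr_deriv ?_
  simp only [id, one_mul, mul_one]
  rw [mul_inv_cancel₀ h1x.ne']

private lemma chi_strictMono :
    StrictMonoOn (fun x : ℝ => (1+x)*Real.log (1+x)/x) (Set.Ioi 0) := by
  apply strictMonoOn_of_deriv_pos (convex_Ioi 0)
  · exact fun x hx => ((hasDerivAt_chi hx).continuousAt).continuousWithinAt
  · intro x hx
    rw [interior_Ioi] at hx
    have hx0 : (0:ℝ) < x := hx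
    rw [(hasDerivAt_chi hx0).deriv]
    have hlt : Real.log (1+x) < x := by
      have := Real.log_lt_sub_one_of_pos (by linarith : (0:ℝ) < 1+x) (by linarith)
      linarith
    have h : ((Real.log (1+x)+1)*x - (1+x)*Real.log (1+x)) = x - Real.log (1+x) := by ring
    rw [h]
    exact div_pos (by linarith) (by positivity)

private lemma hasDerivAt_phi {h₁ h₂ u : ℝ} (hh₁ : 0 < h₁) (hh₂ : 0 < h₂) (hu : 0 < u) :
    HasDerivAt (fun u : ℝ => Real.log (1+u*h₁) / Real.log (1+u*h₂))
      ((h₁/(1+u*h₁) * Real.log (1+u*h₂) - Real.log (1+u*h₁) * (h₂/(1+u*h₂)))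
        / (Real.log (1+u*h₂))^2) u := by
  have p1 : (0:ℝ) < 1 + u*h₁ := by nlinarith
  have p2 : (0:ℝ) < 1 + u*h₂ := by nlinarith
  have l2 : 0 < Real.log (1+u*h₂) := Real.log_pos (by nlinarith)
  have hT : HasDerivAt (fun u : ℝ => Real.log (1+u*h₁)) ((1+u*h₁)⁻¹ * h₁) u :=
    by have := (Real.hasDerivAt_log p1.ne').comp u
        (by simpa using ((hasDerivAt_id u).mul_const h₁).const_add 1 :
          HasDerivAt (fun y : ℝ => 1 + y*h₁) h₁ u)
       exact this
  have hS : HasDerivAt (fun u : ℝ => Real.log (1+u*h₂)) ((1+u*h₂)⁻¹ * h₂) u :=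
    by have := (Real.hasDerivAt_log p2.ne').comp u
        (by simpa using ((hasDerivAt_id u).mul_const h₂).const_add 1 :
          HasDerivAt (fun y : ℝ => 1 + y*h₂) h₂ u)
       exact this
  have := hT.div hS l2.ne'
  refine this.congr_deriv ?_
  ring

private lemma phi_strictMono {h₁ h₂ : ℝ} (hh₁ : 0 < h₁) (h12 : h₁ < h₂) :
    StrictMonoOn (fun u : ℝ => Real.log (1+u*h₁) / Real.log (1+u*h₂)) (Set.Ioi 0) := by
  have hh₂ : 0 < h₂ := lt_trans hh₁ h12
  apply strictMonoOn_of_deriv_pos (convex_Ioi 0)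
  · exact fun u hu => ((hasDerivAt_phi hh₁ hh₂ hu).continuousAt).continuousWithinAt
  · intro u hu
    rw [interior_Ioi] at hu
    have hu0 : (0:ℝ) < u := hu
    rw [(hasDerivAt_phi hh₁ hh₂ hu0).deriv]
    have p1 : (0:ℝ) < 1 + u*h₁ := by nlinarith
    have p2 : (0:ℝ) < 1 + u*h₂ := by nlinarith
    have l1 : 0 < Real.log (1+u*h₁) := Real.log_pos (by nlinarith)
    have l2 : 0 < Real.log (1+u*h₂) := Real.log_pos (by nlinarith)
    have hchi := chi_strictMono (show u*h₁ ∈ Set.Ioi (0:ℝ) from mul_pos hu0 hh₁)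
      (show u*h₂ ∈ Set.Ioi (0:ℝ) from mul_pos hu0 hh₂)
      (by nlinarith : u*h₁ < u*h₂)
    simp only at hchi
    rw [div_lt_div_iff₀ (by positivity) (by positivity)] at hchi
    apply div_pos _ (by positivity)
    rw [sub_pos, ← mul_div_assoc, div_mul_eq_mul_div, div_lt_div_iff₀ p2 p1]
    nlinarith

/-- Injectivity of `u ↦ (log(1+u h₁), log(1+u h₂))` up to scaling:
if the logs at two distinct positive lags are proportional, the rates agree. -/
private lemma key_inj {h₁ h₂ u v : ℝ} (hh₁ : 0 < h₁) (h12 : h₁ < h₂)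
    (hu : 0 < u) (hv : 0 < v)
    (heq : Real.log (1+u*h₁) * Real.log (1+v*h₂) =
      Real.log (1+v*h₁) * Real.log (1+u*h₂)) : u = v := by
  have hh₂ : 0 < h₂ := lt_trans hh₁ h12
  have lu2 : 0 < Real.log (1+u*h₂) := Real.log_pos (by nlinarith)
  have lv2 : 0 < Real.log (1+v*h₂) := Real.log_pos (by nlinarith)
  have hphieq : Real.log (1+u*h₁) / Real.log (1+u*h₂) =
      Real.log (1+v*h₁) / Real.log (1+v*h₂) := by
    rw [div_eq_div_iff lu2.ne' lv2.ne']
    linarith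
  exact (phi_strictMono hh₁ h12).injOn hu hv hphieq

/-- Proposition 3.5: the parameter vector `(μ, σ², α, B)` of the Gamma-specified
supOU process is identified by its stationary mean, variance and autocovariances
at two distinct positive lags. -/
theorem supOU_gamma_parameter_identifiability
    (h₁ h₂ : ℝ) (hh₁ : 0 < h₁) (hh₂ : 0 < h₂) (hne : h₁ ≠ h₂)
    (μ₁ μ₂ σsq₁ σsq₂ α₁ α₂ B₁ B₂ : ℝ)
    (hσ₁ : 0 < σsq₁) (hσ₂ : 0 < σsq₂)
    (hα₁ : 1 < α₁) (hα₂ : 1 < α₂) (hB₁ : B₁ < 0) (hB₂ : B₂ < 0)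
    (hmean : -μ₁ / (B₁ * (α₁ - 1)) = -μ₂ / (B₂ * (α₂ - 1)))
    (hvar : -σsq₁ / (2 * B₁ * (α₁ - 1)) = -σsq₂ / (2 * B₂ * (α₂ - 1)))
    (hcov : ∀ h : ℝ, h = h₁ ∨ h = h₂ →
      -σsq₁ * (1 - B₁ * h) ^ (1 - α₁) / (2 * B₁ * (α₁ - 1)) =
        -σsq₂ * (1 - B₂ * h) ^ (1 - α₂) / (2 * B₂ * (α₂ - 1))) :
    μ₁ = μ₂ ∧ σsq₁ = σsq₂ ∧ α₁ = α₂ ∧ B₁ = B₂ := by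
  have hD₁ : 2 * B₁ * (α₁ - 1) < 0 := by nlinarith
  have hD₂ : 2 * B₂ * (α₂ - 1) < 0 := by nlinarith
  have hv : 0 < -σsq₁ / (2 * B₁ * (α₁ - 1)) := div_pos_of_neg_of_neg (by linarith) hD₁
  -- From variance and covariance equalities, the rpow factors agree at h₁, h₂.
  have hpow : ∀ h : ℝ, h = h₁ ∨ h = h₂ →
      (1 - B₁ * h) ^ (1 - α₁) = (1 - B₂ * h) ^ (1 - α₂) := by
    intro h hmem
    have hc := hcov h hmem
    have e1 : -σsq₁ * (1 - B₁ * h) ^ (1 - α₁) / (2 * B₁ * (α₁ - 1)) =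
        (-σsq₁ / (2 * B₁ * (α₁ - 1))) * (1 - B₁ * h) ^ (1 - α₁) := by ring
    have e2 : -σsq₂ * (1 - B₂ * h) ^ (1 - α₂) / (2 * B₂ * (α₂ - 1)) =
        (-σsq₂ / (2 * B₂ * (α₂ - 1))) * (1 - B₂ * h) ^ (1 - α₂) := by ring
    rw [e1, e2, ← hvar] at hc
    exact mul_left_cancel₀ hv.ne' hc
  -- take logs
  have hlog : ∀ h : ℝ, h = h₁ ∨ h = h₂ →
      (α₁ - 1) * Real.log (1 - B₁ * h) = (α₂ - 1) * Real.log (1 - B₂ * h) := by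
    intro h hmem
    have hp : 0 < h := by rcases hmem with rfl | rfl <;> assumption
    have b1 : (0:ℝ) < 1 - B₁ * h := by nlinarith
    have b2 : (0:ℝ) < 1 - B₂ * h := by nlinarith
    have := congrArg Real.log (hpow h hmem)
    rw [Real.log_rpow b1, Real.log_rpow b2] at this
    nlinarith [this]
  have a1 : 0 < α₁ - 1 := by linarith
  have a2 : 0 < α₂ - 1 := by linarith
  have hl1 := hlog h₁ (Or.inl rfl)
  have hl2 := hlog h₂ (Or.inr rfl)
  -- cross equation
  have hcross : Real.log (1 - B₁ * h₁) * Real.log (1 - B₂ * h₂) =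
      Real.log (1 - B₂ * h₁) * Real.log (1 - B₁ * h₂) := by
    have h := mul_left_cancel₀ a1.ne' (show (α₁ - 1) * (Real.log (1 - B₁ * h₁) *
        Real.log (1 - B₂ * h₂)) = (α₁ - 1) * (Real.log (1 - B₂ * h₁) *
        Real.log (1 - B₁ * h₂)) by
      linear_combination Real.log (1 - B₂ * h₂) * hl1 - Real.log (1 - B₂ * h₁) * hl2)
    exact h
  -- apply key injectivity with u = -B₁, v = -B₂
  have hBeq : B₁ = B₂ := by
    have hu : 0 < -B₁ := by linarith
    have hv' : 0 < -B₂ := by linarith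
    have conv1 : ∀ h : ℝ, 1 - B₁ * h = 1 + (-B₁) * h := fun h => by ring
    have conv2 : ∀ h : ℝ, 1 - B₂ * h = 1 + (-B₂) * h := fun h => by ring
    rcases lt_or_gt_of_ne hne with h12 | h21
    · have := key_inj hh₁ h12 hu hv' (by
        rw [← conv1, ← conv1, ← conv2, ← conv2]; exact hcross)
      linarith
    · have := key_inj hh₂ h21 hu hv' (by
        rw [← conv1, ← conv1, ← conv2, ← conv2]; linarith [hcross])
      linarith
  subst hBeq
  have lpos : 0 < Real.log (1 - B₁ * h₁) := Real.log_pos (by nlinarith)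
  have hαeq : α₁ = α₂ := by
    have := mul_right_cancel₀ lpos.ne' hl1
    linarith
  subst hαeq
  have hDne : (2 * B₁ * (α₁ - 1)) ≠ 0 := hD₁.ne
  have hσeq : σsq₁ = σsq₂ := by
    field_simp at hvar
    rw [neg_inj, div_left_inj' hB₁.ne] at hvar; exact hvar
  have hDne' : (B₁ * (α₁ - 1)) ≠ 0 := by
    intro h; apply hDne; rw [mul_assoc]; rw [mul_comm B₁ (α₁-1)] at h
    rw [mul_comm B₁ (α₁-1), h, mul_zero]
  have hμeq : μ₁ = μ₂ := by
    field_simp at hmean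
    rw [neg_inj, div_left_inj' hB₁.ne] at hmean; exact hmean
  exact ⟨hμeq, hσeq, rfl, rfl⟩
end

section
/- Let B < 0, Δ > 0 and α > 1 with α ≠ 2 and α ≠ 3, and define F(x) = (1 − B Δ x)^{3−α} for x ≥ 0. Then lim_{h→∞} ( F(h+1) − 2F(h) + F(h−1) ) / ( F(2h+1) − 2F(2h) + F(2h−1) ) = (1/2)^{1−α} = 2^{α−1}. Consequently, for the integrated supOU process with Gamma-specified mean reversion distribution, lim_{h→∞} cov(V_{1+h}, V₁)/cov(V_{1+2h}, V₁) = 2^{α−1}, so α is asymptotically identified from the autocovariance function. -/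
open MeasureTheory Real Filter Set Topology

lemma psi_tendsto (β : ℝ) :
    Tendsto (fun u : ℝ => ((1+u)^β + (1-u)^β - 2) / u^2) (𝓝[>] (0:ℝ))
      (𝓝 (β*(β-1))) := by
  have hd1 : ∀ (p : ℝ) (u : ℝ), u ∈ Ioo (0:ℝ) 1 →
      HasDerivAt (fun x : ℝ => (1+x)^p) (p * (1+u)^(p-1)) u := by
    intro p u hu
    have := ((hasDerivAt_id u).const_add 1).rpow_const
      (p := p) (Or.inl (ne_of_gt (by simp only [id_eq]; nlinarith [hu.1])))
    simpa using this
  have hd2 : ∀ (p : ℝ) (u : ℝ), u ∈ Ioo (0:ℝ) 1 →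
      HasDerivAt (fun x : ℝ => (1-x)^p) (-(p * (1-u)^(p-1))) u := by
    intro p u hu
    have := ((hasDerivAt_id u).const_sub 1).rpow_const
      (p := p) (Or.inl (ne_of_gt (by simp only [id_eq]; nlinarith [hu.2])))
    simpa using this
  have hcont : ∀ p : ℝ, ContinuousAt (fun u : ℝ => (1+u)^p) 0 :=
    fun p => (continuousAt_const.add continuousAt_id).rpow_const (Or.inl (by norm_num))
  have hcont2 : ∀ p : ℝ, ContinuousAt (fun u : ℝ => (1-u)^p) 0 :=
    fun p => (continuousAt_const.sub continuousAt_id).rpow_const (Or.inl (by norm_num))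
  apply HasDerivAt.lhopital_zero_right_on_Ioo (f' := fun u => β * (1+u)^(β-1) - β * (1-u)^(β-1))
    (g' := fun u => 2*u) (one_pos)
  · intro u hu
    have h1 := hd1 β u hu
    have h2 := hd2 β u hu
    have := (h1.add h2).sub_const 2
    exact this.congr_deriv (by ring)
  · intro u hu
    simpa using (hasDerivAt_pow 2 u)
  · intro u hu
    exact mul_ne_zero two_ne_zero (ne_of_gt hu.1)
  · have hc : ContinuousAt (fun u : ℝ => (1+u)^β + (1-u)^β - 2) 0 :=
      ((hcont β).add (hcont2 β)).sub continuousAt_const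
    have t := tendsto_nhdsWithin_of_tendsto_nhds (s := Ioi 0) hc.tendsto
    have h0 : ((1:ℝ)+0)^β + (1-0)^β - 2 = 0 := by
      norm_num [Real.one_rpow]
    rwa [h0] at t
  · have : Tendsto (fun u : ℝ => u^2) (𝓝 0) (𝓝 (0^2)) :=
      (continuous_pow 2).continuousAt.tendsto
    simpa using tendsto_nhdsWithin_of_tendsto_nhds this
  · -- second L'Hopital
    apply HasDerivAt.lhopital_zero_right_on_Ioo
      (f' := fun u => β * ((β-1) * (1+u)^(β-1-1)) + β * ((β-1) * (1-u)^(β-1-1)))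
      (g' := fun _ => (2:ℝ)) (one_pos)
    · intro u hu
      have h1 := (hd1 (β-1) u hu).const_mul β
      have h2 := (hd2 (β-1) u hu).const_mul β
      have := h1.sub h2
      exact this.congr_deriv (by ring)
    · intro u hu
      simpa using (hasDerivAt_id u).const_mul 2
    · intro u hu; norm_num
    · have hc : ContinuousAt (fun u : ℝ => β * (1+u)^(β-1) - β * (1-u)^(β-1)) 0 :=
        ((continuousAt_const.mul (hcont (β-1))).sub
          (continuousAt_const.mul (hcont2 (β-1))))
      have t := tendsto_nhdsWithin_of_tendsto_nhds (s := Ioi 0) hc.tendsto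
      have h0 : β * ((1:ℝ)+0)^(β-1) - β * (1-0)^(β-1) = 0 := by
        norm_num [Real.one_rpow]
      rwa [h0] at t
    · have : Tendsto (fun u : ℝ => 2*u) (𝓝 0) (𝓝 (2*0)) :=
        (continuous_const.mul continuous_id).continuousAt.tendsto
      simpa using tendsto_nhdsWithin_of_tendsto_nhds this
    · have hc : ContinuousAt (fun u : ℝ =>
          (β * ((β-1) * (1+u)^(β-1-1)) + β * ((β-1) * (1-u)^(β-1-1))) / 2) 0 :=
        ((continuousAt_const.mul (continuousAt_const.mul (hcont (β-1-1)))).add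
          (continuousAt_const.mul (continuousAt_const.mul (hcont2 (β-1-1))))).div
          continuousAt_const (by norm_num)
      have t := tendsto_nhdsWithin_of_tendsto_nhds (s := Ioi 0) hc.tendsto
      have h0 : (β * ((β-1) * ((1:ℝ)+0)^(β-1-1)) + β * ((β-1) * (1-0)^(β-1-1))) / 2
          = β * (β-1) := by
        norm_num [Real.one_rpow]
        try ring
      rwa [h0] at t

lemma u_tendsto (c d : ℝ) (hc : 0 < c) (hd : 0 < d) :
    Tendsto (fun h : ℝ => c / (1 + d * h)) atTop (𝓝[>] (0:ℝ)) := by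
  rw [tendsto_nhdsWithin_iff]
  constructor
  · have hbase : Tendsto (fun h : ℝ => 1 + d * h) atTop atTop :=
      tendsto_atTop_add_const_left _ 1 (tendsto_id.const_mul_atTop hd)
    have := hbase.inv_tendsto_atTop
    have h2 : Tendsto (fun h : ℝ => c * (1 + d * h)⁻¹) atTop (𝓝 (c * 0)) :=
      tendsto_const_nhds.mul this
    simpa [div_eq_mul_inv] using h2
  · filter_upwards [eventually_ge_atTop (0:ℝ)] with h hh
    have : (0:ℝ) < 1 + d * h := by nlinarith
    exact div_pos hc this

/-- The α-identification step of Proposition 3.6: with `F(x) = (1 - BΔx)^{3-α}`,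
`(F(h+1) - 2F(h) + F(h-1)) / (F(2h+1) - 2F(2h) + F(2h-1)) → (1/2)^{1-α} = 2^{α-1}`,
and consequently `cov(V_{1+h}, V₁)/cov(V_{1+2h}, V₁) → 2^{α-1}` for the integrated
supOU process with Gamma-specified mean reversion distribution. -/
theorem integrated_supOU_alpha_identification
    (B Δ α : ℝ) (hB : B < 0) (hΔ : 0 < Δ) (hα : 1 < α) (hα2 : α ≠ 2) (hα3 : α ≠ 3)
    (F : ℝ → ℝ) (hF : ∀ x ≥ (0:ℝ), F x = (1 - B * Δ * x) ^ (3 - α)) :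
    ((1 / 2 : ℝ) ^ (1 - α) = (2 : ℝ) ^ (α - 1)) ∧
    Filter.Tendsto
        (fun h : ℝ =>
          (F (h + 1) - 2 * F h + F (h - 1)) /
            (F (2 * h + 1) - 2 * F (2 * h) + F (2 * h - 1)))
        Filter.atTop (nhds ((2 : ℝ) ^ (α - 1))) ∧
      ∀ σsq > (0:ℝ),
        Filter.Tendsto
          (fun h : ℝ =>
            (-σsq * (F (h + 1) - 2 * F h + F (h - 1)) /
                (2 * B ^ 3 * (α - 1) * (α - 2) * (α - 3))) /
              (-σsq * (F (2 * h + 1) - 2 * F (2 * h) + F (2 * h - 1)) /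
                (2 * B ^ 3 * (α - 1) * (α - 2) * (α - 3))))
          Filter.atTop (nhds ((2 : ℝ) ^ (α - 1))) := by
  set c : ℝ := -(B * Δ) with hcdef
  have hc : 0 < c := by simp only [hcdef]; nlinarith
  set β : ℝ := 3 - α with hβdef
  set ψ : ℝ → ℝ := fun u => ((1+u)^β + (1-u)^β - 2) / u^2 with hψdef
  set L : ℝ := β * (β - 1) with hLdef
  have hLne : L ≠ 0 := by
    have h1 : β ≠ 0 := by simp only [hβdef]; intro h; apply hα3; linarith
    have h2 : β - 1 ≠ 0 := by simp only [hβdef]; intro h; apply hα2; linarith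
    exact mul_ne_zero h1 h2
  -- first conjunct
  have hpow : ((1 / 2 : ℝ) ^ (1 - α) = (2 : ℝ) ^ (α - 1)) := by
    rw [one_div, Real.inv_rpow (by norm_num : (0:ℝ) ≤ 2),
      ← Real.rpow_neg (by norm_num : (0:ℝ) ≤ 2), neg_sub]
  -- key factorization
  have key : ∀ h : ℝ, 1 ≤ h →
      F (h + 1) - 2 * F h + F (h - 1)
        = c^2 * (1 + c * h)^(1 - α) * ψ (c / (1 + c * h)) := by
    intro h hh
    set s : ℝ := 1 + c * h with hsdef
    have hs : 0 < s := by simp only [hsdef]; nlinarith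
    set u : ℝ := c / s with hudef
    have hu : 0 < u := div_pos hc hs
    have hsc : 0 < s - c := by simp only [hsdef]; nlinarith
    have hBΔ : B * Δ < 0 := mul_neg_of_neg_of_pos hB hΔ
    have hs' : (1:ℝ) - B * Δ * h ≠ 0 := by nlinarith
    have hsu : s * u = c := by
      rw [hudef, ← mul_div_assoc, mul_div_cancel_left₀ _ hs.ne']
    have e1 : 1 - B * Δ * (h + 1) = s * (1 + u) := by
      rw [mul_add s, mul_one, hsu]
      simp only [hsdef, hcdef]; ring
    have e0 : 1 - B * Δ * h = s := by simp only [hsdef, hcdef]; ring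
    have e2 : 1 - B * Δ * (h - 1) = s * (1 - u) := by
      rw [mul_sub s, mul_one, hsu]
      simp only [hsdef, hcdef]; ring
    have h1u : (0:ℝ) ≤ 1 + u := by linarith
    have h2u : (0:ℝ) ≤ 1 - u := by
      have : u < 1 := by
        rw [hudef, div_lt_one hs]; linarith
      linarith
    rw [hF (h+1) (by linarith), hF h (by linarith), hF (h-1) (by linarith),
      e1, e0, e2, Real.mul_rpow hs.le h1u, Real.mul_rpow hs.le h2u]
    have hfac : c^2 * s^(1-α) / u^2 = s^β := by
      have hu2 : u^2 = c^2 / s^2 := by rw [hudef, div_pow]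
      have h3 : s^(1-α) * (s^(2:ℕ) : ℝ) = s^β := by
        rw [← Real.rpow_natCast s 2, ← Real.rpow_add hs, hβdef]
        norm_num
        congr 1
        ring
      rw [hu2, ← h3]
      field_simp
    have expand : c^2 * s^(1-α) * ψ u
        = (c^2 * s^(1-α) / u^2) * ((1+u)^β + (1-u)^β - 2) := by
      simp only [hψdef]
      ring
    rw [expand, hfac]
    ring
  -- the main limit for the normalized expression
  have hhalf : Tendsto (fun h : ℝ => (1 + c * h) / (1 + c * (2 * h))) atTop (𝓝 (1/2)) := by
    have hnum : Tendsto (fun h : ℝ => h⁻¹ + c) atTop (𝓝 (0 + c)) :=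
      tendsto_inv_atTop_zero.add tendsto_const_nhds
    have hden : Tendsto (fun h : ℝ => h⁻¹ + 2*c) atTop (𝓝 (0 + 2*c)) :=
      tendsto_inv_atTop_zero.add tendsto_const_nhds
    have hdne : (0:ℝ) + 2*c ≠ 0 := by positivity
    have hdiv := hnum.div hden hdne
    have hval : (0 + c) / (0 + 2*c) = (1/2 : ℝ) := by
      field_simp
      ring
    rw [hval] at hdiv
    apply hdiv.congr'
    filter_upwards [eventually_gt_atTop (0:ℝ)] with h hh
    have hh' : h ≠ 0 := ne_of_gt hh
    have e1 : h * (h⁻¹ + c) = 1 + c * h := by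
      rw [mul_add, mul_inv_cancel₀ hh']; ring
    have e2 : h * (h⁻¹ + 2*c) = 1 + c * (2 * h) := by
      rw [mul_add, mul_inv_cancel₀ hh']; ring
    simp only [Pi.div_apply]
    rw [← mul_div_mul_left (h⁻¹ + c) (h⁻¹ + 2*c) hh', e1, e2]
  have hrpowcont : ContinuousAt (fun x : ℝ => x ^ (1 - α)) (1/2) :=
    Real.continuousAt_rpow_const _ _ (Or.inl (by norm_num))
  have t2 : Tendsto (fun h : ℝ => ((1 + c * h) / (1 + c * (2 * h))) ^ (1 - α))
      atTop (𝓝 ((1/2 : ℝ) ^ (1 - α))) := hrpowcont.tendsto.comp hhalf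
  have t3 : Tendsto (fun h : ℝ => ψ (c / (1 + c * h))) atTop (𝓝 L) :=
    (psi_tendsto β).comp (u_tendsto c c hc hc)
  have t4 : Tendsto (fun h : ℝ => ψ (c / (1 + c * (2 * h)))) atTop (𝓝 L) := by
    have := (psi_tendsto β).comp (u_tendsto c (2*c) hc (by positivity))
    apply this.congr
    intro h
    simp only [Function.comp, hψdef]
    ring_nf
  have tmain : Tendsto
      (fun h : ℝ =>
        (F (h + 1) - 2 * F h + F (h - 1)) /
          (F (2 * h + 1) - 2 * F (2 * h) + F (2 * h - 1)))
      atTop (𝓝 ((2 : ℝ) ^ (α - 1))) := by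
    have tprod := t2.mul (t3.div t4 hLne)
    rw [div_self hLne, mul_one, hpow] at tprod
    apply tprod.congr'
    filter_upwards [eventually_ge_atTop (1:ℝ)] with h hh
    have h2h : (1:ℝ) ≤ 2 * h := by linarith
    have k1 := key h hh
    have k2 := key (2*h) h2h
    rw [k1, k2]
    have hs1 : (0:ℝ) < 1 + c * h := by nlinarith
    have hs2 : (0:ℝ) < 1 + c * (2*h) := by nlinarith
    rw [Real.div_rpow hs1.le hs2.le]
    simp only [Pi.div_apply]
    rw [div_mul_div_comm]
    rw [mul_assoc (c^2), mul_assoc (c^2)]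
    rw [mul_div_mul_left _ _ (pow_ne_zero 2 hc.ne')]
  refine ⟨hpow, tmain, ?_⟩
  intro σsq hσ
  have hK : (2 * B ^ 3 * (α - 1) * (α - 2) * (α - 3)) ≠ 0 := by
    have h1 : α - 1 ≠ 0 := by intro h; linarith
    have h2 : α - 2 ≠ 0 := sub_ne_zero.mpr hα2
    have h3 : α - 3 ≠ 0 := sub_ne_zero.mpr hα3
    have hB3 : B ^ 3 ≠ 0 := pow_ne_zero _ hB.ne
    exact mul_ne_zero (mul_ne_zero (mul_ne_zero (mul_ne_zero two_ne_zero hB3) h1) h2) h3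
  have heq : ∀ X Y : ℝ,
      (-σsq * X / (2 * B ^ 3 * (α - 1) * (α - 2) * (α - 3))) /
        (-σsq * Y / (2 * B ^ 3 * (α - 1) * (α - 2) * (α - 3))) = X / Y := by
    intro X Y
    rw [div_div_div_comm, div_self hK, div_one,
      mul_div_mul_left _ _ (neg_ne_zero.mpr (ne_of_gt hσ))]
  refine tmain.congr fun h => ?_
  rw [heq]
end

section
/- Let Δ > 0 and α > 1 with α ≠ 2 and α ≠ 3. Then for every B < 0 the denominator (1 − BΔ)^{3−α} − 1 − ΔB(α−3) is nonzero, and the map B ↦ (−B)^{3−α} / ( (1 − BΔ)^{3−α} − 1 − ΔB(α−3) ) is injective on (−∞, 0). (This is the claim in the proof of Proposition 3.6 that the asymptotic autocorrelation ρ̃_{B,α}(h) = Δ^{3−α}(α−2)(α−3)h^{1−α}(−B)^{3−α} / (2((1−BΔ)^{3−α} − 1 − ΔB(α−3))) determines B uniquely once α is known.) -/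
open MeasureTheory Real Filter Set

/-- Bernoulli strict inequality for negative exponents. -/
lemma supOU_bernoulli_neg {p s : ℝ} (hp : p < 0) (hs : 0 < s) :
    1 + p * s < (1 + s) ^ p := by
  have hmono : StrictMonoOn (fun x : ℝ => (1 + x) ^ p - p * x) (Ici 0) := by
    have hder : ∀ x : ℝ, 0 ≤ x →
        HasDerivAt (fun x : ℝ => (1 + x) ^ p - p * x)
          (1 * p * (1 + x) ^ (p - 1) - p * 1) x := by
      intro x hx
      exact (((hasDerivAt_id x).const_add 1).rpow_const
        (Or.inl (by positivity))).sub ((hasDerivAt_id x).const_mul p)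
    apply strictMonoOn_of_deriv_pos (convex_Ici 0)
    · intro x hx
      exact ((hder x hx).differentiableAt).continuousAt.continuousWithinAt
    · intro x hx
      rw [interior_Ici, mem_Ioi] at hx
      rw [(hder x (le_of_lt hx)).deriv]
      have h1 : (1 + x) ^ (p - 1) < 1 :=
        rpow_lt_one_of_one_lt_of_neg (by linarith) (by linarith)
      nlinarith
  have h0 : (0:ℝ) ∈ Ici (0:ℝ) := self_mem_Ici
  have := hmono h0 (mem_Ici.mpr hs.le) hs
  simp only [add_zero, Real.one_rpow, mul_zero, sub_zero] at this
  linarith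

/-- Sign of `(1+s)^p - 1 - p*s` when `p < 0` or `1 < p`. -/
lemma supOU_g_pos {p s : ℝ} (hp : p < 0 ∨ 1 < p) (hs : 0 < s) :
    0 < (1 + s) ^ p - 1 - p * s := by
  rcases hp with hp | hp
  · have := supOU_bernoulli_neg hp hs; linarith
  · have := one_add_mul_self_lt_rpow_one_add (by linarith : (-1:ℝ) ≤ s) hs.ne' hp
    linarith

/-- Sign of `(1+s)^p - 1 - p*s` when `0 < p < 1`. -/
lemma supOU_g_neg {p s : ℝ} (hp0 : 0 < p) (hp1 : p < 1) (hs : 0 < s) :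
    (1 + s) ^ p - 1 - p * s < 0 := by
  have := rpow_one_add_lt_one_add_mul_self (by linarith : (-1:ℝ) ≤ s) hs.ne' hp0 hp1
  linarith

lemma supOU_hasDerivAt (Δ α B : ℝ) (hΔ : 0 < Δ) (hB : B < 0)
    (hD0 : (1 - B * Δ) ^ (3 - α) - 1 - Δ * B * (α - 3) ≠ 0) :
    HasDerivAt
      (fun B : ℝ => (-B) ^ (3 - α) / ((1 - B * Δ) ^ (3 - α) - 1 - Δ * B * (α - 3)))
      ((α - 3) * (-B) ^ (2 - α) * ((1 - B * Δ) ^ (2 - α) - 1 + (2 - α) * (Δ * B)) /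
        ((1 - B * Δ) ^ (3 - α) - 1 - Δ * B * (α - 3)) ^ 2) B := by
  have hBpos : 0 < -B := by linarith
  have h1B : 0 < 1 - B * Δ := by nlinarith
  have hN : HasDerivAt (fun B : ℝ => (-B) ^ (3 - α))
      ((-1) * (3 - α) * (-B) ^ (3 - α - 1)) B :=
    ((hasDerivAt_id B).neg).rpow_const (Or.inl hBpos.ne')
  have hInner : HasDerivAt (fun B : ℝ => 1 - B * Δ) (-(1 * Δ)) B :=
    ((hasDerivAt_id B).mul_const Δ).const_sub 1
  have hD1 : HasDerivAt (fun B : ℝ => (1 - B * Δ) ^ (3 - α))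
      ((-(1 * Δ)) * (3 - α) * (1 - B * Δ) ^ (3 - α - 1)) B :=
    hInner.rpow_const (Or.inl h1B.ne')
  have hLin : HasDerivAt (fun B : ℝ => Δ * B * (α - 3)) (Δ * 1 * (α - 3)) B :=
    ((hasDerivAt_id B).const_mul Δ).mul_const (α - 3)
  have hDen : HasDerivAt
      (fun B : ℝ => (1 - B * Δ) ^ (3 - α) - 1 - Δ * B * (α - 3))
      ((-(1 * Δ)) * (3 - α) * (1 - B * Δ) ^ (3 - α - 1) - Δ * 1 * (α - 3)) B :=
    (hD1.sub_const 1).sub hLin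
  have hdiv := hN.div hDen hD0
  refine hdiv.congr_deriv ?_
  have e1 : (3:ℝ) - α - 1 = 2 - α := by ring
  have h1 : (-B) ^ (3 - α) = (-B) ^ (2 - α) * (-B) := by
    rw [show (3:ℝ) - α = (2 - α) + 1 by ring, Real.rpow_add_one hBpos.ne']
  have h2 : (1 - B * Δ) ^ (3 - α) = (1 - B * Δ) ^ (2 - α) * (1 - B * Δ) := by
    rw [show (3:ℝ) - α = (2 - α) + 1 by ring, Real.rpow_add_one h1B.ne']
  rw [e1, h1, h2]
  ring

/-- The B-identification step of Proposition 3.6: for `Δ > 0`, `α > 1`, `α ≠ 2, 3`,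
the denominator `(1 - BΔ)^{3-α} - 1 - ΔB(α-3)` is nonzero for every `B < 0`, and
`B ↦ (-B)^{3-α} / ((1 - BΔ)^{3-α} - 1 - ΔB(α-3))` is injective on `(-∞,0)`. -/
theorem integrated_supOU_B_identification
    (Δ α : ℝ) (hΔ : 0 < Δ) (hα : 1 < α) (hα2 : α ≠ 2) (hα3 : α ≠ 3) :
    (∀ B < (0:ℝ), (1 - B * Δ) ^ (3 - α) - 1 - Δ * B * (α - 3) ≠ 0) ∧
      Set.InjOn
        (fun B : ℝ => (-B) ^ (3 - α) / ((1 - B * Δ) ^ (3 - α) - 1 - Δ * B * (α - 3)))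
        (Set.Iio 0) := by
  have hDform : ∀ B : ℝ, (1 - B * Δ) ^ (3 - α) - 1 - Δ * B * (α - 3)
      = (1 + (-(B * Δ))) ^ (3 - α) - 1 - (3 - α) * (-(B * Δ)) := by
    intro B
    rw [show 1 - B * Δ = 1 + (-(B * Δ)) by ring]
    ring
  have hden : ∀ B < (0:ℝ), (1 - B * Δ) ^ (3 - α) - 1 - Δ * B * (α - 3) ≠ 0 := by
    intro B hB
    have hs : 0 < -(B * Δ) := by nlinarith
    rw [hDform B]
    rcases lt_trichotomy α 2 with h2 | h2 | h2
    · exact (supOU_g_pos (Or.inr (by linarith)) hs).ne'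
    · exact absurd h2 hα2
    rcases lt_trichotomy α 3 with h3 | h3 | h3
    · exact (supOU_g_neg (by linarith) (by linarith) hs).ne
    · exact absurd h3 hα3
    · exact (supOU_g_pos (Or.inl (by linarith)) hs).ne'
  refine ⟨hden, ?_⟩
  set f : ℝ → ℝ :=
    fun B : ℝ => (-B) ^ (3 - α) / ((1 - B * Δ) ^ (3 - α) - 1 - Δ * B * (α - 3)) with hf
  have hderiv : ∀ B ∈ Iio (0:ℝ), HasDerivAt f
      ((α - 3) * (-B) ^ (2 - α) * ((1 - B * Δ) ^ (2 - α) - 1 + (2 - α) * (Δ * B)) /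
        ((1 - B * Δ) ^ (3 - α) - 1 - Δ * B * (α - 3)) ^ 2) B :=
    fun B hB => supOU_hasDerivAt Δ α B hΔ hB (hden B hB)
  have hcont : ContinuousOn f (Iio 0) :=
    fun B hB => ((hderiv B hB).differentiableAt).continuousAt.continuousWithinAt
  have hK : ∀ B < (0:ℝ), (1 - B * Δ) ^ (2 - α) - 1 + (2 - α) * (Δ * B)
      = (1 + (-(B * Δ))) ^ (2 - α) - 1 - (2 - α) * (-(B * Δ)) := by
    intro B hB
    rw [show 1 - B * Δ = 1 + (-(B * Δ)) by ring]
    ring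
  have hbase : ∀ B < (0:ℝ), (0:ℝ) < (-B) ^ (2 - α) := by
    intro B hB
    exact rpow_pos_of_pos (by linarith) _
  have hsq : ∀ B < (0:ℝ),
      (0:ℝ) < ((1 - B * Δ) ^ (3 - α) - 1 - Δ * B * (α - 3)) ^ 2 := by
    intro B hB
    exact pow_two_pos_of_ne_zero (hden B hB)
  rcases lt_trichotomy α 2 with h2 | h2 | h2
  · -- 1 < α < 2 : strictly increasing
    apply StrictMonoOn.injOn
    apply strictMonoOn_of_deriv_pos (convex_Iio 0) hcont
    intro B hB
    rw [interior_Iio] at hB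
    rw [(hderiv B hB).deriv]
    apply div_pos _ (hsq B hB)
    have hs : 0 < -(B * Δ) := by nlinarith [mem_Iio.mp hB]
    have hk : (1 - B * Δ) ^ (2 - α) - 1 + (2 - α) * (Δ * B) < 0 := by
      rw [hK B hB]
      exact supOU_g_neg (by linarith) (by linarith) hs
    nlinarith [mul_pos_of_neg_of_neg (show α - 3 < 0 by linarith) hk, hbase B hB]
  · exact absurd h2 hα2
  · rcases lt_trichotomy α 3 with h3 | h3 | h3
    · -- 2 < α < 3 : strictly decreasing
      apply StrictAntiOn.injOn
      apply strictAntiOn_of_deriv_neg (convex_Iio 0) hcont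
      intro B hB
      rw [interior_Iio] at hB
      rw [(hderiv B hB).deriv]
      apply div_neg_of_neg_of_pos _ (hsq B hB)
      have hs : 0 < -(B * Δ) := by nlinarith [mem_Iio.mp hB]
      have hk : 0 < (1 - B * Δ) ^ (2 - α) - 1 + (2 - α) * (Δ * B) := by
        rw [hK B hB]
        exact supOU_g_pos (Or.inl (by linarith)) hs
      nlinarith [mul_neg_of_neg_of_pos (show α - 3 < 0 by linarith) hk, hbase B hB]
    · exact absurd h3 hα3
    · -- α > 3 : strictly increasing
      apply StrictMonoOn.injOn
      apply strictMonoOn_of_deriv_pos (convex_Iio 0) hcont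
      intro B hB
      rw [interior_Iio] at hB
      rw [(hderiv B hB).deriv]
      apply div_pos _ (hsq B hB)
      have hs : 0 < -(B * Δ) := by nlinarith [mem_Iio.mp hB]
      have hk : 0 < (1 - B * Δ) ^ (2 - α) - 1 + (2 - α) * (Δ * B) := by
        rw [hK B hB]
        exact supOU_g_pos (Or.inl (by linarith)) hs
      nlinarith [mul_pos (show (0:ℝ) < α - 3 by linarith) hk, hbase B hB]
end
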